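/- arXiv:1607.01661 — 8 statements merged into one kernel-verified Lean document; each statement's English description precedes it below -/
import Mathlib

section
/- Under the stated assumptions, the matrix L̄ is a generator (stable conservative Q-matrix) on S̄: (i) L̄(x̄,ȳ) ≥ 0 for all x̄ ≠ ȳ in S̄; (ii) for every x̄ = (x,x*) ∈ S̄ the family (L̄(x̄,ȳ))_{ȳ∈S̄, ȳ≠x̄} is summable with sum equal to −L̄(x̄,x̄) = L_x + L*_{x*} + Γ(x*,x)/Λ(x*,x), which is finite and nonnegative. -/
open scoped BigOperators

attribute [local instance] Classical.propDecidable

/-- A stable, conservative Q-matrix (generator) on a countable set `E`. -/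
structure IsGenerator (E : Type*) (M : E → E → ℝ) : Prop where
  nonneg : ∀ x y : E, x ≠ y → 0 ≤ M x y
  summable : ∀ x : E, Summable fun y : {y : E // y ≠ x} => M x (y : E)
  sum_eq : ∀ x : E, ∑' y : {y : E // y ≠ x}, M x (y : E) = -(M x x)

/-- The coupling generator `L̄` on (a superset of) `S̄ = {(x,x*) : Λ(x*,x) > 0}`. -/
noncomputable def Lbar {S Ss : Type*} (L : S → S → ℝ) (Ls : Ss → Ss → ℝ)
    (Λ : Ss → S → ℝ) (Γ : Ss → S → ℝ) (xb yb : S × Ss) : ℝ :=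
  if xb = yb then
    -(-(L xb.1 xb.1) + -(Ls xb.2 xb.2) + Γ xb.2 xb.1 / Λ xb.2 xb.1)
  else if yb.1 ≠ xb.1 ∧ yb.2 = xb.2 then L xb.1 yb.1
  else if yb.1 = xb.1 ∧ yb.2 ≠ xb.2 then Ls xb.2 yb.2 * Λ yb.2 xb.1 / Λ xb.2 xb.1
  else if Λ xb.2 yb.1 = 0 ∧ 0 < Γ xb.2 yb.1 then
    L xb.1 yb.1 * Ls xb.2 yb.2 * Λ yb.2 yb.1 / Γ xb.2 yb.1
  else 0

set_option maxHeartbeats 4000000 in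
/-- Under the stated assumptions, `L̄` is a generator (stable conservative Q-matrix) on `S̄`:
(i) off-diagonal entries are nonnegative; (ii) for every `x̄ = (x,x*) ∈ S̄` the off-diagonal
row is summable with sum `−L̄(x̄,x̄) = L_x + L*_{x*} + Γ(x*,x)/Λ(x*,x)`, which is finite and
nonnegative. -/
theorem lbar_is_generator {S Ss : Type*} [Countable S] [Countable Ss]
    (L : S → S → ℝ) (Ls : Ss → Ss → ℝ) (Λ Γ : Ss → S → ℝ)
    (hL : IsGenerator S L) (hLs : IsGenerator Ss Ls)
    (hΛnn : ∀ xs x, 0 ≤ Λ xs x) (hΛsum : ∀ xs, Summable (Λ xs))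
    (hΛone : ∀ xs, ∑' x, Λ xs x = 1)
    (hdiag : ∀ xs, Summable fun x => Λ xs x * (-(L x x)))
    (hdual1 : ∀ xs y, Summable fun ys => Ls xs ys * Λ ys y)
    (hdual2 : ∀ xs y, Summable fun x => Λ xs x * L x y)
    (hΓ1 : ∀ xs y, ∑' ys, Ls xs ys * Λ ys y = Γ xs y)
    (hΓ2 : ∀ xs y, ∑' x, Λ xs x * L x y = Γ xs y)
    (xb : S × Ss) (hxb : 0 < Λ xb.2 xb.1) :
    (∀ yb : S × Ss, 0 < Λ yb.2 yb.1 → yb ≠ xb → 0 ≤ Lbar L Ls Λ Γ xb yb) ∧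
    Summable (fun yb : {yb : S × Ss // 0 < Λ yb.2 yb.1 ∧ yb ≠ xb} =>
      Lbar L Ls Λ Γ xb (yb : S × Ss)) ∧
    (∑' yb : {yb : S × Ss // 0 < Λ yb.2 yb.1 ∧ yb ≠ xb}, Lbar L Ls Λ Γ xb (yb : S × Ss))
      = -(Lbar L Ls Λ Γ xb xb) ∧
    -(Lbar L Ls Λ Γ xb xb)
      = -(L xb.1 xb.1) + -(Ls xb.2 xb.2) + Γ xb.2 xb.1 / Λ xb.2 xb.1 ∧
    0 ≤ -(Lbar L Ls Λ Γ xb xb) := by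
  classical
  obtain ⟨x, xs⟩ := xb
  have hc : 0 < Λ xs x := hxb
  have hcne : Λ xs x ≠ 0 := hc.ne'
  -- `Γ xs y` dominates `Λ xs x * L x y` when `Λ xs y = 0`
  have hΓge : ∀ y : S, Λ xs y = 0 → Λ xs x * L x y ≤ Γ xs y := by
    intro y hz
    rw [← hΓ2 xs y]
    refine Summable.le_tsum (hdual2 xs y) x ?_
    intro j hj
    rcases eq_or_ne j y with rfl | hjy
    · simp [hz]
    · exact mul_nonneg (hΛnn _ _) (hL.nonneg _ _ hjy)
  -- part (i): off-diagonal nonnegativity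
  have hnn : ∀ yb : S × Ss, 0 < Λ yb.2 yb.1 → yb ≠ (x, xs) →
      0 ≤ Lbar L Ls Λ Γ (x, xs) yb := by
    rintro ⟨y, ys⟩ hy hne
    unfold Lbar
    dsimp only
    rw [if_neg (fun h => hne h.symm)]
    split_ifs with h2 h3 h4
    · exact hL.nonneg x y (Ne.symm h2.1)
    · exact div_nonneg (mul_nonneg (hLs.nonneg xs ys (Ne.symm h3.2)) (hΛnn _ _)) hc.le
    · have hyx : y ≠ x := fun h => hcne (h ▸ h4.1)
      have hys : ys ≠ xs := fun h => hy.ne' (h ▸ h4.1)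
      exact div_nonneg (mul_nonneg (mul_nonneg (hL.nonneg x y hyx.symm)
        (hLs.nonneg xs ys hys.symm)) (hΛnn _ _)) h4.2.le
    · exact le_refl 0
  -- the three pieces of the off-diagonal row
  set f1 : S × Ss → ℝ :=
    fun p => if p.2 = xs ∧ p.1 ≠ x ∧ 0 < Λ xs p.1 then L x p.1 else 0 with hf1
  set f2 : S × Ss → ℝ :=
    fun p => if p.1 = x ∧ p.2 ≠ xs then Ls xs p.2 * Λ p.2 x / Λ xs x else 0 with hf2
  set f3 : S × Ss → ℝ :=
    fun p => if p.1 ≠ x ∧ p.2 ≠ xs ∧ Λ xs p.1 = 0 ∧ 0 < Γ xs p.1 then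
      L x p.1 * Ls xs p.2 * Λ p.2 p.1 / Γ xs p.1 else 0 with hf3
  set f0 : S × Ss → ℝ :=
    fun p => if 0 < Λ p.2 p.1 ∧ p ≠ (x, xs) then Lbar L Ls Λ Γ (x, xs) p else 0 with hf0
  -- pointwise decomposition
  have hsplit : ∀ p : S × Ss, f0 p = f1 p + f2 p + f3 p := by
    rintro ⟨y, ys⟩
    rw [hf0, hf1, hf2, hf3]
    dsimp only
    by_cases hmem : 0 < Λ ys y ∧ (y, ys) ≠ (x, xs)
    · rw [if_pos hmem]
      unfold Lbar
      dsimp only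
      rw [if_neg (fun h => hmem.2 h.symm)]
      by_cases hysxs : ys = xs
      · subst hysxs
        have hyx : y ≠ x := by
          intro h; exact hmem.2 (by rw [h])
        simp [hyx, hmem.1]
      · by_cases hyx : y = x
        · simp [hyx, hysxs]
        · by_cases hz : Λ xs y = 0
          · by_cases hΓy : 0 < Γ xs y
            · simp [hyx, hysxs, hz, hΓy]
            · simp [hyx, hysxs, hz, hΓy]
          · simp [hyx, hysxs, hz]
    · rw [if_neg hmem]
      rcases not_and_or.mp hmem with hy | hne
      · have hy0 : Λ ys y = 0 := le_antisymm (not_lt.mp hy) (hΛnn ys y)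
        have e1 : (if ys = xs ∧ y ≠ x ∧ 0 < Λ xs y then L x y else 0) = 0 := by
          split_ifs with h
          · exact absurd (h.1 ▸ hy0 : Λ xs y = 0) h.2.2.ne'
          · rfl
        have e2 : (if y = x ∧ ys ≠ xs then Ls xs ys * Λ ys x / Λ xs x else 0) = 0 := by
          split_ifs with h
          · rw [← h.1, hy0, mul_zero, zero_div]
          · rfl
        have e3 : (if y ≠ x ∧ ys ≠ xs ∧ Λ xs y = 0 ∧ 0 < Γ xs y then
            L x y * Ls xs ys * Λ ys y / Γ xs y else 0) = 0 := by
          split_ifs with h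
          · rw [hy0, mul_zero, zero_div]
          · rfl
        rw [e1, e2, e3]; ring
      · have hxx : (y, ys) = (x, xs) := not_not.mp hne
        have hy : y = x := congrArg Prod.fst hxx
        have hys : ys = xs := congrArg Prod.snd hxx
        subst hy; subst hys
        simp
  -- auxiliary summable families on the factors
  have hLx : Summable (fun y => if y ≠ x then L x y else 0) := by
    have h := (summable_subtype_iff_indicator
      (s := {y : S | y ≠ x}) (f := fun y => L x y)).mp (hL.summable x)
    refine h.congr fun y => ?_
    by_cases hy : y = x <;> simp [Set.indicator_apply, hy]
  have hLxnn : ∀ y, 0 ≤ (if y ≠ x then L x y else 0) := by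
    intro y; split_ifs with h
    · exact hL.nonneg x y (Ne.symm h)
    · exact le_refl 0
  have hu : Summable (fun ys => if ys ≠ xs then Ls xs ys else 0) := by
    have h := (summable_subtype_iff_indicator
      (s := {ys : Ss | ys ≠ xs}) (f := fun ys => Ls xs ys)).mp (hLs.summable xs)
    refine h.congr fun ys => ?_
    by_cases hy : ys = xs <;> simp [Set.indicator_apply, hy]
  have hunn : ∀ ys, 0 ≤ (if ys ≠ xs then Ls xs ys else 0) := by
    intro ys; split_ifs with h
    · exact hLs.nonneg xs ys (Ne.symm h)
    · exact le_refl 0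
  have hΛle1 : ∀ ys y, Λ ys y ≤ 1 := by
    intro ys y
    rw [← hΛone ys]
    exact Summable.le_tsum (hΛsum ys) y fun j _ => hΛnn ys j
  -- f1 : summability and sum
  have hg1inj : Function.Injective (fun y : S => ((y, xs) : S × Ss)) := by
    intro a b h; exact congrArg Prod.fst h
  have hg1supp : Function.support f1 ⊆ Set.range (fun y : S => ((y, xs) : S × Ss)) := by
    rintro ⟨y, ys⟩ hp
    have : ys = xs := by
      by_contra h
      exact hp (by rw [hf1]; exact if_neg (fun hh => h hh.1))
    exact ⟨y, by rw [this]⟩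
  have hc1 : ∀ y : S, f1 (y, xs) = (if y ≠ x ∧ 0 < Λ xs y then L x y else 0) := by
    intro y; rw [hf1]; dsimp only
    by_cases h : y ≠ x ∧ 0 < Λ xs y
    · rw [if_pos ⟨rfl, h.1, h.2⟩, if_pos h]
    · rw [if_neg (fun hh => h ⟨hh.2.1, hh.2.2⟩), if_neg h]
  have hS1' : Summable (fun y : S => f1 (y, xs)) := by
    refine Summable.of_nonneg_of_le (fun y => ?_) (fun y => ?_) hLx
    · rw [hc1]; split_ifs with h
      · exact hL.nonneg x y (Ne.symm h.1)
      · exact le_refl 0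
    · rw [hc1]; split_ifs with h h' h''
      · exact le_refl _
      · exact absurd h.1 h'
      · exact hL.nonneg x y (Ne.symm h'')
      · exact le_refl 0
  have hS1 : Summable f1 := (hg1inj.summable_iff
    (fun p hp => Function.notMem_support.mp (fun hs => hp (hg1supp hs)))).mp hS1'
  have hT1 : ∑' p, f1 p = ∑' y, (if y ≠ x ∧ 0 < Λ xs y then L x y else 0) := by
    rw [← hg1inj.tsum_eq hg1supp]
    exact tsum_congr hc1
  -- f2 : summability and sum
  have hg2inj : Function.Injective (fun ys : Ss => ((x, ys) : S × Ss)) := by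
    intro a b h; exact congrArg Prod.snd h
  have hg2supp : Function.support f2 ⊆ Set.range (fun ys : Ss => ((x, ys) : S × Ss)) := by
    rintro ⟨y, ys⟩ hp
    have : y = x := by
      by_contra h
      exact hp (by rw [hf2]; exact if_neg (fun hh => h hh.1))
    exact ⟨ys, by rw [this]⟩
  have hc2 : ∀ ys : Ss, f2 (x, ys) =
      (if ys ≠ xs then Ls xs ys else 0) * Λ ys x / Λ xs x := by
    intro ys; rw [hf2]; dsimp only
    by_cases h : ys ≠ xs
    · rw [if_pos ⟨rfl, h⟩, if_pos h]
    · rw [if_neg (fun hh => h hh.2), if_neg h, zero_mul, zero_div]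
  have hS2' : Summable (fun ys : Ss => f2 (x, ys)) := by
    refine Summable.of_nonneg_of_le (fun ys => ?_) (fun ys => ?_) (hu.div_const (Λ xs x))
    · rw [hc2]
      exact div_nonneg (mul_nonneg (hunn ys) (hΛnn ys x)) hc.le
    · rw [hc2]
      have h1 : (if ys ≠ xs then Ls xs ys else 0) * Λ ys x
          ≤ (if ys ≠ xs then Ls xs ys else 0) := by
        nlinarith [hunn ys, hΛle1 ys x, hΛnn ys x]
      exact (div_le_div_iff_of_pos_right hc).mpr h1
  have hS2 : Summable f2 := (hg2inj.summable_iff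
    (fun p hp => Function.notMem_support.mp (fun hs => hp (hg2supp hs)))).mp hS2'
  have hT2 : ∑' p, f2 p = Γ xs x / Λ xs x - Ls xs xs := by
    rw [← hg2inj.tsum_eq hg2supp]
    have e : ∑' ys, f2 (x, ys)
        = (∑' ys, (if ys ≠ xs then Ls xs ys else 0) * Λ ys x) / Λ xs x := by
      rw [← tsum_div_const]
      exact tsum_congr hc2
    have e2 : ∑' ys, (if ys ≠ xs then Ls xs ys else 0) * Λ ys x
        = Γ xs x - Ls xs xs * Λ xs x := by
      have h3 := Summable.tsum_eq_add_tsum_ite (hdual1 xs x) xs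
      rw [hΓ1 xs x] at h3
      have : ∑' ys, (if ys ≠ xs then Ls xs ys else 0) * Λ ys x
          = ∑' ys, (if ys = xs then 0 else Ls xs ys * Λ ys x) := by
        refine tsum_congr fun ys => ?_
        by_cases h : ys = xs <;> simp [h]
      rw [this]
      linarith
    rw [e, e2, sub_div, mul_div_cancel_right₀ _ hcne]
  -- majorant for f3
  have hf3nn : ∀ p, 0 ≤ f3 p := by
    rintro ⟨y, ys⟩
    rw [hf3]; dsimp only
    split_ifs with h
    · exact div_nonneg (mul_nonneg (mul_nonneg (hL.nonneg x y (Ne.symm h.1))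
        (hLs.nonneg xs ys (Ne.symm h.2.1))) (hΛnn ys y)) h.2.2.2.le
    · exact le_refl 0
  have hf3le : ∀ p : S × Ss, f3 p ≤
      (if p.2 ≠ xs then Ls xs p.2 else 0) * Λ p.2 p.1 / Λ xs x := by
    rintro ⟨y, ys⟩
    rw [hf3]; dsimp only
    split_ifs with h h' h''
    · have hΓpos : 0 < Γ xs y := h.2.2.2
      rw [div_le_div_iff₀ hΓpos hc]
      have hb : 0 ≤ Ls xs ys * Λ ys y :=
        mul_nonneg (hLs.nonneg xs ys (Ne.symm h.2.1)) (hΛnn ys y)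
      have hkey := mul_le_mul_of_nonneg_right (hΓge y h.2.2.1) hb
      nlinarith
    · exact absurd h.2.1 h'
    · exact div_nonneg (mul_nonneg (hLs.nonneg xs ys (Ne.symm h'')) (hΛnn ys y)) hc.le
    · simp
  have hHnn : ∀ q : Ss × S, 0 ≤ (if q.1 ≠ xs then Ls xs q.1 else 0) * Λ q.1 q.2 / Λ xs x :=
    fun q => div_nonneg (mul_nonneg (hunn q.1) (hΛnn q.1 q.2)) hc.le
  have hH : Summable (fun q : Ss × S =>
      (if q.1 ≠ xs then Ls xs q.1 else 0) * Λ q.1 q.2 / Λ xs x) := by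
    rw [summable_prod_of_nonneg (fun q => hHnn q)]
    have e : ∀ ys : Ss, (∑' y, (if ys ≠ xs then Ls xs ys else 0) * Λ ys y / Λ xs x)
        = (if ys ≠ xs then Ls xs ys else 0) / Λ xs x := by
      intro ys
      rw [tsum_div_const, tsum_mul_left, hΛone, mul_one]
    constructor
    · intro ys
      have h' : Summable fun y : S =>
          (if ys ≠ xs then Ls xs ys else 0) * Λ ys y / Λ xs x :=
        ((hΛsum ys).mul_left _).div_const _
      exact h'
    · have h' : Summable fun ys : Ss =>
          ∑' y, (if ys ≠ xs then Ls xs ys else 0) * Λ ys y / Λ xs x :=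
        (hu.div_const (Λ xs x)).congr fun ys => (e ys).symm
      exact h'
  have hG : Summable (fun p : S × Ss =>
      (if p.2 ≠ xs then Ls xs p.2 else 0) * Λ p.2 p.1 / Λ xs x) :=
    ((Equiv.prodComm S Ss).summable_iff.mpr hH)
  have hS3 : Summable f3 := Summable.of_nonneg_of_le hf3nn hf3le hG
  -- inner sums for f3
  have hT3 : ∑' p, f3 p
      = ∑' y, (if y ≠ x ∧ Λ xs y = 0 ∧ 0 < Γ xs y then L x y else 0) := by
    have hinner : ∀ y, Summable fun ys => f3 (y, ys) := by
      intro y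
      refine Summable.of_nonneg_of_le (fun ys => hf3nn (y, ys))
        (fun ys => (hf3le (y, ys)).trans ?_) (hu.div_const (Λ xs x))
      dsimp only
      have h1 : (if ys ≠ xs then Ls xs ys else 0) * Λ ys y
          ≤ (if ys ≠ xs then Ls xs ys else 0) := by
        nlinarith [hunn ys, hΛle1 ys y, hΛnn ys y]
      exact (div_le_div_iff_of_pos_right hc).mpr h1
    rw [Summable.tsum_prod' hS3 hinner]
    refine tsum_congr fun y => ?_
    by_cases hcy : y ≠ x ∧ Λ xs y = 0 ∧ 0 < Γ xs y
    · rw [if_pos hcy]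
      have e : ∀ ys, f3 (y, ys) = Ls xs ys * Λ ys y * (L x y / Γ xs y) := by
        intro ys
        rw [hf3]; dsimp only
        by_cases h : ys = xs
        · rw [if_neg (fun hh => hh.2.1 h), h, hcy.2.1, mul_zero, zero_mul]
        · rw [if_pos ⟨hcy.1, h, hcy.2.1, hcy.2.2⟩]
          ring
      rw [tsum_congr e, tsum_mul_right, hΓ1 xs y, mul_comm, div_mul_eq_mul_div,
        mul_div_assoc, div_self hcy.2.2.ne', mul_one]
    · rw [if_neg hcy]
      have e : ∀ ys, f3 (y, ys) = 0 := by
        intro ys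
        rw [hf3]; dsimp only
        exact if_neg (fun h => hcy ⟨h.1, h.2.2.1, h.2.2.2⟩)
      rw [tsum_congr e, tsum_zero]
  -- combining the `y`-sums of f1 and f3
  have hAs : Summable (fun y => if y ≠ x ∧ 0 < Λ xs y then L x y else 0) :=
    hS1'.congr hc1
  have hCs : Summable (fun y => if y ≠ x ∧ Λ xs y = 0 ∧ 0 < Γ xs y then L x y else 0) := by
    refine Summable.of_nonneg_of_le (fun y => ?_) (fun y => ?_) hLx
    · split_ifs with h
      · exact hL.nonneg x y (Ne.symm h.1)
      · exact le_refl 0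
    · split_ifs with h h' h''
      · exact le_refl _
      · exact absurd h.1 h'
      · exact hL.nonneg x y (Ne.symm h'')
      · exact le_refl 0
  have hD : ∑' y, (if y ≠ x then L x y else 0) = -(L x x) := by
    rw [← hL.sum_eq x]
    have h := tsum_subtype {y : S | y ≠ x} (fun y => L x y)
    rw [show (∑' (y : {y : S // y ≠ x}), L x (y : S))
        = ∑' (y : ↥{y : S | y ≠ x}), L x (y : S) from rfl, h]
    refine tsum_congr fun y => ?_
    by_cases hy : y = x <;> simp [Set.indicator_apply, hy]
  have hAC : (∑' y, (if y ≠ x ∧ 0 < Λ xs y then L x y else 0))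
      + (∑' y, (if y ≠ x ∧ Λ xs y = 0 ∧ 0 < Γ xs y then L x y else 0)) = -(L x x) := by
    rw [← Summable.tsum_add hAs hCs, ← hD]
    refine tsum_congr fun y => ?_
    by_cases hy : y = x
    · simp [hy]
    · by_cases hΛy : 0 < Λ xs y
      · rw [if_pos ⟨hy, hΛy⟩, if_neg (fun h => hΛy.ne' h.2.1), if_pos hy, add_zero]
      · have hz : Λ xs y = 0 := le_antisymm (not_lt.mp hΛy) (hΛnn xs y)
        rw [if_neg (fun h => hΛy h.2), if_pos hy, zero_add]
        by_cases hΓy : 0 < Γ xs y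
        · rw [if_pos ⟨hy, hz, hΓy⟩]
        · rw [if_neg (fun h => hΓy h.2.2)]
          have h1 := hΓge y hz
          have h2 : 0 ≤ L x y := hL.nonneg x y (Ne.symm hy)
          have h3 : Γ xs y ≤ 0 := not_lt.mp hΓy
          nlinarith
  -- summability of the full row
  have hS0 : Summable f0 :=
    ((hS1.add hS2).add hS3).congr fun p => (hsplit p).symm
  have hind : ∀ p : S × Ss,
      Set.indicator {yb : S × Ss | 0 < Λ yb.2 yb.1 ∧ yb ≠ (x, xs)}
        (Lbar L Ls Λ Γ (x, xs)) p = f0 p := by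
    intro p
    rw [hf0, Set.indicator_apply]
    rfl
  have hsub : Summable (fun yb : {yb : S × Ss // 0 < Λ yb.2 yb.1 ∧ yb ≠ (x, xs)} =>
      Lbar L Ls Λ Γ (x, xs) (yb : S × Ss)) := by
    refine (summable_subtype_iff_indicator
      (s := {yb : S × Ss | 0 < Λ yb.2 yb.1 ∧ yb ≠ (x, xs)})
      (f := Lbar L Ls Λ Γ (x, xs))).mpr ?_
    exact hS0.congr fun p => (hind p).symm
  -- value of the row sum
  have hdiagval : Lbar L Ls Λ Γ (x, xs) (x, xs)
      = -(-(L x x) + -(Ls xs xs) + Γ xs x / Λ xs x) := by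
    unfold Lbar
    rw [if_pos rfl]
  have hTsub : (∑' yb : {yb : S × Ss // 0 < Λ yb.2 yb.1 ∧ yb ≠ (x, xs)},
      Lbar L Ls Λ Γ (x, xs) (yb : S × Ss))
      = -(L x x) + -(Ls xs xs) + Γ xs x / Λ xs x := by
    have hS12 : Summable (fun p : S × Ss => f1 p + f2 p) := hS1.add hS2
    have h0 : (∑' yb : {yb : S × Ss // 0 < Λ yb.2 yb.1 ∧ yb ≠ (x, xs)},
        Lbar L Ls Λ Γ (x, xs) (yb : S × Ss)) = ∑' p, f0 p := by
      refine Eq.trans (tsum_subtype {yb : S × Ss | 0 < Λ yb.2 yb.1 ∧ yb ≠ (x, xs)}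
        (Lbar L Ls Λ Γ (x, xs))) ?_
      exact tsum_congr hind
    rw [h0, tsum_congr hsplit, Summable.tsum_add hS12 hS3, Summable.tsum_add hS1 hS2,
      hT1, hT2, hT3]
    linarith [hAC]
  have hnnsum : 0 ≤ ∑' yb : {yb : S × Ss // 0 < Λ yb.2 yb.1 ∧ yb ≠ (x, xs)},
      Lbar L Ls Λ Γ (x, xs) (yb : S × Ss) :=
    tsum_nonneg fun yb => hnn (yb : S × Ss) yb.2.1 yb.2.2
  refine ⟨hnn, hsub, ?_, ?_, ?_⟩
  · rw [hTsub, hdiagval, neg_neg]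
  · rw [hdiagval, neg_neg]
  · rw [hdiagval, neg_neg, ← hTsub]; exact hnnsum
end

section
/- For every x* ∈ S* and every ȳ = (y,y*) ∈ S̄, the family (Λ(x*,x)·L̄((x,x*),(y,y*)))_{x∈S with (x,x*)∈S̄} is summable and Σ_{x : (x,x*)∈S̄} Λ(x*,x) L̄((x,x*),(y,y*)) = L*(x*,y*) Λ(y*,y). -/
open scoped BigOperators

attribute [local instance] Classical.propDecidable

/-- For every `x* ∈ S*` and every `ȳ = (y,y*) ∈ S̄`, the family
`(Λ(x*,x)·L̄((x,x*),(y,y*)))_{x : (x,x*) ∈ S̄}` is summable and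
`Σ_{x : (x,x*)∈S̄} Λ(x*,x) L̄((x,x*),(y,y*)) = L*(x*,y*) Λ(y*,y)`. -/
theorem lam_lbar_row_sum {S Ss : Type*} [Countable S] [Countable Ss]
    (L : S → S → ℝ) (Ls : Ss → Ss → ℝ) (Λ Γ : Ss → S → ℝ)
    (hL : IsGenerator S L) (hLs : IsGenerator Ss Ls)
    (hΛnn : ∀ xs x, 0 ≤ Λ xs x) (hΛsum : ∀ xs, Summable (Λ xs))
    (hΛone : ∀ xs, ∑' x, Λ xs x = 1)
    (hdiag : ∀ xs, Summable fun x => Λ xs x * (-(L x x)))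
    (hdual1 : ∀ xs y, Summable fun ys => Ls xs ys * Λ ys y)
    (hdual2 : ∀ xs y, Summable fun x => Λ xs x * L x y)
    (hΓ1 : ∀ xs y, ∑' ys, Ls xs ys * Λ ys y = Γ xs y)
    (hΓ2 : ∀ xs y, ∑' x, Λ xs x * L x y = Γ xs y)
    (xs : Ss) (yb : S × Ss) (hyb : 0 < Λ yb.2 yb.1) :
    Summable (fun x : {x : S // 0 < Λ xs x} =>
      Λ xs (x : S) * Lbar L Ls Λ Γ ((x : S), xs) yb) ∧
    (∑' x : {x : S // 0 < Λ xs x}, Λ xs (x : S) * Lbar L Ls Λ Γ ((x : S), xs) yb)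
      = Ls xs yb.2 * Λ yb.2 yb.1 := by
  obtain ⟨y, ys⟩ := yb
  simp only at hyb ⊢
  set f : S → ℝ := fun x => Λ xs x * Lbar L Ls Λ Γ (x, xs) (y, ys) with hf
  have hzero : ∀ x, Λ xs x = 0 → f x = 0 := by
    intro x hx; simp [hf, hx]
  have hsupp : Function.support f ⊆ {x | 0 < Λ xs x} := by
    intro x hx
    rcases lt_or_eq_of_le (hΛnn xs x) with h | h
    · exact h
    · exact absurd (hzero x h.symm) hx
  have key : Summable f ∧ ∑' x, f x = Ls xs ys * Λ ys y := by
    by_cases hys : ys = xs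
    · subst hys
      have hΛne : Λ ys y ≠ 0 := ne_of_gt hyb
      set a : ℝ := Λ ys y * (L y y + Ls ys ys - Γ ys y / Λ ys y) with ha
      have hfe : f = Function.update (fun x => Λ ys x * L x y) y a := by
        funext x
        by_cases hx : x = y
        · subst hx
          simp only [hf, Function.update_self, ha]
          simp [Lbar]
          left; ring
        · simp [hf, Lbar, Function.update_of_ne hx, hx, Ne.symm hx]
      have hg : Summable (fun x => Λ ys x * L x y) := hdual2 ys y
      have hfs : Summable f := hfe ▸ hg.update y a
      refine ⟨hfs, ?_⟩
      have h1 := Summable.tsum_eq_add_tsum_ite hfs y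
      have h2 := Summable.tsum_eq_add_tsum_ite hg y
      have h3 : (∑' x, if x = y then 0 else f x)
          = ∑' x, if x = y then 0 else Λ ys x * L x y := by
        congr 1; funext x; split_ifs with h
        · rfl
        · rw [hfe, Function.update_of_ne h]
      have h4 : f y = a := by rw [hfe, Function.update_self]
      have hΓ := hΓ2 ys y
      rw [h1, h3, h4, ha]
      have h5 : (∑' x, if x = y then 0 else Λ ys x * L x y)
          = Γ ys y - Λ ys y * L y y := by linarith
      rw [h5]
      field_simp
      ring
    · have hys' : xs ≠ ys := fun h => hys h.symm
      by_cases hΛy : 0 < Λ xs y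
      · have hΛne : Λ xs y ≠ 0 := ne_of_gt hΛy
        have hfe : f = fun x => if x = y then Ls xs ys * Λ ys y else 0 := by
          funext x
          by_cases hx : x = y
          · subst hx
            simp [hf, Lbar, hys, hys']
            field_simp
          · simp [hf, Lbar, hx, Ne.symm hx, hys, hys', hΛne]
        rw [hfe]
        exact ⟨(hasSum_ite_eq y _).summable, (hasSum_ite_eq y _).tsum_eq⟩
      · have hΛy0 : Λ xs y = 0 := le_antisymm (not_lt.1 hΛy) (hΛnn xs y)
        by_cases hΓp : 0 < Γ xs y
        · have hΓne : Γ xs y ≠ 0 := ne_of_gt hΓp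
          have hfe : f = fun x => Λ xs x * L x y * (Ls xs ys * Λ ys y / Γ xs y) := by
            funext x
            by_cases hx : x = y
            · subst hx
              simp [hf, hΛy0]
            · simp [hf, Lbar, hx, Ne.symm hx, hys, hys', hΛy0, hΓp]
              ring
          rw [hfe]
          refine ⟨(hdual2 xs y).mul_right _, ?_⟩
          rw [tsum_mul_right, hΓ2 xs y]
          field_simp
        · have hfe : f = fun _ => 0 := by
            funext x
            by_cases hx : x = y
            · subst hx
              simp [hf, hΛy0]
            · simp [hf, Lbar, hx, Ne.symm hx, hys, hys', hΛy0, hΓp]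
          have hrhs : Ls xs ys * Λ ys y = 0 := by
            have hnn : ∀ zs, zs ≠ ys → 0 ≤ Ls xs zs * Λ zs y := by
              intro zs _
              by_cases h : zs = xs
              · subst h; rw [hΛy0]; simp
              · exact mul_nonneg (hLs.nonneg xs zs (fun h' => h h'.symm)) (hΛnn zs y)
            have hle := Summable.le_tsum (hdual1 xs y) ys hnn
            rw [hΓ1 xs y] at hle
            have h0 : 0 ≤ Ls xs ys * Λ ys y :=
              mul_nonneg (hLs.nonneg xs ys (fun h' => hys h'.symm)) (hΛnn ys y)
            have := not_lt.1 hΓp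
            linarith
          rw [hfe, hrhs]
          exact ⟨summable_zero, by simp⟩
  refine ⟨key.1.subtype _, ?_⟩
  exact (tsum_subtype_eq_of_support_subset (f := f) hsupp).trans key.2
end

section
/- For every x* ∈ S* and every bounded function f : S̄ → ℝ, the iterated sums below converge (the inner families are summable and the resulting outer families are summable) and Σ_{x : (x,x*)∈S̄} Σ_{ȳ∈S̄} Λ(x*,x) L̄((x,x*),ȳ) f(ȳ) = Σ_{ȳ=(y,y*)∈S̄} L*(x*,y*) Λ(y*,y) f(ȳ). -/
open scoped BigOperators

set_option maxHeartbeats 1000000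
attribute [local instance] Classical.propDecidable

lemma tsum_subtype_of_zero {α : Type*} {p : α → Prop} {f : α → ℝ}
    (h0 : ∀ x, ¬ p x → f x = 0) :
    ∑' x : {x // p x}, f x.1 = ∑' x, f x :=
  tsum_subtype_eq_of_support_subset (fun x hx => by
    by_contra h; exact hx (h0 x h))

lemma IsGenerator.diag_nonpos {E : Type*} {M : E → E → ℝ} (hM : IsGenerator E M) (x : E) :
    0 ≤ -(M x x) := by
  rw [← hM.sum_eq x]
  exact tsum_nonneg fun y => hM.nonneg x y.1 (Ne.symm y.2)

lemma IsGenerator.row_ite_summable {E : Type*} {M : E → E → ℝ} (hM : IsGenerator E M) (x : E) :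
    Summable fun y => if y = x then (0:ℝ) else M x y := by
  have h1 : Summable (Set.indicator {y : E | y ≠ x} (M x)) :=
    summable_subtype_iff_indicator.mp (hM.summable x)
  refine h1.congr fun y => ?_
  by_cases hy : y = x
  · simp [hy, Set.indicator_apply]
  · simp [hy, Set.indicator_apply]

lemma IsGenerator.row_ite_tsum {E : Type*} {M : E → E → ℝ} (hM : IsGenerator E M) (x : E) :
    ∑' y, (if y = x then (0:ℝ) else M x y) = -(M x x) := by
  rw [← hM.sum_eq x]
  rw [← tsum_subtype_of_zero (p := fun y => y ≠ x)
    (f := fun y => if y = x then (0:ℝ) else M x y) (fun y hy => by simp at hy; simp [hy])]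
  exact tsum_congr fun y => by simp [y.2]

lemma IsGenerator.abs_row_summable {E : Type*} {M : E → E → ℝ} (hM : IsGenerator E M) (x : E) :
    Summable fun y => |M x y| := by
  have h2 : Summable fun y => (if y = x then (0:ℝ) else M x y) + (if y = x then |M x x| else 0) :=
    (hM.row_ite_summable x).add ((hasSum_ite_eq x (|M x x|)).summable)
  refine h2.congr fun y => ?_
  by_cases hy : y = x
  · simp [hy]
  · simp [hy, abs_of_nonneg (hM.nonneg x y (Ne.symm hy))]

section LbarEval
variable {S Ss : Type*} (L : S → S → ℝ) (Ls : Ss → Ss → ℝ) (Λ Γ : Ss → S → ℝ)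

lemma Lbar_diag (x : S) (xs : Ss) :
    Lbar L Ls Λ Γ (x, xs) (x, xs) = -(-(L x x) + -(Ls xs xs) + Γ xs x / Λ xs x) := by
  simp [Lbar]

lemma Lbar_move1 {x y : S} (xs : Ss) (hxy : y ≠ x) :
    Lbar L Ls Λ Γ (x, xs) (y, xs) = L x y := by
  simp [Lbar, Prod.ext_iff, hxy, Ne.symm hxy]

lemma Lbar_move2 (x : S) {xs ys : Ss} (hys : ys ≠ xs) :
    Lbar L Ls Λ Γ (x, xs) (x, ys) = Ls xs ys * Λ ys x / Λ xs x := by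
  simp [Lbar, Prod.ext_iff, hys, Ne.symm hys]

lemma Lbar_move3 {x y : S} {xs ys : Ss} (hxy : y ≠ x) (hys : ys ≠ xs) :
    Lbar L Ls Λ Γ (x, xs) (y, ys) =
      if Λ xs y = 0 ∧ 0 < Γ xs y then L x y * Ls xs ys * Λ ys y / Γ xs y else 0 := by
  simp [Lbar, Prod.ext_iff, hxy, Ne.symm hxy, hys, Ne.symm hys]

end LbarEval

/-- For every `x* ∈ S*` and every bounded `f : S̄ → ℝ`, the iterated sums converge
(the inner families are summable and the resulting outer families are summable) and
`Σ_{x : (x,x*)∈S̄} Σ_{ȳ∈S̄} Λ(x*,x) L̄((x,x*),ȳ) f(ȳ)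
  = Σ_{ȳ=(y,y*)∈S̄} L*(x*,y*) Λ(y*,y) f(ȳ)`. -/
theorem lam_lbar_fubini {S Ss : Type*} [Countable S] [Countable Ss]
    (L : S → S → ℝ) (Ls : Ss → Ss → ℝ) (Λ Γ : Ss → S → ℝ)
    (hL : IsGenerator S L) (hLs : IsGenerator Ss Ls)
    (hΛnn : ∀ xs x, 0 ≤ Λ xs x) (hΛsum : ∀ xs, Summable (Λ xs))
    (hΛone : ∀ xs, ∑' x, Λ xs x = 1)
    (hdiag : ∀ xs, Summable fun x => Λ xs x * (-(L x x)))
    (hdual1 : ∀ xs y, Summable fun ys => Ls xs ys * Λ ys y)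
    (hdual2 : ∀ xs y, Summable fun x => Λ xs x * L x y)
    (hΓ1 : ∀ xs y, ∑' ys, Ls xs ys * Λ ys y = Γ xs y)
    (hΓ2 : ∀ xs y, ∑' x, Λ xs x * L x y = Γ xs y)
    (xs : Ss) (f : {yb : S × Ss // 0 < Λ yb.2 yb.1} → ℝ)
    (C : ℝ) (hf : ∀ yb, |f yb| ≤ C) :
    (∀ x : {x : S // 0 < Λ xs x},
      Summable (fun yb : {yb : S × Ss // 0 < Λ yb.2 yb.1} =>
        Λ xs (x : S) * Lbar L Ls Λ Γ ((x : S), xs) (yb : S × Ss) * f yb)) ∧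
    Summable (fun x : {x : S // 0 < Λ xs x} =>
      ∑' yb : {yb : S × Ss // 0 < Λ yb.2 yb.1},
        Λ xs (x : S) * Lbar L Ls Λ Γ ((x : S), xs) (yb : S × Ss) * f yb) ∧
    Summable (fun yb : {yb : S × Ss // 0 < Λ yb.2 yb.1} =>
      Ls xs (yb : S × Ss).2 * Λ (yb : S × Ss).2 (yb : S × Ss).1 * f yb) ∧
    (∑' x : {x : S // 0 < Λ xs x}, ∑' yb : {yb : S × Ss // 0 < Λ yb.2 yb.1},
        Λ xs (x : S) * Lbar L Ls Λ Γ ((x : S), xs) (yb : S × Ss) * f yb)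
      = ∑' yb : {yb : S × Ss // 0 < Λ yb.2 yb.1},
          Ls xs (yb : S × Ss).2 * Λ (yb : S × Ss).2 (yb : S × Ss).1 * f yb := by
  classical
  obtain ⟨C', hC'def⟩ : ∃ c : ℝ, c = max C 0 := ⟨_, rfl⟩
  have hC0 : (0:ℝ) ≤ C' := hC'def ▸ le_max_right _ _
  obtain ⟨F, hFdef⟩ : ∃ F : S × Ss → ℝ,
      F = fun yb => if h : 0 < Λ yb.2 yb.1 then f ⟨yb, h⟩ else 0 := ⟨_, rfl⟩
  obtain ⟨G, hGdef⟩ : ∃ G : S → S × Ss → ℝ,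
      G = fun x yb => Λ xs x * Lbar L Ls Λ Γ (x, xs) yb * F yb := ⟨_, rfl⟩
  have hFb : ∀ yb, |F yb| ≤ C' := by
    intro yb
    by_cases h : 0 < Λ yb.2 yb.1
    · simp only [hFdef, dif_pos h]
      exact le_trans (hf _) (hC'def ▸ le_max_left C 0)
    · simp [hFdef, dif_neg h, hC0]
  have hF0 : ∀ yb : S × Ss, ¬ 0 < Λ yb.2 yb.1 → F yb = 0 := fun yb h => by
    simp [hFdef, dif_neg h]
  have hFval : ∀ yb : {yb : S × Ss // 0 < Λ yb.2 yb.1}, F yb.1 = f yb := by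
    intro yb
    simp only [hFdef, dif_pos yb.2]
  have hΛz : ∀ (a : Ss) (b : S), ¬ 0 < Λ a b → Λ a b = 0 :=
    fun a b h => le_antisymm (not_lt.mp h) (hΛnn a b)
  -- summability of x ↦ ∑' ys, |Ls xs ys| * Λ ys x
  have habsLs : Summable fun ys => |Ls xs ys| := hLs.abs_row_summable xs
  have hVsum : Summable fun x => ∑' ys, |Ls xs ys| * Λ ys x := by
    have hΦnn : ∀ p : Ss × S, 0 ≤ |Ls xs p.1| * Λ p.1 p.2 :=
      fun p => mul_nonneg (abs_nonneg _) (hΛnn _ _)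
    have hsec0 : ∀ ys : Ss, Summable fun x : S => |Ls xs ys| * Λ ys x :=
      fun ys => (hΛsum ys).mul_left _
    have hout0 : Summable fun ys : Ss => ∑' x : S, |Ls xs ys| * Λ ys x := by
      refine habsLs.congr fun ys => ?_
      rw [tsum_mul_left, hΛone ys, mul_one]
    have hΦ : Summable (fun p : Ss × S => |Ls xs p.1| * Λ p.1 p.2) :=
      (summable_prod_of_nonneg hΦnn).mpr ⟨hsec0, hout0⟩
    exact hΦ.prod_symm.prod
  have hΓabs_le : ∀ x, |Γ xs x| ≤ ∑' ys, |Ls xs ys| * Λ ys x := by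
    intro x
    rw [← hΓ1 xs x]
    have h1 : ‖∑' ys, Ls xs ys * Λ ys x‖ ≤ ∑' ys, ‖Ls xs ys * Λ ys x‖ :=
      norm_tsum_le_tsum_norm ((hdual1 xs x).abs.congr (fun ys => (Real.norm_eq_abs _).symm))
    rw [Real.norm_eq_abs] at h1
    refine h1.trans (le_of_eq (tsum_congr fun ys => ?_))
    rw [Real.norm_eq_abs, abs_mul, abs_of_nonneg (hΛnn _ _)]
  have hΓabssum : Summable fun x => |Γ xs x| :=
    Summable.of_nonneg_of_le (fun _ => abs_nonneg _) hΓabs_le hVsum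
  have hΓsum : Summable fun x => Γ xs x := hΓabssum.of_abs
  -- W₀
  obtain ⟨W₀, hW₀def⟩ : ∃ W : S → ℝ, W = fun x => Γ xs x - Ls xs xs * Λ xs x := ⟨_, rfl⟩
  have hW0sum : Summable W₀ := by
    rw [hW₀def]; exact hΓsum.sub ((hΛsum xs).mul_left _)
  have hW0eq : ∀ y, ∑' ys, (if ys = xs then (0:ℝ) else Ls xs ys * Λ ys y) = W₀ y := by
    intro y
    have h := Summable.tsum_eq_add_tsum_ite (hdual1 xs y) xs
    rw [hΓ1 xs y] at h
    rw [hW₀def]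
    simp only []
    linarith
  have hW0nn : ∀ y, 0 ≤ W₀ y := by
    intro y
    rw [← hW0eq y]
    refine tsum_nonneg fun ys => ?_
    by_cases h : ys = xs
    · simp [h]
    · simp only [if_neg h]
      exact mul_nonneg (hLs.nonneg xs ys (Ne.symm h)) (hΛnn _ _)
  -- T
  obtain ⟨d, hddef⟩ : ∃ dd : S → ℝ,
      dd = fun x => Λ xs x * L x x + Λ xs x * Ls xs xs - Γ xs x := ⟨_, rfl⟩
  obtain ⟨T, hTdef⟩ : ∃ T : S → ℝ,
      T = fun x => (|d x| + 2 * (Λ xs x * -(L x x)) + W₀ x) * C' := ⟨_, rfl⟩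
  have hdabs : Summable fun x => |d x| := by
    refine Summable.of_nonneg_of_le (fun _ => abs_nonneg _) (fun x => ?_)
      (((hdiag xs).add ((hΛsum xs).mul_right (|Ls xs xs|))).add hΓabssum)
    have h1 : |Λ xs x * L x x| = Λ xs x * -(L x x) := by
      rw [abs_mul, abs_of_nonneg (hΛnn _ _), abs_of_nonpos (neg_nonneg.mp (hL.diag_nonpos x))]
    have h2 : |Λ xs x * Ls xs xs| = Λ xs x * |Ls xs xs| := by
      rw [abs_mul, abs_of_nonneg (hΛnn _ _)]
    calc |d x| ≤ |Λ xs x * L x x| + |Λ xs x * Ls xs xs| + |Γ xs x| := by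
          simp only [hddef]; exact (abs_sub _ _).trans (by gcongr; exact abs_add_le _ _)
      _ = Λ xs x * -(L x x) + Λ xs x * |Ls xs xs| + |Γ xs x| := by rw [h1, h2]
  have hTsum : Summable T := by
    rw [hTdef]; exact ((hdabs.add ((hdiag xs).mul_left 2)).add hW0sum).mul_right C'
  have hTnn : ∀ x, 0 ≤ T x := by
    intro x
    rw [hTdef]
    refine mul_nonneg (add_nonneg (add_nonneg (abs_nonneg _) ?_) (hW0nn x)) hC0
    have := mul_nonneg (hΛnn xs x) (hL.diag_nonpos x)
    linarith
  -- per-x section summability and tsum bound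
  have hsec : ∀ x : S, Summable (fun yb => |G x yb|) ∧ ∑' yb, |G x yb| ≤ T x := by
    intro x
    by_cases hx : 0 < Λ xs x
    swap
    · have h0 : Λ xs x = 0 := hΛz _ _ hx
      have hz : ∀ yb, |G x yb| = 0 := fun yb => by
        simp only [hGdef]; rw [h0, zero_mul, zero_mul, abs_zero]
      refine ⟨summable_zero.congr (fun yb => (hz yb).symm), ?_⟩
      rw [tsum_congr hz, tsum_zero]
      exact hTnn x
    · have hxne : Λ xs x ≠ 0 := ne_of_gt hx
      obtain ⟨β, hβdef⟩ : ∃ B : S × Ss → ℝ, B = fun yb =>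
        if yb.2 = xs ∧ yb.1 ≠ x then Λ xs x * L x yb.1 else 0 := ⟨_, rfl⟩
      obtain ⟨γ, hγdef⟩ : ∃ B : S × Ss → ℝ, B = fun yb =>
        if yb.1 = x ∧ yb.2 ≠ xs then Ls xs yb.2 * Λ yb.2 x else 0 := ⟨_, rfl⟩
      obtain ⟨ρ, hρdef⟩ : ∃ B : S × Ss → ℝ, B = fun yb =>
        if yb.1 ≠ x ∧ yb.2 ≠ xs ∧ Λ xs yb.1 = 0 ∧ 0 < Γ xs yb.1
        then Λ xs x * (L x yb.1 * Ls xs yb.2 * Λ yb.2 yb.1 / Γ xs yb.1) else 0 := ⟨_, rfl⟩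
      obtain ⟨δ, hδdef⟩ : ∃ B : S × Ss → ℝ, B = fun yb =>
        if yb = (x, xs) then d x else 0 := ⟨_, rfl⟩
      -- decomposition
      have hψ : ∀ yb : S × Ss, Λ xs x * Lbar L Ls Λ Γ (x, xs) yb
          = δ yb + β yb + γ yb + ρ yb := by
        rintro ⟨y, ys⟩
        simp only [hβdef, hγdef, hρdef, hδdef]
        by_cases hyx : y = x
        · subst hyx
          by_cases hys : ys = xs
          · subst hys
            rw [Lbar_diag, if_pos rfl,
              if_neg (fun h : ys = ys ∧ y ≠ y => h.2 rfl),
              if_neg (fun h : y = y ∧ ys ≠ ys => h.2 rfl),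
              if_neg (fun h : y ≠ y ∧ _ => h.1 rfl),
              add_zero, add_zero, add_zero]
            simp only [hddef]
            field_simp
            ring
          · rw [Lbar_move2 L Ls Λ Γ y hys,
              if_neg (fun h : (y, ys) = (y, xs) => hys (congrArg Prod.snd h)),
              if_neg (fun h : ys = xs ∧ y ≠ y => hys h.1),
              if_pos ⟨rfl, hys⟩,
              if_neg (fun h : y ≠ y ∧ _ => h.1 rfl),
              zero_add, zero_add, add_zero]
            field_simp
        · by_cases hys : ys = xs
          · subst hys
            rw [Lbar_move1 L Ls Λ Γ ys hyx,
              if_neg (fun h : (y, ys) = (x, ys) => hyx (congrArg Prod.fst h)),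
              if_pos ⟨rfl, hyx⟩,
              if_neg (fun h : y = x ∧ ys ≠ ys => hyx h.1),
              if_neg (fun h : y ≠ x ∧ ys ≠ ys ∧ _ => h.2.1 rfl),
              zero_add, add_zero, add_zero]
          · rw [Lbar_move3 L Ls Λ Γ hyx hys,
              if_neg (fun h : (y, ys) = (x, xs) => hyx (congrArg Prod.fst h)),
              if_neg (fun h : ys = xs ∧ y ≠ x => hys h.1),
              if_neg (fun h : y = x ∧ ys ≠ xs => hyx h.1),
              zero_add, zero_add, zero_add]
            by_cases hc : Λ xs y = 0 ∧ 0 < Γ xs y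
            · rw [if_pos hc, if_pos ⟨hyx, hys, hc.1, hc.2⟩]
            · rw [if_neg hc, if_neg (fun h => hc ⟨h.2.2.1, h.2.2.2⟩), mul_zero]
      -- delta piece
      have hδabs : ∀ yb, |δ yb| = if yb = (x, xs) then |d x| else 0 := by
        intro yb
        simp only [hδdef]
        by_cases h : yb = (x, xs) <;> simp [h]
      have hδabs_sum : Summable (fun yb => |δ yb|) :=
        ((hasSum_ite_eq ((x, xs) : S × Ss) (|d x|)).summable).congr
          (fun yb => (hδabs yb).symm)
      have hδtsum : ∑' yb, |δ yb| = |d x| := by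
        rw [tsum_congr hδabs, tsum_ite_eq]
      -- beta piece
      have hβrow : Summable (fun y => if y = x then (0:ℝ) else Λ xs x * L x y) := by
        refine ((hL.row_ite_summable x).mul_left (Λ xs x)).congr fun y => ?_
        by_cases h : y = x <;> simp [h]
      have hβrowtsum : ∑' y, (if y = x then (0:ℝ) else Λ xs x * L x y)
          = Λ xs x * -(L x x) := by
        rw [← hL.row_ite_tsum x, ← tsum_mul_left]
        refine tsum_congr fun y => ?_
        by_cases h : y = x <;> simp [h]
      have hβcomp : ∀ y, β (y, xs) = if y = x then (0:ℝ) else Λ xs x * L x y := by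
        intro y
        simp only [hβdef]
        by_cases h : y = x <;> simp [h]
      have hι1 : Function.Injective (fun y : S => ((y, xs) : S × Ss)) :=
        fun a b h => congrArg Prod.fst h
      have hβ0 : ∀ yb : S × Ss, yb ∉ Set.range (fun y : S => ((y, xs) : S × Ss)) → β yb = 0 := by
        intro yb hyb
        simp only [hβdef]
        refine if_neg fun h => hyb ⟨yb.1, ?_⟩
        exact Prod.ext rfl h.1.symm
      have hβsum : Summable β :=
        (hι1.summable_iff hβ0).mp (hβrow.congr fun y => (hβcomp y).symm)
      have hβnn : ∀ yb, 0 ≤ β yb := by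
        intro yb
        simp only [hβdef]
        by_cases h : yb.2 = xs ∧ yb.1 ≠ x
        · rw [if_pos h]
          exact mul_nonneg (hΛnn _ _) (hL.nonneg x yb.1 (Ne.symm h.2))
        · rw [if_neg h]
      have hβtsum : ∑' yb, β yb = Λ xs x * -(L x x) := by
        have hsupp : Function.support β ⊆ Set.range (fun y : S => ((y, xs) : S × Ss)) := by
          intro yb hyb
          by_contra h
          exact hyb (hβ0 yb h)
        rw [← hι1.tsum_eq hsupp, tsum_congr hβcomp, hβrowtsum]
      -- gamma piece
      have hι2 : Function.Injective (fun ys : Ss => ((x, ys) : S × Ss)) :=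
        fun a b h => congrArg Prod.snd h
      have hγcomp : ∀ ys, γ (x, ys) = if ys = xs then (0:ℝ) else Ls xs ys * Λ ys x := by
        intro ys
        simp only [hγdef]
        by_cases h : ys = xs <;> simp [h]
      have hγrow : Summable (fun ys => if ys = xs then (0:ℝ) else Ls xs ys * Λ ys x) := by
        refine ((hdual1 xs x).indicator {ys | ys ≠ xs}).congr fun ys => ?_
        by_cases h : ys = xs <;> simp [Set.indicator_apply, h]
      have hγ0 : ∀ yb : S × Ss, yb ∉ Set.range (fun ys : Ss => ((x, ys) : S × Ss)) → γ yb = 0 := by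
        intro yb hyb
        simp only [hγdef]
        refine if_neg fun h => hyb ⟨yb.2, ?_⟩
        exact Prod.ext h.1.symm rfl
      have hγsum : Summable γ :=
        (hι2.summable_iff hγ0).mp (hγrow.congr fun ys => (hγcomp ys).symm)
      have hγnn : ∀ yb, 0 ≤ γ yb := by
        intro yb
        simp only [hγdef]
        by_cases h : yb.1 = x ∧ yb.2 ≠ xs
        · rw [if_pos h]
          exact mul_nonneg (hLs.nonneg xs yb.2 (Ne.symm h.2)) (hΛnn _ _)
        · rw [if_neg h]
      have hγtsum : ∑' yb, γ yb = W₀ x := by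
        have hsupp : Function.support γ ⊆ Set.range (fun ys : Ss => ((x, ys) : S × Ss)) := by
          intro yb hyb
          by_contra h
          exact hyb (hγ0 yb h)
        rw [← hι2.tsum_eq hsupp, tsum_congr hγcomp, hW0eq x]
      -- rho piece
      have hρnn : ∀ yb, 0 ≤ ρ yb := by
        intro yb
        simp only [hρdef]
        by_cases h : yb.1 ≠ x ∧ yb.2 ≠ xs ∧ Λ xs yb.1 = 0 ∧ 0 < Γ xs yb.1
        · rw [if_pos h]
          refine mul_nonneg (hΛnn _ _) (div_nonneg (mul_nonneg (mul_nonneg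
            (hL.nonneg x yb.1 (Ne.symm h.1)) (hLs.nonneg xs yb.2 (Ne.symm h.2.1)))
            (hΛnn _ _)) (le_of_lt h.2.2.2))
        · rw [if_neg h]
      have hρcompeq : ∀ y, (y ≠ x ∧ Λ xs y = 0 ∧ 0 < Γ xs y) → ∀ ys, ρ (y, ys)
          = (if ys = xs then (0:ℝ) else Ls xs ys * Λ ys y) * (Λ xs x * L x y / Γ xs y) := by
        intro y hcy ys
        simp only [hρdef]
        by_cases hys : ys = xs
        · simp [hys]
        · rw [if_pos ⟨hcy.1, hys, hcy.2.1, hcy.2.2⟩, if_neg hys]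
          ring
      have hρzero : ∀ y, ¬ (y ≠ x ∧ Λ xs y = 0 ∧ 0 < Γ xs y) → ∀ ys, ρ (y, ys) = 0 := by
        intro y hcy ys
        simp only [hρdef]
        exact if_neg fun h => hcy ⟨h.1, h.2.2.1, h.2.2.2⟩
      have hρsec : ∀ y : S, Summable fun ys => ρ (y, ys) := by
        intro y
        by_cases hcy : y ≠ x ∧ Λ xs y = 0 ∧ 0 < Γ xs y
        · refine Summable.congr ?_ (fun ys => (hρcompeq y hcy ys).symm)
          refine (Summable.mul_right _ ?_)
          refine ((hdual1 xs y).indicator {ys | ys ≠ xs}).congr fun ys => ?_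
          by_cases h : ys = xs <;> simp [Set.indicator_apply, h]
        · exact summable_zero.congr (fun ys => (hρzero y hcy ys).symm)
      have houtρ : ∀ y : S, (∑' ys, ρ (y, ys))
          = if y ≠ x ∧ Λ xs y = 0 ∧ 0 < Γ xs y then Λ xs x * L x y else 0 := by
        intro y
        by_cases hcy : y ≠ x ∧ Λ xs y = 0 ∧ 0 < Γ xs y
        · rw [if_pos hcy, tsum_congr (hρcompeq y hcy), tsum_mul_right, hW0eq y]
          rw [hW₀def]
          simp only []
          rw [hcy.2.1, mul_zero, sub_zero]
          rw [mul_comm]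
          exact div_mul_cancel₀ _ (ne_of_gt hcy.2.2)
        · rw [if_neg hcy, tsum_congr (hρzero y hcy), tsum_zero]
      have hκle : ∀ y, (if y ≠ x ∧ Λ xs y = 0 ∧ 0 < Γ xs y then Λ xs x * L x y else 0)
          ≤ (if y = x then (0:ℝ) else Λ xs x * L x y) := by
        intro y
        by_cases hcy : y ≠ x ∧ Λ xs y = 0 ∧ 0 < Γ xs y
        · rw [if_pos hcy, if_neg hcy.1]
        · rw [if_neg hcy]
          by_cases h : y = x
          · rw [if_pos h]
          · rw [if_neg h]
            exact mul_nonneg (hΛnn _ _) (hL.nonneg x y (Ne.symm h))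
      have hκnn : ∀ y, (0:ℝ) ≤ if y ≠ x ∧ Λ xs y = 0 ∧ 0 < Γ xs y then Λ xs x * L x y else 0 := by
        intro y
        by_cases hcy : y ≠ x ∧ Λ xs y = 0 ∧ 0 < Γ xs y
        · rw [if_pos hcy]
          exact mul_nonneg (hΛnn _ _) (hL.nonneg x y (Ne.symm hcy.1))
        · rw [if_neg hcy]
      have hκsum : Summable (fun y => if y ≠ x ∧ Λ xs y = 0 ∧ 0 < Γ xs y
          then Λ xs x * L x y else 0) :=
        Summable.of_nonneg_of_le hκnn hκle hβrow
      have hρsum : Summable ρ :=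
        (summable_prod_of_nonneg hρnn).mpr
          ⟨hρsec, hκsum.congr (fun y => (houtρ y).symm)⟩
      have hρtsum_le : ∑' yb, ρ yb ≤ Λ xs x * -(L x x) := by
        calc ∑' yb, ρ yb = ∑' y, ∑' ys, ρ (y, ys) := Summable.tsum_prod' hρsum hρsec
          _ = ∑' y, (if y ≠ x ∧ Λ xs y = 0 ∧ 0 < Γ xs y then Λ xs x * L x y else 0) :=
              tsum_congr houtρ
          _ ≤ ∑' y, (if y = x then (0:ℝ) else Λ xs x * L x y) :=
              Summable.tsum_le_tsum hκle (hκsum.congr (fun y => rfl)) hβrow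
          _ = Λ xs x * -(L x x) := hβrowtsum
      -- assembly
      have hGx : ∀ yb, G x yb = (δ yb + β yb + γ yb + ρ yb) * F yb := by
        intro yb
        simp only [hGdef]
        rw [hψ yb]
      have hmajsum : Summable (fun yb => (|δ yb| + β yb + γ yb + ρ yb) * C') :=
        (((hδabs_sum.add hβsum).add hγsum).add hρsum).mul_right C'
      have hle : ∀ yb, |G x yb| ≤ (|δ yb| + β yb + γ yb + ρ yb) * C' := by
        intro yb
        rw [hGx yb, abs_mul]
        have h1 : |δ yb + β yb + γ yb + ρ yb| ≤ |δ yb| + β yb + γ yb + ρ yb := by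
          calc |δ yb + β yb + γ yb + ρ yb|
              ≤ |δ yb + β yb + γ yb| + |ρ yb| := abs_add_le _ _
            _ ≤ |δ yb + β yb| + |γ yb| + |ρ yb| := by gcongr; exact abs_add_le _ _
            _ ≤ |δ yb| + |β yb| + |γ yb| + |ρ yb| := by gcongr; exact abs_add_le _ _
            _ = |δ yb| + β yb + γ yb + ρ yb := by
                rw [abs_of_nonneg (hβnn yb), abs_of_nonneg (hγnn yb), abs_of_nonneg (hρnn yb)]
        exact mul_le_mul h1 (hFb yb) (abs_nonneg _)
          (add_nonneg (add_nonneg (add_nonneg (abs_nonneg _) (hβnn yb)) (hγnn yb)) (hρnn yb))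
      have hGxabs : Summable (fun yb => |G x yb|) :=
        Summable.of_nonneg_of_le (fun yb => abs_nonneg _) hle hmajsum
      refine ⟨hGxabs, ?_⟩
      calc ∑' yb, |G x yb| ≤ ∑' yb, (|δ yb| + β yb + γ yb + ρ yb) * C' :=
            Summable.tsum_le_tsum hle hGxabs hmajsum
        _ = ((∑' yb, |δ yb|) + (∑' yb, β yb) + (∑' yb, γ yb) + (∑' yb, ρ yb)) * C' := by
            rw [tsum_mul_right,
              Summable.tsum_add ((hδabs_sum.add hβsum).add hγsum) hρsum,
              Summable.tsum_add (hδabs_sum.add hβsum) hγsum,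
              Summable.tsum_add hδabs_sum hβsum]
        _ ≤ T x := by
            simp only [hTdef]
            rw [hδtsum, hβtsum, hγtsum]
            refine mul_le_mul_of_nonneg_right ?_ hC0
            linarith [hρtsum_le]
  have hGsec : ∀ x, Summable (G x) := fun x => (hsec x).1.of_abs
  have hGprod : Summable fun p : S × (S × Ss) => G p.1 p.2 := by
    refine Summable.of_abs ((summable_prod_of_nonneg (fun p => abs_nonneg _)).mpr
      ⟨fun x => (hsec x).1, ?_⟩)
    exact Summable.of_nonneg_of_le (fun x => tsum_nonneg fun _ => abs_nonneg _)
      (fun x => (hsec x).2) hTsum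
  have houterG : Summable fun x => ∑' yb, G x yb := hGprod.prod
  have houterG2 : Summable fun yb => ∑' x, G x yb := hGprod.prod_symm.prod
  have hcomm : ∑' yb, ∑' x, G x yb = ∑' x, ∑' yb, G x yb := Summable.tsum_comm hGprod
  -- key column identity
  have hK : ∀ yb : S × Ss, ∑' x, G x yb = Ls xs yb.2 * Λ yb.2 yb.1 * F yb := by
    rintro ⟨y, ys⟩
    by_cases hy : 0 < Λ ys y
    swap
    · have h0 : F (y, ys) = 0 := hF0 _ hy
      have hz : ∀ x, G x (y, ys) = 0 := fun x => by simp only [hGdef]; rw [h0, mul_zero]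
      rw [tsum_congr hz, tsum_zero, h0, mul_zero]
    by_cases hysx : ys = xs
    · subst hysx
      have hΛy : Λ ys y ≠ 0 := ne_of_gt hy
      have hform : ∀ x, G x (y, ys) = Λ ys x * L x y * F (y, ys) +
          (if x = y then (Λ ys y * Ls ys ys - Γ ys y) * F (y, ys) else 0) := by
        intro x
        simp only [hGdef]
        by_cases hxy : x = y
        · subst hxy
          rw [if_pos rfl, Lbar_diag]
          field_simp
          ring
        · rw [if_neg hxy, Lbar_move1 L Ls Λ Γ ys (Ne.symm hxy), add_zero]
      rw [tsum_congr hform,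
        Summable.tsum_add ((hdual2 ys y).mul_right _) ((hasSum_ite_eq y _).summable),
        tsum_mul_right, hΓ2, tsum_ite_eq]
      ring
    by_cases hxy0 : 0 < Λ xs y
    · have hform : ∀ x, G x (y, ys) =
          (if x = y then Ls xs ys * Λ ys y * F (y, ys) else 0) := by
        intro x
        simp only [hGdef]
        by_cases hxy : x = y
        · subst hxy
          rw [if_pos rfl, Lbar_move2 L Ls Λ Γ x hysx]
          field_simp
        · rw [if_neg hxy, Lbar_move3 L Ls Λ Γ (Ne.symm hxy) hysx,
            if_neg (fun h => (ne_of_gt hxy0) h.1), mul_zero, zero_mul]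
      rw [tsum_congr hform, tsum_ite_eq]
    · have hΛ0 : Λ xs y = 0 := hΛz _ _ hxy0
      by_cases hΓp : 0 < Γ xs y
      · have hform : ∀ x, G x (y, ys) =
            Λ xs x * L x y * (Ls xs ys * Λ ys y / Γ xs y * F (y, ys)) := by
          intro x
          simp only [hGdef]
          by_cases hxy : x = y
          · subst hxy
            rw [hΛ0, zero_mul, zero_mul, zero_mul, zero_mul]
          · rw [Lbar_move3 L Ls Λ Γ (Ne.symm hxy) hysx, if_pos ⟨hΛ0, hΓp⟩]
            ring
        rw [tsum_congr hform, tsum_mul_right, hΓ2]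
        field_simp
      · have hterm : Ls xs ys * Λ ys y = 0 := by
          have h2 : 0 ≤ Ls xs ys * Λ ys y :=
            mul_nonneg (hLs.nonneg xs ys (Ne.symm hysx)) (hΛnn _ _)
          have h1 : Ls xs ys * Λ ys y ≤ Γ xs y := by
            rw [← hΓ1 xs y]
            refine Summable.le_tsum (hdual1 xs y) ys (fun zs hzs => ?_)
            by_cases hz : zs = xs
            · rw [hz, hΛ0, mul_zero]
            · exact mul_nonneg (hLs.nonneg xs zs (Ne.symm hz)) (hΛnn _ _)
          have h3 : Γ xs y ≤ 0 := not_lt.mp hΓp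
          linarith
        have hform : ∀ x, G x (y, ys) = 0 := by
          intro x
          simp only [hGdef]
          by_cases hxy : x = y
          · rw [hxy, hΛ0, zero_mul, zero_mul]
          · rw [Lbar_move3 L Ls Λ Γ (Ne.symm hxy) hysx, if_neg (fun h => hΓp h.2),
              mul_zero, zero_mul]
        rw [tsum_congr hform, tsum_zero, hterm, zero_mul]
  obtain ⟨R, hRdef⟩ : ∃ R : S × Ss → ℝ, R = fun yb => Ls xs yb.2 * Λ yb.2 yb.1 * F yb := ⟨_, rfl⟩
  have hRsum : Summable R := houterG2.congr fun yb => (hK yb).trans (by rw [hRdef])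
  -- transfers
  have hgoal1 : ∀ x : {x : S // 0 < Λ xs x},
      Summable (fun yb : {yb : S × Ss // 0 < Λ yb.2 yb.1} =>
        Λ xs (x : S) * Lbar L Ls Λ Γ ((x : S), xs) (yb : S × Ss) * f yb) := by
    intro x
    refine ((hGsec x.1).subtype {yb : S × Ss | 0 < Λ yb.2 yb.1}).congr fun yb => ?_
    simp only [Function.comp_apply, hGdef, hFval yb]
  have hinner : ∀ x : S,
      (∑' yb : {yb : S × Ss // 0 < Λ yb.2 yb.1},
        Λ xs x * Lbar L Ls Λ Γ (x, xs) (yb : S × Ss) * f yb) = ∑' yb, G x yb := by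
    intro x
    rw [← tsum_subtype_of_zero (p := fun yb : S × Ss => 0 < Λ yb.2 yb.1) (f := G x)
      (fun yb h => by simp [hGdef, hF0 yb h])]
    exact tsum_congr fun yb => by simp only [hGdef, hFval yb]
  have hgoal2 : Summable (fun x : {x : S // 0 < Λ xs x} =>
      ∑' yb : {yb : S × Ss // 0 < Λ yb.2 yb.1},
        Λ xs (x : S) * Lbar L Ls Λ Γ ((x : S), xs) (yb : S × Ss) * f yb) := by
    refine (houterG.subtype {x : S | 0 < Λ xs x}).congr fun x => ?_
    exact (hinner x.1).symm
  have hgoal3 : Summable (fun yb : {yb : S × Ss // 0 < Λ yb.2 yb.1} =>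
      Ls xs (yb : S × Ss).2 * Λ (yb : S × Ss).2 (yb : S × Ss).1 * f yb) := by
    refine (hRsum.subtype {yb : S × Ss | 0 < Λ yb.2 yb.1}).congr fun yb => ?_
    simp only [Function.comp_apply, hRdef, hFval yb]
  refine ⟨hgoal1, hgoal2, hgoal3, ?_⟩
  calc (∑' x : {x : S // 0 < Λ xs x}, ∑' yb : {yb : S × Ss // 0 < Λ yb.2 yb.1},
        Λ xs (x : S) * Lbar L Ls Λ Γ ((x : S), xs) (yb : S × Ss) * f yb)
      = ∑' x : {x : S // 0 < Λ xs x}, ∑' yb, G x.1 yb := tsum_congr fun x => hinner x.1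
    _ = ∑' x, ∑' yb, G x yb := by
        refine tsum_subtype_of_zero (p := fun x : S => 0 < Λ xs x)
          (f := fun x => ∑' yb, G x yb) (fun x hx => ?_)
        have h0 : Λ xs x = 0 := hΛz _ _ hx
        have : ∀ yb, G x yb = 0 := fun yb => by simp [hGdef, h0]
        simp [this]
    _ = ∑' yb, ∑' x, G x yb := hcomm.symm
    _ = ∑' yb, R yb := tsum_congr fun yb => (hK yb).trans (by rw [hRdef])
    _ = ∑' yb : {yb : S × Ss // 0 < Λ yb.2 yb.1}, R yb.1 :=
        (tsum_subtype_of_zero (p := fun yb : S × Ss => 0 < Λ yb.2 yb.1)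
          (fun yb h => by simp [hRdef, hF0 yb h])).symm
    _ = ∑' yb : {yb : S × Ss // 0 < Λ yb.2 yb.1},
          Ls xs (yb : S × Ss).2 * Λ (yb : S × Ss).2 (yb : S × Ss).1 * f yb :=
        tsum_congr fun yb => by simp only [hRdef, hFval yb]
end

section
/- The transience series for the birth-death chain with death rates ã and birth rates b̃ converges: Σ_{i=0}^∞ Π_{j=1}^i (ã_j/b̃_j) ≤ Σ_{i=0}^∞ Π_{j=1}^i (b_j/a_{j+1}) = Σ_{i=0}^∞ μ(i+1)/μ(1) < ∞. -/
open scoped BigOperators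

/-- `μ(⟦p,q⟧)`, the stationary mass of the (possibly infinite) interval `⟦p,q⟧ ⊆ ℤ`. -/
noncomputable def muI (μ : ℤ → ℝ) (p : WithBot ℤ) (q : WithTop ℤ) : ℝ :=
  ∑' n : {n : ℤ // p ≤ (n : WithBot ℤ) ∧ (n : WithTop ℤ) ≤ q}, μ (n : ℤ)

/-- The death rate `ã_q = (μ(⟦−∞,q−1⟧)/μ(⟦−∞,q⟧))·b_q`. -/
noncomputable def aTilde (μ b : ℤ → ℝ) (q : ℤ) : ℝ :=
  (muI μ ⊥ ((q - 1 : ℤ) : WithTop ℤ) / muI μ ⊥ ((q : ℤ) : WithTop ℤ)) * b q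

/-- The birth rate `b̃_q = (μ(⟦−∞,q+1⟧)/μ(⟦−∞,q⟧))·a_{q+1}`. -/
noncomputable def bTilde (μ a : ℤ → ℝ) (q : ℤ) : ℝ :=
  (muI μ ⊥ ((q + 1 : ℤ) : WithTop ℤ) / muI μ ⊥ ((q : ℤ) : WithTop ℤ)) * a (q + 1)

lemma muI_bot_summable {μ : ℤ → ℝ} (hsum : Summable μ) (m : ℤ) :
    Summable (fun n : {n : ℤ // (⊥ : WithBot ℤ) ≤ (n : WithBot ℤ) ∧
      (n : WithTop ℤ) ≤ ((m : ℤ) : WithTop ℤ)} => μ (n : ℤ)) :=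
  hsum.subtype _

lemma muI_bot_pos {μ : ℤ → ℝ} (hμ : ∀ n, 0 < μ n) (hsum : Summable μ) (m : ℤ) :
    0 < muI μ ⊥ ((m : ℤ) : WithTop ℤ) :=
  Summable.tsum_pos (muI_bot_summable hsum m) (fun i => (hμ i).le) ⟨m, bot_le, le_rfl⟩ (hμ m)

lemma muI_bot_mono {μ : ℤ → ℝ} (hμ : ∀ n, 0 < μ n) (hsum : Summable μ) {m k : ℤ}
    (h : m ≤ k) : muI μ ⊥ ((m : ℤ) : WithTop ℤ) ≤ muI μ ⊥ ((k : ℤ) : WithTop ℤ) := by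
  refine Summable.tsum_le_tsum_of_inj (fun x => ⟨x.1, x.2.1, le_trans x.2.2 (by exact_mod_cast h)⟩)
    (fun x y hxy => Subtype.ext (by simpa using congrArg Subtype.val hxy)) (fun c _ => (hμ c).le)
    (fun x => le_rfl) (muI_bot_summable hsum m) (muI_bot_summable hsum k)

/-- The transience series for the birth-death chain with death rates `ã` and birth rates `b̃`
converges:
`Σ_{i=0}^∞ Π_{j=1}^i (ã_j/b̃_j) ≤ Σ_{i=0}^∞ Π_{j=1}^i (b_j/a_{j+1}) = Σ_{i=0}^∞ μ(i+1)/μ(1) < ∞`. -/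
theorem transience_series_converges (a b μ : ℤ → ℝ)
    (ha : ∀ n, 0 < a n) (hb : ∀ n, 0 < b n) (hμ : ∀ n, 0 < μ n)
    (hsum : Summable μ) (hone : ∑' n, μ n = 1)
    (hdb : ∀ n : ℤ, μ n * b n = μ (n + 1) * a (n + 1)) :
    Summable (fun i : ℕ => ∏ j ∈ Finset.Icc 1 i, (aTilde μ b (j : ℤ) / bTilde μ a (j : ℤ))) ∧
    Summable (fun i : ℕ => ∏ j ∈ Finset.Icc 1 i, (b (j : ℤ) / a ((j : ℤ) + 1))) ∧
    Summable (fun i : ℕ => μ ((i : ℤ) + 1) / μ 1) ∧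
    (∑' i : ℕ, ∏ j ∈ Finset.Icc 1 i, (aTilde μ b (j : ℤ) / bTilde μ a (j : ℤ)))
      ≤ ∑' i : ℕ, ∏ j ∈ Finset.Icc 1 i, (b (j : ℤ) / a ((j : ℤ) + 1)) ∧
    (∑' i : ℕ, ∏ j ∈ Finset.Icc 1 i, (b (j : ℤ) / a ((j : ℤ) + 1)))
      = ∑' i : ℕ, μ ((i : ℤ) + 1) / μ 1 := by
  have key : ∀ j : ℤ, b j / a (j + 1) = μ (j + 1) / μ j := by
    intro j
    rw [div_eq_div_iff (ha (j + 1)).ne' (hμ j).ne']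
    linarith [hdb j]
  have tele : ∀ i : ℕ, ∏ j ∈ Finset.Icc 1 i, (b (j : ℤ) / a ((j : ℤ) + 1))
      = μ ((i : ℤ) + 1) / μ 1 := by
    intro i
    induction i with
    | zero => simp [div_self (hμ 1).ne']
    | succ n ih =>
      rw [Finset.prod_Icc_succ_top (Nat.one_le_iff_ne_zero.mpr (Nat.succ_ne_zero n)), ih, key]
      push_cast
      rw [div_mul_div_comm, mul_comm (μ 1) (μ ((n : ℤ) + 1))]
      exact mul_div_mul_left _ _ (hμ _).ne'
  have hg : Function.Injective (fun i : ℕ => (i : ℤ) + 1) := by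
    intro i j h
    simpa using h
  have hs3 : Summable (fun i : ℕ => μ ((i : ℤ) + 1) / μ 1) :=
    (hsum.comp_injective hg).div_const (μ 1)
  have hs2 : Summable (fun i : ℕ => ∏ j ∈ Finset.Icc 1 i, (b (j : ℤ) / a ((j : ℤ) + 1))) :=
    (summable_congr tele).mpr hs3
  have hratio_nonneg : ∀ j : ℤ, 0 ≤ aTilde μ b j / bTilde μ a j := by
    intro j
    have hA := muI_bot_pos hμ hsum (j - 1)
    have hB := muI_bot_pos hμ hsum j
    have hC := muI_bot_pos hμ hsum (j + 1)
    unfold aTilde bTilde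
    exact div_nonneg (mul_nonneg (div_nonneg hA.le hB.le) (hb j).le)
      (mul_nonneg (div_nonneg hC.le hB.le) (ha (j + 1)).le)
  have hratio : ∀ j : ℤ, aTilde μ b j / bTilde μ a j ≤ b j / a (j + 1) := by
    intro j
    have hA := muI_bot_pos hμ hsum (j - 1)
    have hB := muI_bot_pos hμ hsum j
    have hC := muI_bot_pos hμ hsum (j + 1)
    have hAC : muI μ ⊥ ((j - 1 : ℤ) : WithTop ℤ) ≤ muI μ ⊥ ((j + 1 : ℤ) : WithTop ℤ) :=
      muI_bot_mono hμ hsum (by omega)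
    have heq : aTilde μ b j / bTilde μ a j
        = (muI μ ⊥ ((j - 1 : ℤ) : WithTop ℤ) / muI μ ⊥ ((j + 1 : ℤ) : WithTop ℤ))
          * (b j / a (j + 1)) := by
      unfold aTilde bTilde
      field_simp
    rw [heq]
    calc (muI μ ⊥ ((j - 1 : ℤ) : WithTop ℤ) / muI μ ⊥ ((j + 1 : ℤ) : WithTop ℤ))
          * (b j / a (j + 1))
        ≤ 1 * (b j / a (j + 1)) := by
          apply mul_le_mul_of_nonneg_right
          · rw [div_le_one hC]; exact hAC
          · exact div_nonneg (hb j).le (ha (j + 1)).le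
      _ = b j / a (j + 1) := one_mul _
  have hprod_nonneg : ∀ i : ℕ,
      0 ≤ ∏ j ∈ Finset.Icc 1 i, (aTilde μ b (j : ℤ) / bTilde μ a (j : ℤ)) :=
    fun i => Finset.prod_nonneg fun j _ => hratio_nonneg _
  have hprod_le : ∀ i : ℕ,
      ∏ j ∈ Finset.Icc 1 i, (aTilde μ b (j : ℤ) / bTilde μ a (j : ℤ))
        ≤ ∏ j ∈ Finset.Icc 1 i, (b (j : ℤ) / a ((j : ℤ) + 1)) :=
    fun i => Finset.prod_le_prod (fun j _ => hratio_nonneg _) (fun j _ => hratio _)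
  have hs1 : Summable (fun i : ℕ =>
      ∏ j ∈ Finset.Icc 1 i, (aTilde μ b (j : ℤ) / bTilde μ a (j : ℤ))) :=
    Summable.of_nonneg_of_le hprod_nonneg hprod_le hs2
  exact ⟨hs1, hs2, hs3, Summable.tsum_le_tsum hprod_le hs1 hs2, tsum_congr tele⟩
end

section
/- The explosion-criterion series for the birth-death chain with death rates ã and birth rates b̃ converges if and only if the stationary-measure condition holds; that is, Σ_{i=1}^∞ [Π_{j=1}^i (ã_j/b̃_j)]·[Σ_{k=1}^i Π_{l=1}^k (b̃_{l−1}/ã_l)] < ∞ if and only if Σ_{i=1}^∞ μ(i+1)·Σ_{j=1}^i 1/(μ(j)·b_j) < ∞. -/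
open scoped BigOperators

/-- The explosion-criterion series for the birth-death chain with death rates `ã` and birth
rates `b̃` converges if and only if the stationary-measure condition holds:
`Σ_{i=1}^∞ [Π_{j=1}^i (ã_j/b̃_j)]·[Σ_{k=1}^i Π_{l=1}^k (b̃_{l−1}/ã_l)] < ∞`
iff `Σ_{i=1}^∞ μ(i+1)·Σ_{j=1}^i 1/(μ(j)·b_j) < ∞`. -/
theorem explosion_criterion_iff (a b μ : ℤ → ℝ)
    (ha : ∀ n, 0 < a n) (hb : ∀ n, 0 < b n) (hμ : ∀ n, 0 < μ n)
    (hsum : Summable μ) (hone : ∑' n, μ n = 1)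
    (hdb : ∀ n : ℤ, μ n * b n = μ (n + 1) * a (n + 1)) :
    Summable (fun i : ℕ =>
        (∏ j ∈ Finset.Icc 1 (i + 1), (aTilde μ b (j : ℤ) / bTilde μ a (j : ℤ))) *
          (∑ k ∈ Finset.Icc 1 (i + 1),
            ∏ l ∈ Finset.Icc 1 k, (bTilde μ a ((l : ℤ) - 1) / aTilde μ b (l : ℤ)))) ↔
    Summable (fun i : ℕ =>
        μ ((i : ℤ) + 2) * ∑ j ∈ Finset.Icc 1 (i + 1), 1 / (μ (j : ℤ) * b (j : ℤ))) := by
  classical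
  obtain ⟨F, hFdef⟩ : ∃ F : ℤ → ℝ, ∀ q : ℤ, F q = ∑' n : {n : ℤ // n ≤ q}, μ n :=
    ⟨_, fun _ => rfl⟩
  have hFeq : ∀ q : ℤ, muI μ ⊥ ((q : ℤ) : WithTop ℤ) = F q := by
    intro q
    rw [hFdef]
    unfold muI
    exact (Equiv.subtypeEquivRight (fun n => by simp)).tsum_eq
      (fun n : {n : ℤ // n ≤ q} => μ n)
  have hFsummable : ∀ q : ℤ, Summable (fun n : {n : ℤ // n ≤ q} => μ n) :=
    fun q => hsum.subtype _
  have hFpos : ∀ q : ℤ, 0 < F q := by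
    intro q
    rw [hFdef]
    exact lt_of_lt_of_le (hμ q)
      (Summable.le_tsum (hFsummable q) ⟨q, le_refl q⟩ (fun j _ => (hμ j).le))
  have hFle1 : ∀ q : ℤ, F q ≤ 1 := by
    intro q
    rw [hFdef, ← hone]
    exact Summable.tsum_le_tsum_of_inj Subtype.val Subtype.val_injective (fun c _ => (hμ c).le)
      (fun _ => le_rfl) (hFsummable q) hsum
  have hFmono : ∀ {q r : ℤ}, q ≤ r → F q ≤ F r := by
    intro q r h
    rw [hFdef, hFdef]
    exact Summable.tsum_le_tsum_of_inj (fun n => ⟨n.1, n.2.trans h⟩)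
      (fun x y hxy => Subtype.ext (by simpa using congrArg Subtype.val hxy))
      (fun c _ => (hμ c).le) (fun _ => le_rfl) (hFsummable q) (hFsummable r)
  have hA : ∀ q : ℤ, aTilde μ b q = F (q - 1) / F q * b q := by
    intro q; unfold aTilde; rw [hFeq, hFeq]
  have hB : ∀ q : ℤ, bTilde μ a q = F (q + 1) / F q * a (q + 1) := by
    intro q; unfold bTilde; rw [hFeq, hFeq]
  -- single-term closed forms
  have hr1 : ∀ j : ℤ, aTilde μ b (j + 1) / bTilde μ a (j + 1)
      = F j * μ (j + 2) / (F (j + 2) * μ (j + 1)) := by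
    intro j
    rw [hA, hB]
    have e1 : (j + 1 - 1 : ℤ) = j := by ring
    have e2 : (j + 1 + 1 : ℤ) = j + 2 := by ring
    rw [e1, e2]
    have hbj : b (j + 1) = μ (j + 2) * a (j + 2) / μ (j + 1) := by
      rw [eq_div_iff (hμ (j + 1)).ne']
      have := hdb (j + 1); rw [e2] at this; linarith [this]
    rw [hbj]
    have n1 := (hFpos j).ne'
    have n2 := (hFpos (j + 1)).ne'
    have n3 := (hFpos (j + 2)).ne'
    have n4 := (hμ (j + 1)).ne'
    have n5 := (hμ (j + 2)).ne'
    have n6 := (ha (j + 2)).ne'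
    field_simp
  have hr2 : ∀ l : ℤ, bTilde μ a (l + 1 - 1) / aTilde μ b (l + 1)
      = F (l + 1) ^ 2 * (μ l * b l) / (F l ^ 2 * (μ (l + 1) * b (l + 1))) := by
    intro l
    have e1 : (l + 1 - 1 : ℤ) = l := by ring
    rw [e1, hA, hB, e1]
    have hal : a (l + 1) = μ l * b l / μ (l + 1) := by
      rw [eq_div_iff (hμ (l + 1)).ne']
      linarith [hdb l]
    rw [hal]
    have n1 := (hFpos l).ne'
    have n2 := (hFpos (l + 1)).ne'
    have n4 := (hμ l).ne'
    have n5 := (hμ (l + 1)).ne'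
    have n6 := (hb l).ne'
    have n7 := (hb (l + 1)).ne'
    field_simp
  -- telescoped products
  have hP : ∀ m : ℕ, (∏ j ∈ Finset.Icc 1 (m + 1), (aTilde μ b (j : ℤ) / bTilde μ a (j : ℤ)))
      = F 0 * F 1 * μ ((m : ℤ) + 2) / (F ((m : ℤ) + 1) * F ((m : ℤ) + 2) * μ 1) := by
    intro m
    induction m with
    | zero =>
      rw [show (0 + 1 : ℕ) = 1 from rfl]
      rw [Finset.Icc_self, Finset.prod_singleton]
      have h01 := hr1 0
      norm_num at h01 ⊢
      rw [h01]
      have n1 := (hFpos 1).ne'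
      have n2 := (hFpos 2).ne'
      have n3 := (hμ 1).ne'
      rw [div_eq_div_iff (by positivity) (by positivity)]
      ring
    | succ m ih =>
      rw [Finset.prod_Icc_succ_top (by omega : 1 ≤ m + 1 + 1), ih]
      push_cast
      rw [hr1 ((m : ℤ) + 1)]
      rw [show ((m : ℤ) + 1 + 2) = (m : ℤ) + 3 by ring, show ((m : ℤ) + 1 + 1) = (m : ℤ) + 2 by ring]
      have h1 := (hFpos ((m : ℤ) + 1)).ne'
      have h2 := (hFpos ((m : ℤ) + 2)).ne'
      have h3 := (hFpos ((m : ℤ) + 3)).ne'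
      have h4 := (hμ 1).ne'
      have h5 := (hμ ((m : ℤ) + 2)).ne'
      field_simp
  have hQ : ∀ m : ℕ, (∏ l ∈ Finset.Icc 1 m, (bTilde μ a ((l : ℤ) - 1) / aTilde μ b (l : ℤ)))
      = F (m : ℤ) ^ 2 * (μ 0 * b 0) / (F 0 ^ 2 * (μ (m : ℤ) * b (m : ℤ))) := by
    intro m
    induction m with
    | zero =>
      rw [show Finset.Icc 1 0 = (∅ : Finset ℕ) by rfl, Finset.prod_empty]
      norm_num
      have n1 := (hFpos 0).ne'
      have n4 := (hμ 0).ne'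
      have n6 := (hb 0).ne'
      field_simp
    | succ m ih =>
      rw [Finset.prod_Icc_succ_top (by omega : 1 ≤ m + 1), ih]
      push_cast
      rw [hr2 (m : ℤ)]
      have h1 := (hFpos ((m : ℤ))).ne'
      have h2 := (hFpos ((m : ℤ) + 1)).ne'
      have h3 := (hFpos 0).ne'
      have h4 := (hμ (m : ℤ)).ne'
      have h5 := (hμ ((m : ℤ) + 1)).ne'
      have h6 := (hb (m : ℤ)).ne'
      have h7 := (hb ((m : ℤ) + 1)).ne'
      field_simp
  -- abbreviations (stated explicitly)
  have hSnonneg : ∀ i : ℕ, (0:ℝ) ≤ ∑ k ∈ Finset.Icc 1 (i + 1), F (k:ℤ) ^ 2 / (μ (k:ℤ) * b (k:ℤ)) := by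
    intro i
    refine Finset.sum_nonneg fun k _ => ?_
    have := hFpos (k:ℤ); have := hμ (k:ℤ); have := hb (k:ℤ); positivity
  have hTnonneg : ∀ i : ℕ, (0:ℝ) ≤ ∑ j ∈ Finset.Icc 1 (i + 1), 1 / (μ (j:ℤ) * b (j:ℤ)) := by
    intro i
    refine Finset.sum_nonneg fun k _ => ?_
    have := hμ (k:ℤ); have := hb (k:ℤ); positivity
  -- the closed form of the explosion series term
  have hterm : ∀ i : ℕ,
      (∏ j ∈ Finset.Icc 1 (i + 1), (aTilde μ b (j : ℤ) / bTilde μ a (j : ℤ))) *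
          (∑ k ∈ Finset.Icc 1 (i + 1),
            ∏ l ∈ Finset.Icc 1 k, (bTilde μ a ((l : ℤ) - 1) / aTilde μ b (l : ℤ)))
        = (F 1 * (μ 0 * b 0) / (F 0 * μ 1)) *
            (μ ((i:ℤ) + 2) / (F ((i:ℤ) + 1) * F ((i:ℤ) + 2)) *
              ∑ k ∈ Finset.Icc 1 (i + 1), F (k:ℤ) ^ 2 / (μ (k:ℤ) * b (k:ℤ))) := by
    intro i
    rw [hP i]
    rw [Finset.sum_congr rfl (fun k _ => hQ k)]
    have hs2 : (∑ k ∈ Finset.Icc 1 (i + 1),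
        F (k:ℤ) ^ 2 * (μ 0 * b 0) / (F 0 ^ 2 * (μ (k:ℤ) * b (k:ℤ))))
        = (μ 0 * b 0 / F 0 ^ 2) * ∑ k ∈ Finset.Icc 1 (i + 1), F (k:ℤ) ^ 2 / (μ (k:ℤ) * b (k:ℤ)) := by
      rw [Finset.mul_sum]
      exact Finset.sum_congr rfl fun k _ => by ring
    rw [hs2]
    have n1 := (hFpos 0).ne'
    have n2 := (hFpos ((i:ℤ) + 1)).ne'
    have n3 := (hFpos ((i:ℤ) + 2)).ne'
    have n4 := (hμ 1).ne'
    field_simp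
  have hDpos : (0:ℝ) < F 1 * (μ 0 * b 0) / (F 0 * μ 1) := by
    have := hFpos 0; have := hFpos 1; have := hμ 0; have := hμ 1; have := hb 0; positivity
  have hF1pos := hFpos 1
  have hFF1 : ∀ i : ℕ, F 1 ^ 2 ≤ F ((i:ℤ) + 1) * F ((i:ℤ) + 2) := by
    intro i
    have h1 : F 1 ≤ F ((i:ℤ) + 1) := hFmono (by omega)
    have h2 : F 1 ≤ F ((i:ℤ) + 2) := hFmono (by omega)
    nlinarith [hFpos 1]
  have hFF2 : ∀ i : ℕ, F ((i:ℤ) + 1) * F ((i:ℤ) + 2) ≤ 1 := by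
    intro i
    nlinarith [hFle1 ((i:ℤ) + 1), hFle1 ((i:ℤ) + 2), hFpos ((i:ℤ) + 1), hFpos ((i:ℤ) + 2)]
  -- comparison between the two inner sums
  have hST : ∀ i : ℕ, (∑ k ∈ Finset.Icc 1 (i + 1), F (k:ℤ) ^ 2 / (μ (k:ℤ) * b (k:ℤ)))
      ≤ ∑ j ∈ Finset.Icc 1 (i + 1), 1 / (μ (j:ℤ) * b (j:ℤ)) := by
    intro i
    refine Finset.sum_le_sum fun k _ => ?_
    have h2 : (0:ℝ) < μ (k:ℤ) * b (k:ℤ) := mul_pos (hμ _) (hb _)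
    have h1 : F (k:ℤ) ^ 2 ≤ 1 := by nlinarith [hFle1 (k:ℤ), hFpos (k:ℤ)]
    gcongr
  have hTS : ∀ i : ℕ, (∑ j ∈ Finset.Icc 1 (i + 1), 1 / (μ (j:ℤ) * b (j:ℤ)))
      ≤ (1 / F 1 ^ 2) * ∑ k ∈ Finset.Icc 1 (i + 1), F (k:ℤ) ^ 2 / (μ (k:ℤ) * b (k:ℤ)) := by
    intro i
    rw [Finset.mul_sum]
    refine Finset.sum_le_sum fun k hk => ?_
    have hk1 : (1:ℤ) ≤ (k:ℤ) := by exact_mod_cast (Finset.mem_Icc.mp hk).1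
    have hFk : F 1 ≤ F (k:ℤ) := hFmono hk1
    have h2 : (0:ℝ) < μ (k:ℤ) * b (k:ℤ) := mul_pos (hμ _) (hb _)
    have h3 : F 1 ^ 2 ≤ F (k:ℤ) ^ 2 := by nlinarith
    have h4 : (1:ℝ) ≤ F (k:ℤ) ^ 2 / F 1 ^ 2 := (one_le_div (by positivity)).mpr h3
    calc 1 / (μ (k:ℤ) * b (k:ℤ)) ≤ (F (k:ℤ) ^ 2 / F 1 ^ 2) * (1 / (μ (k:ℤ) * b (k:ℤ))) :=
          le_mul_of_one_le_left (by positivity) h4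
      _ = 1 / F 1 ^ 2 * (F (k:ℤ) ^ 2 / (μ (k:ℤ) * b (k:ℤ))) := by ring
  -- pointwise two-sided comparison
  have hle1 : ∀ i : ℕ,
      (μ ((i:ℤ) + 2) / (F ((i:ℤ) + 1) * F ((i:ℤ) + 2)) *
          ∑ k ∈ Finset.Icc 1 (i + 1), F (k:ℤ) ^ 2 / (μ (k:ℤ) * b (k:ℤ)))
        ≤ (1 / F 1 ^ 2) *
            (μ ((i:ℤ) + 2) * ∑ j ∈ Finset.Icc 1 (i + 1), 1 / (μ (j:ℤ) * b (j:ℤ))) := by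
    intro i
    have hμi := hμ ((i:ℤ) + 2)
    have hFFpos : (0:ℝ) < F ((i:ℤ) + 1) * F ((i:ℤ) + 2) :=
      mul_pos (hFpos _) (hFpos _)
    have hd : μ ((i:ℤ) + 2) / (F ((i:ℤ) + 1) * F ((i:ℤ) + 2)) ≤ μ ((i:ℤ) + 2) / F 1 ^ 2 := by
      gcongr <;> first | positivity | exact hFF1 i
    calc μ ((i:ℤ) + 2) / (F ((i:ℤ) + 1) * F ((i:ℤ) + 2)) *
            ∑ k ∈ Finset.Icc 1 (i + 1), F (k:ℤ) ^ 2 / (μ (k:ℤ) * b (k:ℤ))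
        ≤ μ ((i:ℤ) + 2) / F 1 ^ 2 * ∑ j ∈ Finset.Icc 1 (i + 1), 1 / (μ (j:ℤ) * b (j:ℤ)) :=
          mul_le_mul hd (hST i) (hSnonneg i) (by positivity)
      _ = (1 / F 1 ^ 2) *
            (μ ((i:ℤ) + 2) * ∑ j ∈ Finset.Icc 1 (i + 1), 1 / (μ (j:ℤ) * b (j:ℤ))) := by ring
  have hle2 : ∀ i : ℕ,
      (μ ((i:ℤ) + 2) * ∑ j ∈ Finset.Icc 1 (i + 1), 1 / (μ (j:ℤ) * b (j:ℤ)))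
        ≤ (1 / F 1 ^ 2) *
            (μ ((i:ℤ) + 2) / (F ((i:ℤ) + 1) * F ((i:ℤ) + 2)) *
              ∑ k ∈ Finset.Icc 1 (i + 1), F (k:ℤ) ^ 2 / (μ (k:ℤ) * b (k:ℤ))) := by
    intro i
    have hμi := hμ ((i:ℤ) + 2)
    have hFFpos : (0:ℝ) < F ((i:ℤ) + 1) * F ((i:ℤ) + 2) :=
      mul_pos (hFpos _) (hFpos _)
    have hd : μ ((i:ℤ) + 2) ≤ μ ((i:ℤ) + 2) / (F ((i:ℤ) + 1) * F ((i:ℤ) + 2)) := by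
      rw [le_div_iff₀ hFFpos]
      nlinarith [hFF2 i]
    calc μ ((i:ℤ) + 2) * ∑ j ∈ Finset.Icc 1 (i + 1), 1 / (μ (j:ℤ) * b (j:ℤ))
        ≤ (μ ((i:ℤ) + 2) / (F ((i:ℤ) + 1) * F ((i:ℤ) + 2))) *
            ((1 / F 1 ^ 2) * ∑ k ∈ Finset.Icc 1 (i + 1), F (k:ℤ) ^ 2 / (μ (k:ℤ) * b (k:ℤ))) :=
          mul_le_mul hd (hTS i) (hTnonneg i) (by positivity)
      _ = (1 / F 1 ^ 2) *
            (μ ((i:ℤ) + 2) / (F ((i:ℤ) + 1) * F ((i:ℤ) + 2)) *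
              ∑ k ∈ Finset.Icc 1 (i + 1), F (k:ℤ) ^ 2 / (μ (k:ℤ) * b (k:ℤ))) := by ring
  constructor
  · intro h
    have h1 : Summable (fun i : ℕ => (F 1 * (μ 0 * b 0) / (F 0 * μ 1)) *
        (μ ((i:ℤ) + 2) / (F ((i:ℤ) + 1) * F ((i:ℤ) + 2)) *
          ∑ k ∈ Finset.Icc 1 (i + 1), F (k:ℤ) ^ 2 / (μ (k:ℤ) * b (k:ℤ)))) :=
      h.congr hterm
    have h2 : Summable (fun i : ℕ =>
        μ ((i:ℤ) + 2) / (F ((i:ℤ) + 1) * F ((i:ℤ) + 2)) *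
          ∑ k ∈ Finset.Icc 1 (i + 1), F (k:ℤ) ^ 2 / (μ (k:ℤ) * b (k:ℤ))) :=
      (summable_mul_left_iff hDpos.ne').mp h1
    refine Summable.of_nonneg_of_le (fun i => ?_) hle2 (h2.mul_left (1 / F 1 ^ 2))
    exact mul_nonneg (hμ _).le (hTnonneg i)
  · intro h
    have h2 : Summable (fun i : ℕ =>
        μ ((i:ℤ) + 2) / (F ((i:ℤ) + 1) * F ((i:ℤ) + 2)) *
          ∑ k ∈ Finset.Icc 1 (i + 1), F (k:ℤ) ^ 2 / (μ (k:ℤ) * b (k:ℤ))) := by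
      refine Summable.of_nonneg_of_le (fun i => ?_) hle1 (h.mul_left (1 / F 1 ^ 2))
      have := hμ ((i:ℤ) + 2)
      have hFFpos : (0:ℝ) < F ((i:ℤ) + 1) * F ((i:ℤ) + 2) := mul_pos (hFpos _) (hFpos _)
      exact mul_nonneg (by positivity) (hSnonneg i)
    have h1 : Summable (fun i : ℕ => (F 1 * (μ 0 * b 0) / (F 0 * μ 1)) *
        (μ ((i:ℤ) + 2) / (F ((i:ℤ) + 1) * F ((i:ℤ) + 2)) *
          ∑ k ∈ Finset.Icc 1 (i + 1), F (k:ℤ) ^ 2 / (μ (k:ℤ) * b (k:ℤ)))) :=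
      h2.mul_left _
    exact h1.congr (fun i => (hterm i).symm)
end

section
/- Let Q ⊆ G be nonempty and connected with finite inner boundary, i.e. {p ∈ Q : L(p,q) > 0 for some q ∉ Q} is finite. Then the family (L*(Q,Q'))_{Q'≠Q}, Q' ranging over nonempty connected subsets of G, has only finitely many nonzero terms, and for every p ∈ G: Σ_{Q'} L*(Q,Q')·Λ(Q',p) = Σ_{q∈G} Λ(Q,q)·L(q,p), where the left sum runs over all nonempty connected subsets Q' of G (including Q' = Q) and the right-hand family is summable. In other words, L*Λ = ΛL. -/
open scoped BigOperators

attribute [local instance] Classical.propDecidable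

/-- `μ(Q)`, the stationary mass of a subset `Q ⊆ G`. -/
noncomputable def muSet {G : Type*} (μ : G → ℝ) (Q : Set G) : ℝ :=
  ∑' p : Q, μ (p : G)

/-- The kernel `Λ(Q,p) = 1_{p∈Q}·μ(p)/μ(Q)`. -/
noncomputable def lamSet {G : Type*} (μ : G → ℝ) (Q : Set G) (p : G) : ℝ :=
  if p ∈ Q then μ p / muSet μ Q else 0

/-- `B` is a connected component of `A` (for the graph induced on `A`): `B ⊆ A`, `B` is
connected, and `B` is maximal among connected subsets of `A`. -/
def IsCompOf {G : Type*} (Gr : SimpleGraph G) (A B : Set G) : Prop :=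
  B ⊆ A ∧ (Gr.induce B).Connected ∧
    ∀ C : Set G, B ⊆ C → C ⊆ A → (Gr.induce C).Connected → C = B

/-- The off-diagonal dual rates `L*(Q,Q')` for `Q' ≠ Q`:
`L*(Q,Q∪{p}) = (μ(Q∪{p})/μ(Q))·Σ_{q∈Q} L(p,q)` for `p ∉ Q`;
`L*(Q,Q') = (μ(Q')/μ(Q))·Σ_{q∉Q} L(p,q)` for `p ∈ Q` and `Q' ∈ 𝒞(Q∖{p})`;
`L*(Q,Q') = 0` otherwise. -/
noncomputable def dualOff {G : Type*} (L : G → G → ℝ) (μ : G → ℝ) (Gr : SimpleGraph G)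
    (Q Q' : Set G) : ℝ :=
  if h : ∃ p, p ∉ Q ∧ Q' = Q ∪ {p} then
    (muSet μ Q' / muSet μ Q) * ∑' q : Q, L h.choose (q : G)
  else if h2 : ∃ p, p ∈ Q ∧ IsCompOf Gr (Q \ {p}) Q' then
    (muSet μ Q' / muSet μ Q) * ∑' q : {q : G // q ∉ Q}, L h2.choose (q : G)
  else 0

/-- The dual generator `L*` on nonempty connected subsets of `G`, with diagonal
`L*(Q,Q) = −Σ_{Q'≠Q} L*(Q,Q')`. -/
noncomputable def dualGen {G : Type*} (L : G → G → ℝ) (μ : G → ℝ) (Gr : SimpleGraph G)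
    (Q Q' : Set G) : ℝ :=
  if Q' = Q then
    -∑' R : {R : Set G // R.Nonempty ∧ (Gr.induce R).Connected ∧ R ≠ Q},
      dualOff L μ Gr Q (R : Set G)
  else dualOff L μ Gr Q Q'


namespace DGAux
variable {G : Type*} {μ : G → ℝ} {L : G → G → ℝ} {Gr : SimpleGraph G}

variable (Gr) in


def chainIn (A : Set G) (x y : G) : Prop :=
  Relation.ReflTransGen (fun a b => a ∈ A ∧ b ∈ A ∧ Gr.Adj a b) x y


lemma chainIn_symm {A : Set G} {x y} (h : chainIn Gr A x y) : chainIn Gr A y x :=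
  (@Relation.ReflTransGen.stdSymm _ _ ⟨fun _ _ h => ⟨h.2.1, h.1, h.2.2.symm⟩⟩).symm _ _ h

lemma chainIn_mono {A B : Set G} (hAB : A ⊆ B) {x y} (h : chainIn Gr A x y) :
    chainIn Gr B x y :=
  Relation.ReflTransGen.mono (fun _ _ h => ⟨hAB h.1, hAB h.2.1, h.2.2⟩) _ _ h

lemma chainIn_mem_right {A : Set G} {x y} (hx : x ∈ A) (h : chainIn Gr A x y) : y ∈ A := by
  induction h with
  | refl => exact hx
  | tail _ h _ => exact h.2.1

lemma walk_chain {B : Set G} {u v : ↑B} (w : (Gr.induce B).Walk u v) :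
    chainIn Gr B u v := by
  induction w with
  | nil => exact Relation.ReflTransGen.refl
  | cons h _ ih =>
      exact Relation.ReflTransGen.head ⟨Subtype.coe_prop _, Subtype.coe_prop _, h⟩ ih

lemma connected_induce_iff {B : Set G} :
    (Gr.induce B).Connected ↔ B.Nonempty ∧ ∀ x ∈ B, ∀ y ∈ B, chainIn Gr B x y := by
  constructor
  · intro h
    have hne : B.Nonempty := by
      obtain ⟨⟨x, hx⟩⟩ := h.nonempty
      exact ⟨x, hx⟩
    refine ⟨hne, fun x hx y hy => ?_⟩
    obtain ⟨w⟩ := h.preconnected ⟨x, hx⟩ ⟨y, hy⟩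
    exact walk_chain w
  · rintro ⟨⟨x₀, hx₀⟩, h⟩
    have key : ∀ x y, chainIn Gr B x y → ∀ (hx : x ∈ B) (hy : y ∈ B),
        (Gr.induce B).Reachable ⟨x, hx⟩ ⟨y, hy⟩ := by
      intro x y hchain
      induction hchain with
      | refl => intro _ _; rfl
      | tail _ hstep ih =>
          intro hx hy
          exact (ih hx hstep.1).trans (SimpleGraph.Adj.reachable (by exact hstep.2.2))
    have : Nonempty ↑B := ⟨⟨x₀, hx₀⟩⟩
    exact SimpleGraph.Connected.mk fun ⟨x, hx⟩ ⟨y, hy⟩ => key x y (h x hx y hy) hx hy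

variable (Gr) in
def compOf (A : Set G) (p : G) : Set G := {x | x ∈ A ∧ chainIn Gr A p x}

lemma mem_compOf_self {A : Set G} {p : G} (hp : p ∈ A) : p ∈ compOf Gr A p :=
  ⟨hp, Relation.ReflTransGen.refl⟩

lemma compOf_subset {A : Set G} {p : G} : compOf Gr A p ⊆ A := fun _ h => h.1

lemma chainIn_compOf {A : Set G} {p x : G} (hp : p ∈ A) (h : chainIn Gr A p x) :
    chainIn Gr (compOf Gr A p) p x := by
  induction h with
  | refl => exact Relation.ReflTransGen.refl
  | @tail b c hpb hstep ih =>
      exact Relation.ReflTransGen.tail ih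
        ⟨⟨hstep.1, hpb⟩, ⟨hstep.2.1, hpb.tail hstep⟩, hstep.2.2⟩

lemma compOf_isCompOf {A : Set G} {p : G} (hp : p ∈ A) : IsCompOf Gr A (compOf Gr A p) := by
  refine ⟨compOf_subset, ?_, ?_⟩
  · rw [connected_induce_iff]
    refine ⟨⟨p, mem_compOf_self hp⟩, fun x hx y hy => ?_⟩
    exact (chainIn_symm (chainIn_compOf hp hx.2)).trans (chainIn_compOf hp hy.2)
  · intro C hBC hCA hC
    rw [connected_induce_iff] at hC
    refine Set.Subset.antisymm (fun x hx => ?_) hBC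
    exact ⟨hCA hx, chainIn_mono hCA (hC.2 p (hBC (mem_compOf_self hp)) x hx)⟩

/-- any component containing p is `compOf A p`. -/
lemma isCompOf_eq_compOf {A B : Set G} {p : G} (hB : IsCompOf Gr A B) (hp : p ∈ B) :
    B = compOf Gr A p := by
  obtain ⟨hBA, hBconn, hBmax⟩ := hB
  rw [connected_induce_iff] at hBconn
  have hsub : B ⊆ compOf Gr A p := fun x hx =>
    ⟨hBA hx, chainIn_mono hBA (hBconn.2 p hp x hx)⟩
  exact (hBmax (compOf Gr A p) hsub compOf_subset
    (compOf_isCompOf (hBA hp)).2.1).symm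

lemma isCompOf_nonempty {A B : Set G} (hB : IsCompOf Gr A B) : B.Nonempty :=
  (connected_induce_iff.mp hB.2.1).1

/-- extending a connected set by an adjacent vertex. -/
lemma connected_insert {B : Set G} {b y : G} (hB : (Gr.induce B).Connected)
    (hb : b ∈ B) (hadj : Gr.Adj b y) : (Gr.induce (insert y B)).Connected := by
  rw [connected_induce_iff] at hB ⊢
  have hchain : ∀ x ∈ B, chainIn Gr (insert y B) x y := fun x hx =>
    Relation.ReflTransGen.tail
      (chainIn_mono (Set.subset_insert y B) (hB.2 x hx b hb))
      ⟨Set.mem_insert_of_mem _ hb, Set.mem_insert _ _, hadj⟩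
  refine ⟨⟨b, Set.mem_insert_of_mem _ hb⟩, fun x hx z hz => ?_⟩
  rcases Set.mem_insert_iff.mp hx with hxy | hx
  · rw [hxy]
    rcases Set.mem_insert_iff.mp hz with hzy | hz
    · rw [hzy]; exact Relation.ReflTransGen.refl
    · exact chainIn_symm (hchain z hz)
  · rcases Set.mem_insert_iff.mp hz with hzy | hz
    · rw [hzy]; exact hchain x hx
    · exact chainIn_mono (Set.subset_insert y B) (hB.2 x hx z hz)

/-- A component of `Q \ {q}` (Q connected) can only touch `q` outside itself. -/
lemma comp_exit_eq {Q B : Set G} {q : G} (hq : q ∈ Q)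
    (hB : IsCompOf Gr (Q \ {q}) B) {b y : G} (hb : b ∈ B) (hy : y ∈ Q) (hyB : y ∉ B)
    (hadj : Gr.Adj b y) : y = q := by
  by_contra hne
  have hyA : y ∈ Q \ {q} := ⟨hy, hne⟩
  have : insert y B = B :=
    hB.2.2 (insert y B) (Set.subset_insert _ _)
      (Set.insert_subset_iff.mpr ⟨hyA, hB.1⟩)
      (connected_insert hB.2.1 hb hadj)
  exact hyB (this ▸ Set.mem_insert y B)

/-- Every component of `Q \ {q}` has a vertex adjacent to `q`. -/
lemma comp_adj_exists {Q B : Set G} {q : G} (hQconn : (Gr.induce Q).Connected) (hq : q ∈ Q)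
    (hB : IsCompOf Gr (Q \ {q}) B) : ∃ b ∈ B, Gr.Adj b q := by
  obtain ⟨b₀, hb₀⟩ := isCompOf_nonempty hB
  have hb₀Q : b₀ ∈ Q := (hB.1 hb₀).1
  have key : ∀ y, chainIn Gr Q b₀ y → (y ∈ B ∨ ∃ b ∈ B, Gr.Adj b q) := by
    intro y hchain
    induction hchain with
    | refl => exact Or.inl hb₀
    | @tail c d hbc hstep ih =>
        rcases ih with hcB | hdone
        · by_cases hdB : d ∈ B
          · exact Or.inl hdB
          · have hdq := comp_exit_eq hq hB hcB hstep.2.1 hdB hstep.2.2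
            exact Or.inr ⟨c, hcB, hdq ▸ hstep.2.2⟩
        · exact Or.inr hdone
  rcases key q ((connected_induce_iff.mp hQconn).2 b₀ hb₀Q q hq) with hqB | h
  · exact absurd (hB.1 hqB).2 (by simp)
  · exact h

lemma cut_vertex_unique {Q B : Set G} {q q' : G} (hQconn : (Gr.induce Q).Connected)
    (hq : q ∈ Q) (hq' : q' ∈ Q) (hB : IsCompOf Gr (Q \ {q}) B)
    (hB' : IsCompOf Gr (Q \ {q'}) B) : q = q' := by
  obtain ⟨b, hbB, hadj⟩ := comp_adj_exists hQconn hq hB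
  have hqB : q ∉ B := fun h => (hB.1 h).2 rfl
  exact comp_exit_eq hq' hB' hbB hq hqB hadj

lemma comps_finite (hnbr : ∀ v : G, {w | Gr.Adj v w}.Finite) {Q : Set G} {q : G}
    (hQconn : (Gr.induce Q).Connected) (hq : q ∈ Q) :
    {B : Set G | IsCompOf Gr (Q \ {q}) B}.Finite := by
  classical
  set f : Set G → G := fun B => if h : ∃ b, b ∈ B ∧ Gr.Adj b q then h.choose else q with hf
  have hfspec : ∀ B ∈ {B : Set G | IsCompOf Gr (Q \ {q}) B}, f B ∈ B ∧ Gr.Adj (f B) q := by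
    intro B hB
    have hex : ∃ b, b ∈ B ∧ Gr.Adj b q := comp_adj_exists hQconn hq hB
    simp only [hf, dif_pos hex]
    exact hex.choose_spec
  apply Set.Finite.of_finite_image (f := f)
  · apply (hnbr q).subset
    rintro _ ⟨B, hB, rfl⟩
    exact ((hfspec B hB).2).symm
  · intro B hB B' hB' hfe
    have h1 : B = compOf Gr (Q \ {q}) (f B) := isCompOf_eq_compOf hB (hfspec B hB).1
    have h2 : B' = compOf Gr (Q \ {q}) (f B) :=
      isCompOf_eq_compOf hB' (hfe ▸ (hfspec B' hB').1)
    rw [h1, h2, hfe]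

lemma comp_unique_mem {A B B' : Set G} {x : G} (hB : IsCompOf Gr A B)
    (hB' : IsCompOf Gr A B') (hx : x ∈ B) (hx' : x ∈ B') : B = B' :=
  (isCompOf_eq_compOf hB hx).trans (isCompOf_eq_compOf hB' hx').symm

lemma mem_comp_exists {A : Set G} {x : G} (hx : x ∈ A) :
    ∃ B, IsCompOf Gr A B ∧ x ∈ B :=
  ⟨compOf Gr A x, compOf_isCompOf hx, mem_compOf_self hx⟩



lemma muSet_eq_indicator (μ : G → ℝ) (A : Set G) :
    muSet μ A = ∑' p, A.indicator μ p := tsum_subtype A μ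

lemma muSet_pos (hμpos : ∀ p, 0 < μ p) (hμsum : Summable μ) {A : Set G}
    (hA : A.Nonempty) : 0 < muSet μ A := by
  obtain ⟨a, ha⟩ := hA
  have hs : Summable (fun p : A => μ (p : G)) := hμsum.subtype A
  calc (0:ℝ) < μ a := hμpos a
  _ ≤ muSet μ A := Summable.le_tsum hs ⟨a, ha⟩ (fun j _ => (hμpos (j : G)).le)

lemma tsum_indicator_singleton (μ : G → ℝ) (r : G) :
    ∑' x, ({r} : Set G).indicator μ x = μ r := by
  rw [show ({r} : Set G).indicator μ = fun x => if x = r then μ r else 0 by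
    funext x
    by_cases h : x = r <;> simp [Set.indicator, h]]
  exact tsum_ite_eq r (fun _ => μ r)

lemma muSet_insert (hμsum : Summable μ) {Q : Set G} {r : G} (hr : r ∉ Q) :
    muSet μ (insert r Q) = μ r + muSet μ Q := by
  rw [muSet_eq_indicator, muSet_eq_indicator]
  have hpt : ∀ x, (insert r Q).indicator μ x
      = ({r} : Set G).indicator μ x + Q.indicator μ x := by
    intro x
    by_cases hx : x = r
    · subst hx
      simp [Set.indicator, hr, Set.mem_insert_iff]
    · by_cases hxQ : x ∈ Q <;> simp [Set.indicator, hx, hxQ, Set.mem_insert_iff]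
  rw [tsum_congr hpt, Summable.tsum_add ((hμsum.indicator _)) (hμsum.indicator _),
    tsum_indicator_singleton]

lemma muSet_diff (hμsum : Summable μ) {Q : Set G} {q : G} (hq : q ∈ Q) :
    muSet μ (Q \ {q}) = muSet μ Q - μ q := by
  have h1 : insert q (Q \ {q}) = Q := by
    ext x; by_cases hx : x = q <;> simp [hx, hq]
  have h2 : q ∉ Q \ {q} := by simp
  have := muSet_insert hμsum h2
  rw [h1] at this
  linarith

lemma muSet_partition (hμsum : Summable μ) {A : Set G} (t : Finset (Set G))
    (hsub : ∀ B ∈ t, B ⊆ A) (hmem : ∀ x ∈ A, ∃ B ∈ t, x ∈ B)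
    (huniq : ∀ x, ∀ B ∈ t, ∀ B' ∈ t, x ∈ B → x ∈ B' → B = B') :
    ∑ B ∈ t, muSet μ B = muSet μ A := by
  have h1 : ∀ B ∈ t, muSet μ B = ∑' p, B.indicator μ p :=
    fun B _ => muSet_eq_indicator μ B
  rw [Finset.sum_congr rfl h1, ← Summable.tsum_finsetSum (fun B _ => hμsum.indicator B),
    muSet_eq_indicator]
  apply tsum_congr
  intro x
  by_cases hx : x ∈ A
  · obtain ⟨B₀, hB₀t, hxB₀⟩ := hmem x hx
    rw [Finset.sum_eq_single B₀]
    · simp [Set.indicator, hxB₀, hx]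
    · intro B hBt hne
      have : x ∉ B := fun hxB => hne (huniq x B hBt B₀ hB₀t hxB hxB₀)
      simp [Set.indicator, this]
    · intro h; exact absurd hB₀t h
  · rw [Finset.sum_eq_zero, Set.indicator_of_notMem hx]
    intro B hBt
    exact Set.indicator_of_notMem (fun hxB => hx (hsub B hBt hxB)) μ



noncomputable def offRow (L : G → G → ℝ) (p : G) (q : G) : ℝ := if q = p then 0 else L p q

lemma summable_offRow (hsumL : ∀ p : G, Summable fun q : {q : G // q ≠ p} => L p (q : G))
    (p : G) : Summable (offRow L p) := by
  refine (summable_subtype_and_compl (s := {q : G | q ≠ p})).mp ⟨?_, ?_⟩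
  · exact (hsumL p).congr fun b => by simp only [offRow, if_neg b.2]
  · have hfin : ({q : G | q ≠ p}ᶜ).Finite :=
      (Set.finite_singleton p).subset (by intro x hx; simpa using hx)
    have := hfin.to_subtype
    exact Summable.of_finite

lemma tsum_offRow (hrow : ∀ p : G, ∑' q : {q : G // q ≠ p}, L p (q : G) = -(L p p))
    (p : G) : ∑' q, offRow L p q = -(L p p) := by
  rw [← tsum_subtype_eq_of_support_subset (s := {q : G | q ≠ p})
    (f := offRow L p) ?_]
  · rw [tsum_congr (fun b : ↥{q : G | q ≠ p} => by
      simp only [offRow, if_neg b.2] : ∀ b : ↥{q : G | q ≠ p}, offRow L p ↑b = L p ↑b)]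
    exact hrow p
  · intro q hq
    by_contra hqp
    simp only [Set.mem_setOf_eq, not_not] at hqp
    exact hq (by simp [offRow, hqp])

lemma summable_offRow_subtype (hsumL : ∀ p : G, Summable fun q : {q : G // q ≠ p} => L p (q : G))
    (p : G) (A : Set G) : Summable (fun q : A => offRow L p q) :=
  (summable_offRow hsumL p).subtype A

lemma summable_row_notmem (hsumL : ∀ p : G, Summable fun q : {q : G // q ≠ p} => L p (q : G))
    {r : G} {A : Set G} (hr : r ∉ A) : Summable fun q : A => L r (q : G) :=
  (summable_offRow_subtype hsumL r A).congr fun b => by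
    simp only [offRow]
    rw [if_neg (fun h : (b : G) = r => hr (h ▸ b.2))]

lemma summable_row_compl (hsumL : ∀ p : G, Summable fun q : {q : G // q ≠ p} => L p (q : G))
    {p : G} {Q : Set G} (hp : p ∈ Q) : Summable fun s : {q : G // q ∉ Q} => L p (s : G) := by
  have : Summable fun s : ↥(Qᶜ) => L p (s : G) :=
    summable_row_notmem hsumL (by simp [hp] : p ∉ Qᶜ)
  exact this

lemma row_split (hsumL : ∀ p : G, Summable fun q : {q : G // q ≠ p} => L p (q : G))
    (hrow : ∀ p : G, ∑' q : {q : G // q ≠ p}, L p (q : G) = -(L p p))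
    {p : G} {Q : Set G} (hp : p ∈ Q) :
    ∑' q : Q, L p (q : G) = -∑' s : {q : G // q ∉ Q}, L p (s : G) := by
  have hsum := summable_offRow hsumL p
  have hsplit := hsum.tsum_subtype_add_tsum_subtype_compl Q
  rw [tsum_offRow hrow p] at hsplit
  have hcompl : ∑' x : ↥(Qᶜ), offRow L p ↑x = ∑' s : {q : G // q ∉ Q}, L p (s : G) := by
    apply tsum_congr
    intro b
    exact if_neg (fun h : (b : G) = p => (b.2 : (b : G) ∉ Q) (h ▸ hp))
  rw [hcompl] at hsplit
  have hδ : Summable (fun q : Q => if (q : G) = p then L p p else 0) :=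
    summable_of_ne_finset_zero (s := {(⟨p, hp⟩ : Q)}) (by
      intro b hb
      rw [if_neg]
      intro h
      exact hb (by simpa using Subtype.ext h))
  have hQ : ∑' q : Q, L p (q : G)
      = ∑' q : Q, (offRow L p (q : G) + if (q : G) = p then L p p else 0) := by
    apply tsum_congr
    intro b
    by_cases hb : (b : G) = p <;> simp [offRow, hb]
  rw [hQ, show (∑' q : Q, (offRow L p (q : G) + if (q : G) = p then L p p else 0))
    = (∑' q : Q, offRow L p (q : G)) + ∑' q : Q, (if (q : G) = p then L p p else 0) from
    Summable.tsum_add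
    ((hsum.subtype Q).congr (fun _ => rfl) : Summable fun q : Q => offRow L p (q : G)) hδ]
  have hδval : ∑' q : Q, (if (q : G) = p then L p p else 0) = L p p := by
    rw [tsum_eq_single (⟨p, hp⟩ : Q)]
    · simp
    · intro b hb
      rw [if_neg (fun h => hb (Subtype.ext h))]
  rw [hδval]
  linarith



lemma dualOff_union {Q : Set G} {r : G} (hr : r ∉ Q) :
    dualOff L μ Gr Q (Q ∪ {r}) = (muSet μ (Q ∪ {r}) / muSet μ Q) * ∑' q : Q, L r (q : G) := by
  have hex : ∃ p, p ∉ Q ∧ Q ∪ {r} = Q ∪ {p} := ⟨r, hr, rfl⟩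
  rw [dualOff, dif_pos hex]
  have hc : hex.choose = r := by
    have hsp := hex.choose_spec
    have hmem : r ∈ Q ∪ {hex.choose} := hsp.2 ▸ (Set.mem_union_right Q rfl)
    rcases hmem with hQ | h
    · exact absurd hQ hr
    · exact (Set.mem_singleton_iff.mp h).symm
  rw [hc]

lemma dualOff_comp {Q R : Set G} (hQconn : (Gr.induce Q).Connected) {q : G} (hq : q ∈ Q)
    (hR : IsCompOf Gr (Q \ {q}) R) :
    dualOff L μ Gr Q R = (muSet μ R / muSet μ Q) * ∑' s : {s : G // s ∉ Q}, L q (s : G) := by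
  have hnot : ¬ ∃ p, p ∉ Q ∧ R = Q ∪ {p} := by
    rintro ⟨p, hp, rfl⟩
    have hmem : q ∈ Q \ {q} := hR.1 (Set.mem_union_left _ hq)
    exact hmem.2 rfl
  have hex2 : ∃ p, p ∈ Q ∧ IsCompOf Gr (Q \ {p}) R := ⟨q, hq, hR⟩
  rw [dualOff, dif_neg hnot, dif_pos hex2]
  have hsp := hex2.choose_spec
  have hc : hex2.choose = q := cut_vertex_unique hQconn hsp.1 hq hsp.2 hR
  rw [hc]

lemma dualOff_ne {Q R : Set G} (h : dualOff L μ Gr Q R ≠ 0) :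
    (∃ r, r ∉ Q ∧ R = Q ∪ {r}) ∨ (∃ q, q ∈ Q ∧ IsCompOf Gr (Q \ {q}) R) := by
  by_contra hcon
  push_neg at hcon
  rw [dualOff] at h
  rw [dif_neg, dif_neg] at h
  · exact h rfl
  · rintro ⟨q, hq, hR⟩; exact hcon.2 q hq hR
  · rintro ⟨r, hr, hR⟩; exact hcon.1 r hr hR


noncomputable def embComp (Gr : SimpleGraph G) (Q : Set G) (q : G)
    (hfin : {R : Set G | IsCompOf Gr (Q \ {q}) R}.Finite) (hq : q ∈ Q) :
    {C // C ∈ hfin.toFinset} → {R : Set G // R.Nonempty ∧ (Gr.induce R).Connected ∧ R ≠ Q} :=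
  fun C => ⟨C.1, isCompOf_nonempty (hfin.mem_toFinset.mp C.2),
    (hfin.mem_toFinset.mp C.2).2.1,
    fun he => (((hfin.mem_toFinset.mp C.2).1) (he.symm ▸ hq)).2 rfl⟩

lemma embComp_val (Gr : SimpleGraph G) (Q : Set G) (q : G)
    (hfin : {R : Set G | IsCompOf Gr (Q \ {q}) R}.Finite) (hq : q ∈ Q)
    (C : {C // C ∈ hfin.toFinset}) : ((embComp Gr Q q hfin hq C : Set G)) = C.1 := rfl

end DGAux

open DGAux

/-- Let `Q ⊆ G` be nonempty and connected with finite inner boundary. Then the family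
`(L*(Q,Q'))_{Q'≠Q}` (over nonempty connected subsets `Q'`) has only finitely many nonzero
terms, and for every `p ∈ G`: `Σ_{Q'} L*(Q,Q')·Λ(Q',p) = Σ_{q∈G} Λ(Q,q)·L(q,p)`, the
right-hand family being summable. In other words, `L*Λ = ΛL`. -/
theorem dual_gen_intertwining {G : Type*} [Countable G]
    (L : G → G → ℝ) (μ : G → ℝ) (Gr : SimpleGraph G)
    (hnn : ∀ p q : G, p ≠ q → 0 ≤ L p q)
    (hsumL : ∀ p : G, Summable fun q : {q : G // q ≠ p} => L p (q : G))
    (hrow : ∀ p : G, ∑' q : {q : G // q ≠ p}, L p (q : G) = -(L p p))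
    (hfin : ∀ p : G, {q : G | 0 < L p q ∨ 0 < L q p}.Finite)
    (hμpos : ∀ p, 0 < μ p) (hμsum : Summable μ) (hμone : ∑' p, μ p = 1)
    (hrev : ∀ p q : G, μ p * L p q = μ q * L q p)
    (hint : Summable fun p => μ p * (-(L p p)))
    (hGr : ∀ p q : G, Gr.Adj p q ↔ p ≠ q ∧ L p q ≠ 0)
    (hconn : Gr.Connected)
    (Q : Set G) (hQne : Q.Nonempty) (hQconn : (Gr.induce Q).Connected)
    (hbd : {p : G | p ∈ Q ∧ ∃ q, q ∉ Q ∧ 0 < L p q}.Finite) :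
    {R : Set G | R.Nonempty ∧ (Gr.induce R).Connected ∧ R ≠ Q ∧ dualGen L μ Gr Q R ≠ 0}.Finite ∧
    ∀ p : G,
      Summable (fun q : G => lamSet μ Q q * L q p) ∧
      (∑' R : {R : Set G // R.Nonempty ∧ (Gr.induce R).Connected},
          dualGen L μ Gr Q (R : Set G) * lamSet μ (R : Set G) p)
        = ∑' q : G, lamSet μ Q q * L q p := by
  classical
  -- positivity of masses
  have hμQ : 0 < muSet μ Q := muSet_pos hμpos hμsum hQne
  -- neighbours are finite
  have hnbr : ∀ v : G, {w : G | Gr.Adj v w}.Finite := by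
    intro v
    apply (hfin v).subset
    intro w hw
    obtain ⟨hne, hLne⟩ := (hGr v w).mp hw
    exact Or.inl (lt_of_le_of_ne (hnn v w hne) (Ne.symm hLne))
  -- inner and outer boundary
  set ibS : Set G := {p : G | p ∈ Q ∧ ∃ q, q ∉ Q ∧ 0 < L p q} with hibS
  set obS : Set G := {r : G | r ∉ Q ∧ ∃ q ∈ Q, 0 < L r q} with hobS
  have hobfin : obS.Finite := by
    apply (hbd.biUnion (fun q _ => hfin q)).subset
    rintro r ⟨hrQ, q, hqQ, hpos⟩
    have hq2 : 0 < L q r := by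
      have := hrev r q
      nlinarith [hμpos r, hμpos q]
    exact Set.mem_biUnion (⟨hqQ, r, hrQ, hq2⟩ : q ∈ ibS) (Or.inl hq2)
  -- the two families of rates
  set A : G → ℝ := fun r => ∑' q : Q, L r (q : G) with hA
  set B : G → ℝ := fun q => ∑' s : {s : G // s ∉ Q}, L q (s : G) with hB
  have hAzero : ∀ r, r ∉ Q → r ∉ obS → A r = 0 := by
    intro r hrQ hrob
    have : ∀ q : Q, L r (q : G) = 0 := by
      intro q
      have hne : r ≠ (q : G) := fun h => hrQ (h ▸ q.2)
      rcases lt_or_eq_of_le (hnn r q hne) with hlt | heq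
      · exact absurd ⟨hrQ, q, q.2, hlt⟩ hrob
      · exact heq.symm
    simp [hA, tsum_congr this]
  have hBzero : ∀ q, q ∈ Q → q ∉ ibS → B q = 0 := by
    intro q hqQ hqib
    have : ∀ s : {s : G // s ∉ Q}, L q (s : G) = 0 := by
      intro s
      have hne : q ≠ (s : G) := fun h => s.2 (h ▸ hqQ)
      rcases lt_or_eq_of_le (hnn q s hne) with hlt | heq
      · exact absurd ⟨hqQ, s, s.2, hlt⟩ hqib
      · exact heq.symm
    simp [hB, tsum_congr this]
  -- connectivity of Q ∪ {r} for r in the outer boundary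
  have hUconn : ∀ r ∈ obS, (Gr.induce (Q ∪ {r})).Connected := by
    rintro r ⟨hrQ, q, hqQ, hpos⟩
    have hadj : Gr.Adj q r := by
      rw [hGr]
      refine ⟨fun h => hrQ (h ▸ hqQ), ?_⟩
      have := hrev r q
      nlinarith [hμpos r, hμpos q]
    rw [Set.union_singleton]
    exact connected_insert hQconn hqQ hadj
  -- support of the off-diagonal rates
  have hoffsupp : ∀ R : Set G, dualOff L μ Gr Q R ≠ 0 →
      (∃ r ∈ obS, R = Q ∪ {r}) ∨ (∃ q ∈ ibS, IsCompOf Gr (Q \ {q}) R) := by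
    intro R hR0
    rcases dualOff_ne hR0 with ⟨r, hrQ, rfl⟩ | ⟨q, hqQ, hcomp⟩
    · left
      refine ⟨r, ?_, rfl⟩
      by_contra hrob
      rw [dualOff_union hrQ] at hR0
      exact hR0 (by rw [show (∑' q : Q, L r (q : G)) = A r from rfl, hAzero r hrQ hrob, mul_zero])
    · right
      refine ⟨q, ?_, hcomp⟩
      by_contra hqib
      rw [dualOff_comp hQconn hqQ hcomp] at hR0
      exact hR0 (by rw [show (∑' s : {s : G // s ∉ Q}, L q (s : G)) = B q from rfl,
        hBzero q hqQ hqib, mul_zero])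
  have hfin1 : ({R : Set G | ∃ r ∈ obS, R = Q ∪ {r}}).Finite := by
    have he : {R : Set G | ∃ r ∈ obS, R = Q ∪ {r}} = (fun r => Q ∪ {r}) '' obS := by
      ext R
      simp only [Set.mem_setOf_eq, Set.mem_image]
      exact ⟨fun ⟨r, h1, h2⟩ => ⟨r, h1, h2.symm⟩, fun ⟨r, h1, h2⟩ => ⟨r, h1, h2.symm⟩⟩
    rw [he]
    exact hobfin.image _
  have hfin2 : ({R : Set G | ∃ q ∈ ibS, IsCompOf Gr (Q \ {q}) R}).Finite := by
    have he : {R : Set G | ∃ q ∈ ibS, IsCompOf Gr (Q \ {q}) R}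
        = ⋃ q ∈ ibS, {R : Set G | IsCompOf Gr (Q \ {q}) R} := by
      ext R; simp
    rw [he]
    exact hbd.biUnion (fun q hq => comps_finite hnbr hQconn hq.1)
  have hSuppFin : ({R : Set G | (∃ r ∈ obS, R = Q ∪ {r}) ∨
      (∃ q ∈ ibS, IsCompOf Gr (Q \ {q}) R)}).Finite := by
    apply (hfin1.union hfin2).subset
    rintro R (h | h)
    · exact Or.inl h
    · exact Or.inr h
  -- first conjunct
  have hconj1 : {R : Set G | R.Nonempty ∧ (Gr.induce R).Connected ∧ R ≠ Q
      ∧ dualGen L μ Gr Q R ≠ 0}.Finite := by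
    apply hSuppFin.subset
    rintro R ⟨-, -, hne, hdg⟩
    rw [dualGen, if_neg hne] at hdg
    exact hoffsupp R hdg
  refine ⟨hconj1, fun p => ?_⟩
  -- summability of the right-hand family
  have hsummable : Summable (fun q : G => lamSet μ Q q * L q p) := by
    have hbase : Summable (fun q : G => (μ p / muSet μ Q) * Set.indicator Q (offRow L p) q) :=
      (((summable_offRow hsumL p).indicator Q)).mul_left _
    have hδ : Summable (fun q : G => if q = p
        then lamSet μ Q p * L p p - (μ p / muSet μ Q) * Set.indicator Q (offRow L p) p
        else 0) :=
      summable_of_ne_finset_zero (s := {p}) (by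
        intro b hb
        rw [if_neg (by simpa using hb)])
    have hfe : (fun q : G => lamSet μ Q q * L q p)
        = fun q => (μ p / muSet μ Q) * Set.indicator Q (offRow L p) q
          + (if q = p then lamSet μ Q p * L p p
              - (μ p / muSet μ Q) * Set.indicator Q (offRow L p) p else 0) := by
      funext q
      by_cases hq : q = p
      · subst hq
        rw [if_pos rfl]
        ring
      · rw [if_neg hq, add_zero]
        by_cases hqQ : q ∈ Q
        · rw [lamSet, if_pos hqQ, Set.indicator_of_mem hqQ, offRow, if_neg hq]
          have := hrev q p
          field_simp
          nlinarith [this]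
        · rw [lamSet, if_neg hqQ, Set.indicator_of_notMem hqQ, zero_mul, mul_zero]
    rw [hfe]
    exact hbase.add hδ
  refine ⟨hsummable, ?_⟩
  -- right-hand side evaluation
  have hRHS : ∑' q : G, lamSet μ Q q * L q p = μ p * A p / muSet μ Q := by
    have h1 : ∑' q : G, lamSet μ Q q * L q p = ∑' q : Q, lamSet μ Q (q : G) * L (q : G) p := by
      refine (tsum_subtype_eq_of_support_subset (s := Q)
        (f := fun q : G => lamSet μ Q q * L q p) ?_).symm
      intro q hq
      by_contra hqQ
      exact hq (by simp [lamSet, hqQ])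
    rw [h1]
    have h2 : ∀ q : Q, lamSet μ Q (q : G) * L (q : G) p
        = (μ p * L p (q : G)) * (muSet μ Q)⁻¹ := by
      intro q
      rw [lamSet, if_pos q.2]
      have := hrev (q : G) p
      field_simp
      nlinarith [this]
    rw [tsum_congr h2, tsum_mul_right, hA]
    rw [tsum_mul_left (a := μ p) (f := fun q : Q => L p (q : G))]
    ring
  rw [hRHS]
  by_cases hpQ : p ∈ Q
  · -- hard case
    set obF : Finset G := hobfin.toFinset with hobF
    set ibF : Finset G := hbd.toFinset with hibF
    have hobF_mem : ∀ r, r ∈ obF ↔ r ∈ obS := fun r => hobfin.mem_toFinset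
    have hibF_mem : ∀ q, q ∈ ibF ↔ q ∈ ibS := fun q => hbd.mem_toFinset
    have hcompsfin : ∀ q, q ∈ Q → {R : Set G | IsCompOf Gr (Q \ {q}) R}.Finite :=
      fun q hq => comps_finite hnbr hQconn hq
    have hkey : ∀ (w : Set G → ℝ) (R : Set G),
        dualOff L μ Gr Q R * w R
        = (∑ r ∈ obF, if R = Q ∪ {r} then (muSet μ R / muSet μ Q) * A r * w R else 0)
        + (∑ q ∈ ibF, if IsCompOf Gr (Q \ {q}) R then (muSet μ R / muSet μ Q) * B q * w R else 0) := by
      intro w R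
      by_cases h1 : ∃ r, r ∉ Q ∧ R = Q ∪ {r}
      · obtain ⟨r, hrQ, rfl⟩ := h1
        rw [dualOff_union hrQ,
          show (∑' q : Q, L r (q : G)) = A r from rfl]
        have hsum2 : (∑ q ∈ ibF, if IsCompOf Gr (Q \ {q}) (Q ∪ {r})
            then (muSet μ (Q ∪ {r}) / muSet μ Q) * B q * w (Q ∪ {r}) else 0) = 0 := by
          apply Finset.sum_eq_zero
          intro q hq
          rw [if_neg]
          intro hcomp
          exact (hcomp.1 (Set.mem_union_left _ ((hibF_mem q).mp hq).1)).2 rfl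
        rw [hsum2, add_zero]
        by_cases hrob : r ∈ obF
        · rw [Finset.sum_eq_single r ?_ ?_, if_pos rfl]
          · intro b hb hbr
            rw [if_neg]
            intro he
            have hmem : r ∈ Q ∪ {b} := he ▸ (Set.mem_union_right Q rfl : r ∈ Q ∪ {r})
            rcases hmem with h | h
            · exact hrQ h
            · exact hbr (Set.mem_singleton_iff.mp h).symm
          · intro habs; exact absurd hrob habs
        · have hAr : A r = 0 := hAzero r hrQ (fun h => hrob ((hobF_mem r).mpr h))
          rw [hAr, mul_zero, zero_mul]
          symm
          apply Finset.sum_eq_zero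
          intro b hb
          rw [if_neg]
          intro he
          have hmem : r ∈ Q ∪ {b} := he ▸ (Set.mem_union_right Q rfl : r ∈ Q ∪ {r})
          rcases hmem with h | h
          · exact hrQ h
          · exact hrob ((Set.mem_singleton_iff.mp h) ▸ hb)
      · by_cases h2 : ∃ q, q ∈ Q ∧ IsCompOf Gr (Q \ {q}) R
        · obtain ⟨q, hqQ, hcomp⟩ := h2
          rw [dualOff_comp hQconn hqQ hcomp,
            show (∑' s : {s : G // s ∉ Q}, L q (s : G)) = B q from rfl]
          have hsum1 : (∑ r ∈ obF, if R = Q ∪ {r}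
              then (muSet μ R / muSet μ Q) * A r * w R else 0) = 0 := by
            apply Finset.sum_eq_zero
            intro b hb
            rw [if_neg]
            intro he
            exact h1 ⟨b, ((hobF_mem b).mp hb).1, he⟩
          rw [hsum1, zero_add]
          by_cases hqib : q ∈ ibF
          · rw [Finset.sum_eq_single q ?_ ?_, if_pos hcomp]
            · intro b hb hbq
              rw [if_neg]
              intro hcomp'
              exact hbq (cut_vertex_unique hQconn ((hibF_mem b).mp hb).1 hqQ hcomp' hcomp)
            · intro habs; exact absurd hqib habs
          · have hBq : B q = 0 := hBzero q hqQ (fun h => hqib ((hibF_mem q).mpr h))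
            rw [hBq, mul_zero, zero_mul]
            symm
            apply Finset.sum_eq_zero
            intro b hb
            rw [if_neg]
            intro hcomp'
            have hbq : b = q :=
              cut_vertex_unique hQconn ((hibF_mem b).mp hb).1 hqQ hcomp' hcomp
            exact hqib (hbq ▸ hb)
        · rw [dualOff, dif_neg h1, dif_neg h2, zero_mul]
          symm
          rw [Finset.sum_eq_zero
              (fun b hb => if_neg (fun he => h1 ⟨b, ((hobF_mem b).mp hb).1, he⟩)),
            Finset.sum_eq_zero
              (fun b hb => if_neg (fun hc => h2 ⟨b, ((hibF_mem b).mp hb).1, hc⟩)),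
            add_zero]
    -- finsets of components
    set compsF : G → Finset (Set G) := fun q =>
      if hq : q ∈ Q then (hcompsfin q hq).toFinset else ∅ with hcompsF
    have hcompsF_mem : ∀ q, q ∈ Q → ∀ R : Set G,
        (R ∈ compsF q ↔ IsCompOf Gr (Q \ {q}) R) := by
      intro q hq R
      rw [hcompsF]
      simp only [dif_pos hq]
      exact Set.Finite.mem_toFinset _
    -- properties of the candidate sets
    have hUne' : ∀ r, (Q ∪ {r}).Nonempty := fun r => hQne.mono Set.subset_union_left
    have hUco : ∀ r ∈ obF, (Gr.induce (Q ∪ {r})).Connected :=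
      fun r hr => hUconn r ((hobF_mem r).mp hr)
    have hUneQ : ∀ r ∈ obF, Q ∪ {r} ≠ Q := fun r hr h =>
      ((hobF_mem r).mp hr).1 (h ▸ (Set.mem_union_right Q rfl : r ∈ Q ∪ {r}))
    have hCneQ : ∀ q R, q ∈ Q → IsCompOf Gr (Q \ {q}) R → R ≠ Q :=
      fun q R hq hc he => (hc.1 (he.symm ▸ hq)).2 rfl
    -- the generic tsum evaluation over sub3
    have hgen : ∀ w : Set G → ℝ,
        (∑' R : {R : Set G // R.Nonempty ∧ (Gr.induce R).Connected ∧ R ≠ Q},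
          dualOff L μ Gr Q (R : Set G) * w (R : Set G))
        = (∑ r ∈ obF, (muSet μ (Q ∪ {r}) / muSet μ Q) * A r * w (Q ∪ {r}))
        + (∑ q ∈ ibF, ∑ C ∈ compsF q, (muSet μ C / muSet μ Q) * B q * w C) := by
      intro w
      have hF1sum : ∀ r ∈ obF, Summable (fun R :
          {R : Set G // R.Nonempty ∧ (Gr.induce R).Connected ∧ R ≠ Q} =>
          if (R : Set G) = Q ∪ {r}
            then (muSet μ (R : Set G) / muSet μ Q) * A r * w (R : Set G) else 0) := by
        intro r hr
        apply summable_of_ne_finset_zero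
          (s := {(⟨Q ∪ {r}, hUne' r, hUco r hr, hUneQ r hr⟩ :
            {R : Set G // R.Nonempty ∧ (Gr.induce R).Connected ∧ R ≠ Q})})
        intro b hb
        rw [if_neg]
        intro he
        exact hb (by simp only [Finset.mem_singleton]; exact Subtype.ext he)
      have hF2sum : ∀ q ∈ ibF, Summable (fun R :
          {R : Set G // R.Nonempty ∧ (Gr.induce R).Connected ∧ R ≠ Q} =>
          if IsCompOf Gr (Q \ {q}) (R : Set G)
            then (muSet μ (R : Set G) / muSet μ Q) * B q * w (R : Set G) else 0) := by
        intro q hq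
        have hqQ : q ∈ Q := ((hibF_mem q).mp hq).1
        apply summable_of_ne_finset_zero (s := ((hcompsfin q hqQ).toFinset.attach).image
          (embComp Gr Q q (hcompsfin q hqQ) hqQ))
        intro b hb
        rw [if_neg]
        intro hc
        exact hb (Finset.mem_image.mpr ⟨⟨(b : Set G), (Set.Finite.mem_toFinset _).mpr hc⟩,
          Finset.mem_attach _ _, Subtype.ext rfl⟩)
      rw [tsum_congr (fun R : {R : Set G // R.Nonempty ∧ (Gr.induce R).Connected ∧ R ≠ Q} =>
        hkey w (R : Set G))]
      rw [Summable.tsum_add (summable_sum hF1sum) (summable_sum hF2sum), Summable.tsum_finsetSum hF1sum,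
        Summable.tsum_finsetSum hF2sum]
      congr 1
      · apply Finset.sum_congr rfl
        intro r hr
        rw [tsum_eq_single (⟨Q ∪ {r}, hUne' r, hUco r hr, hUneQ r hr⟩ :
          {R : Set G // R.Nonempty ∧ (Gr.induce R).Connected ∧ R ≠ Q})]
        · rw [if_pos rfl]
        · intro b hb
          rw [if_neg]
          intro he
          exact hb (Subtype.ext he)
      · apply Finset.sum_congr rfl
        intro q hq
        have hqQ : q ∈ Q := ((hibF_mem q).mp hq).1
        rw [tsum_eq_sum (s := ((hcompsfin q hqQ).toFinset.attach).image
          (embComp Gr Q q (hcompsfin q hqQ) hqQ)) ?_]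
        · rw [Finset.sum_image (by
            intro x _ y _ hxy
            have h' : (x.1 : Set G) = y.1 :=
              congrArg (fun z : {R : Set G // R.Nonempty ∧ (Gr.induce R).Connected ∧ R ≠ Q} =>
                (z : Set G)) hxy
            exact Subtype.ext h')]
          rw [show compsF q = (hcompsfin q hqQ).toFinset by rw [hcompsF]; simp [dif_pos hqQ]]
          rw [← Finset.sum_attach ((hcompsfin q hqQ).toFinset)
            (fun C => (muSet μ C / muSet μ Q) * B q * w C)]
          apply Finset.sum_congr rfl
          intro C _
          rw [if_pos (show IsCompOf Gr (Q \ {q})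
            ((embComp Gr Q q (hcompsfin q hqQ) hqQ C : Set G)) from
            (hcompsfin q hqQ).mem_toFinset.mp C.2)]
          rfl
        · intro b hb
          rw [if_neg]
          intro hc
          exact hb (Finset.mem_image.mpr ⟨⟨(b : Set G), (Set.Finite.mem_toFinset _).mpr hc⟩,
            Finset.mem_attach _ _, Subtype.ext rfl⟩)
    -- partition of masses over components
    have hpart : ∀ q ∈ ibF, (∑ C ∈ compsF q, muSet μ C) = muSet μ Q - μ q := by
      intro q hq
      have hqQ : q ∈ Q := ((hibF_mem q).mp hq).1
      rw [← muSet_diff hμsum hqQ]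
      apply muSet_partition hμsum
      · intro C hC
        exact ((hcompsF_mem q hqQ C).mp hC).1
      · intro x hx
        obtain ⟨C, hC, hxC⟩ := mem_comp_exists (Gr := Gr) hx
        exact ⟨C, (hcompsF_mem q hqQ C).mpr hC, hxC⟩
      · intro x C hC C' hC' hxC hxC'
        exact comp_unique_mem ((hcompsF_mem q hqQ C).mp hC)
          ((hcompsF_mem q hqQ C').mp hC') hxC hxC'
    -- the diagonal sum
    set S : ℝ := ∑' R : {R : Set G // R.Nonempty ∧ (Gr.induce R).Connected ∧ R ≠ Q},
      dualOff L μ Gr Q (R : Set G) with hSdef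
    have hSval : S = (∑ r ∈ obF, ((muSet μ Q + μ r) / muSet μ Q) * A r)
        + (∑ q ∈ ibF, ((muSet μ Q - μ q) / muSet μ Q) * B q) := by
      have h := hgen (fun _ => 1)
      simp only [mul_one] at h
      rw [hSdef, h]
      congr 1
      · apply Finset.sum_congr rfl
        intro r hr
        have hrQ : r ∉ Q := ((hobF_mem r).mp hr).1
        rw [Set.union_singleton, muSet_insert hμsum hrQ]
        ring_nf
      · apply Finset.sum_congr rfl
        intro q hq
        rw [← Finset.sum_mul, ← Finset.sum_div, hpart q hq]
    have hdOffQQ : dualOff L μ Gr Q Q = 0 := by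
      have h1 : ¬ ∃ r, r ∉ Q ∧ Q = Q ∪ {r} := by
        rintro ⟨r, hr, he⟩
        exact hr (he ▸ (Set.mem_union_right Q rfl : r ∈ Q ∪ {r}))
      have h2 : ¬ ∃ q, q ∈ Q ∧ IsCompOf Gr (Q \ {q}) Q := by
        rintro ⟨q, hq, hc⟩
        exact (hc.1 hq).2 rfl
      rw [dualOff, dif_neg h1, dif_neg h2]
    have hdgQ : dualGen L μ Gr Q Q = -S := by
      rw [dualGen, if_pos rfl, ← hSdef]
    -- summability of the two pieces over the full index
    have hgsupp : Summable (fun R : {R : Set G // R.Nonempty ∧ (Gr.induce R).Connected} =>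
        dualOff L μ Gr Q (R : Set G) * lamSet μ (R : Set G) p) := by
      have hpre : {R : {R : Set G // R.Nonempty ∧ (Gr.induce R).Connected} |
          dualOff L μ Gr Q (R : Set G) * lamSet μ (R : Set G) p ≠ 0}.Finite := by
        apply ((hSuppFin.preimage
          (Subtype.val_injective.injOn : Set.InjOn (Subtype.val) _))).subset
        intro R hR
        exact hoffsupp (R : Set G) (fun h0 => hR (by rw [h0, zero_mul]))
      exact summable_of_ne_finset_zero (s := hpre.toFinset) (fun b hb =>
        not_not.mp (fun h => hb (hpre.mem_toFinset.mpr h)))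
    have hfQsum : Summable (fun R : {R : Set G // R.Nonempty ∧ (Gr.induce R).Connected} =>
        if (R : Set G) = Q then (-S) * lamSet μ Q p else 0) := by
      apply summable_of_ne_finset_zero
        (s := {(⟨Q, hQne, hQconn⟩ : {R : Set G // R.Nonempty ∧ (Gr.induce R).Connected})})
      intro b hb
      rw [if_neg]
      intro he
      exact hb (by simp only [Finset.mem_singleton]; exact Subtype.ext he)
    have hmain : (fun R : {R : Set G // R.Nonempty ∧ (Gr.induce R).Connected} =>
          dualGen L μ Gr Q (R : Set G) * lamSet μ (R : Set G) p)
        = fun R : {R : Set G // R.Nonempty ∧ (Gr.induce R).Connected} =>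
          (if (R : Set G) = Q then (-S) * lamSet μ Q p else 0)
          + dualOff L μ Gr Q (R : Set G) * lamSet μ (R : Set G) p := by
      funext R
      by_cases hRQ : (R : Set G) = Q
      · rw [dualGen, if_pos hRQ, hRQ, if_pos rfl, hdOffQQ, zero_mul, add_zero, ← hSdef]
      · rw [dualGen, if_neg hRQ, if_neg hRQ, zero_add]
    rw [hmain, Summable.tsum_add hfQsum hgsupp]
    have hfQval : (∑' R : {R : Set G // R.Nonempty ∧ (Gr.induce R).Connected},
        if (R : Set G) = Q then (-S) * lamSet μ Q p else 0) = (-S) * (μ p / muSet μ Q) := by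
      rw [tsum_eq_single (⟨Q, hQne, hQconn⟩ :
        {R : Set G // R.Nonempty ∧ (Gr.induce R).Connected})]
      · rw [if_pos rfl, lamSet, if_pos hpQ]
      · intro b hb
        rw [if_neg (fun he => hb (Subtype.ext he))]
    -- bridge from the full index to the off-diagonal index
    have hbridge : (∑' R : {R : Set G // R.Nonempty ∧ (Gr.induce R).Connected},
          dualOff L μ Gr Q (R : Set G) * lamSet μ (R : Set G) p)
        = ∑' R : {R : Set G // R.Nonempty ∧ (Gr.induce R).Connected ∧ R ≠ Q},
          dualOff L μ Gr Q (R : Set G) * lamSet μ (R : Set G) p := by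
      have e2 := tsum_subtype {R : Set G | R.Nonempty ∧ (Gr.induce R).Connected}
        (fun C => dualOff L μ Gr Q C * lamSet μ C p)
      have e3 := tsum_subtype {R : Set G | R.Nonempty ∧ (Gr.induce R).Connected ∧ R ≠ Q}
        (fun C => dualOff L μ Gr Q C * lamSet μ C p)
      rw [show (∑' R : {R : Set G // R.Nonempty ∧ (Gr.induce R).Connected},
          dualOff L μ Gr Q (R : Set G) * lamSet μ (R : Set G) p)
          = ∑' R : ↥{R : Set G | R.Nonempty ∧ (Gr.induce R).Connected},
            dualOff L μ Gr Q (R : Set G) * lamSet μ (R : Set G) p from rfl, e2]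
      rw [show (∑' R : {R : Set G // R.Nonempty ∧ (Gr.induce R).Connected ∧ R ≠ Q},
          dualOff L μ Gr Q (R : Set G) * lamSet μ (R : Set G) p)
          = ∑' R : ↥{R : Set G | R.Nonempty ∧ (Gr.induce R).Connected ∧ R ≠ Q},
            dualOff L μ Gr Q (R : Set G) * lamSet μ (R : Set G) p from rfl, e3]
      apply tsum_congr
      intro C
      by_cases hCQ : C = Q
      · rw [Set.indicator_of_notMem
          (fun h : C ∈ {R : Set G | R.Nonempty ∧ (Gr.induce R).Connected ∧ R ≠ Q} =>
            h.2.2 hCQ)]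
        by_cases hC2 : C ∈ {R : Set G | R.Nonempty ∧ (Gr.induce R).Connected}
        · rw [Set.indicator_of_mem hC2, hCQ, hdOffQQ, zero_mul]
        · rw [Set.indicator_of_notMem hC2]
      · by_cases hC2 : C ∈ {R : Set G | R.Nonempty ∧ (Gr.induce R).Connected}
        · rw [Set.indicator_of_mem hC2, Set.indicator_of_mem
            (show C ∈ {R : Set G | R.Nonempty ∧ (Gr.induce R).Connected ∧ R ≠ Q} from
              ⟨hC2.1, hC2.2, hCQ⟩)]
        · rw [Set.indicator_of_notMem hC2, Set.indicator_of_notMem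
            (fun h : C ∈ {R : Set G | R.Nonempty ∧ (Gr.induce R).Connected ∧ R ≠ Q} =>
              hC2 ⟨h.1, h.2.1⟩)]
    rw [hfQval, hbridge, hgen (fun C => lamSet μ C p)]
    -- evaluate the union terms
    have hterm1 : ∀ r ∈ obF, (muSet μ (Q ∪ {r}) / muSet μ Q) * A r * lamSet μ (Q ∪ {r}) p
        = (μ p / muSet μ Q) * A r := by
      intro r hr
      have hU : 0 < muSet μ (Q ∪ {r}) := muSet_pos hμpos hμsum (hUne' r)
      rw [lamSet, if_pos (Set.mem_union_left _ hpQ)]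
      have hU2 : muSet μ (insert r Q) ≠ 0 := by
        rw [← Set.union_singleton]; exact hU.ne'
      field_simp [hU2]
    -- evaluate the component terms
    have hterm2 : ∀ q ∈ ibF, (∑ C ∈ compsF q, (muSet μ C / muSet μ Q) * B q * lamSet μ C p)
        = if q = p then 0 else B q * (μ p / muSet μ Q) := by
      intro q hq
      have hqQ : q ∈ Q := ((hibF_mem q).mp hq).1
      by_cases hqp : q = p
      · rw [if_pos hqp]
        apply Finset.sum_eq_zero
        intro C hC
        have hpC : p ∉ C := fun h =>
          (((hcompsF_mem q hqQ C).mp hC).1 h).2 (hqp ▸ rfl)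
        rw [lamSet, if_neg hpC, mul_zero]
      · rw [if_neg hqp]
        have hpA : p ∈ Q \ {q} := ⟨hpQ, fun h => hqp (Set.mem_singleton_iff.mp h).symm⟩
        have hC₀c : IsCompOf Gr (Q \ {q}) (compOf Gr (Q \ {q}) p) := compOf_isCompOf hpA
        have hC₀m : compOf Gr (Q \ {q}) p ∈ compsF q := (hcompsF_mem q hqQ _).mpr hC₀c
        have hpC₀ : p ∈ compOf Gr (Q \ {q}) p := mem_compOf_self hpA
        have hC₀pos : 0 < muSet μ (compOf Gr (Q \ {q}) p) :=
          muSet_pos hμpos hμsum ⟨p, hpC₀⟩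
        rw [Finset.sum_eq_single (compOf Gr (Q \ {q}) p) ?_ ?_]
        · rw [lamSet, if_pos hpC₀]
          field_simp
        · intro C hC hne
          have hpC : p ∉ C := fun h =>
            hne (isCompOf_eq_compOf ((hcompsF_mem q hqQ C).mp hC) h)
          rw [lamSet, if_neg hpC, mul_zero]
        · intro h; exact absurd hC₀m h
    rw [Finset.sum_congr rfl hterm1, Finset.sum_congr rfl hterm2]
    -- the diagonal removal in the ibF sum
    have hBp0 : p ∉ ibF → B p = 0 := fun h =>
      hBzero p hpQ (fun h2 => h ((hibF_mem p).mpr h2))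
    have hite : (∑ q ∈ ibF, if q = p then 0 else B q * (μ p / muSet μ Q))
        = (∑ q ∈ ibF, B q * (μ p / muSet μ Q)) - B p * (μ p / muSet μ Q) := by
      have hpt : ∀ q ∈ ibF, (if q = p then 0 else B q * (μ p / muSet μ Q))
          = B q * (μ p / muSet μ Q) - (if q = p then B q * (μ p / muSet μ Q) else 0) := by
        intro q _
        by_cases h : q = p <;> simp [h]
      rw [Finset.sum_congr rfl hpt, Finset.sum_sub_distrib, Finset.sum_ite_eq' ibF p
        (fun q => B q * (μ p / muSet μ Q))]
      by_cases hpib : p ∈ ibF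
      · rw [if_pos hpib]
      · rw [if_neg hpib, hBp0 hpib, zero_mul, sub_zero]
    rw [hite]
    -- B on Q is supported on the outer boundary
    have hBfin : ∀ q, q ∈ Q → B q = ∑ r ∈ obF, L q r := by
      intro q hqQ
      rw [show B q = ∑' s : {s : G // s ∉ Q}, L q (s : G) from rfl]
      rw [tsum_eq_sum (s := obF.attach.image
        (fun r => (⟨r.1, ((hobF_mem r.1).mp r.2).1⟩ : {s : G // s ∉ Q}))) ?_]
      · rw [Finset.sum_image (by
          intro x _ y _ hxy
          exact Subtype.ext (congrArg (fun z : {s : G // s ∉ Q} => (z : G)) hxy))]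
        exact Finset.sum_attach obF (fun r => L q r)
      · intro b hb
        by_contra hL
        have hne : q ≠ (b : G) := fun h => b.2 (h ▸ hqQ)
        have hpos : 0 < L q (b : G) := lt_of_le_of_ne (hnn q (b : G) hne) (Ne.symm hL)
        have hpos2 : 0 < L (b : G) q := by
          have := hrev q (b : G)
          nlinarith [hμpos q, hμpos (b : G)]
        exact hb (Finset.mem_image.mpr ⟨⟨(b : G),
          (hobF_mem _).mpr ⟨b.2, q, hqQ, hpos2⟩⟩, Finset.mem_attach _ _, Subtype.ext rfl⟩)
    -- the exchange identity
    have hsummQB : ∀ r ∈ obF, Summable (fun q : Q => μ (q : G) * L (q : G) r) := by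
      intro r hr
      have hrQ : r ∉ Q := ((hobF_mem r).mp hr).1
      exact ((summable_row_notmem hsumL hrQ).mul_left (μ r)).congr
        (fun q => by rw [hrev r (q : G)])
    have hex : (∑ r ∈ obF, μ r * A r) = ∑ q ∈ ibF, μ q * B q := by
      have e1 : ∀ r ∈ obF, μ r * A r = ∑' q : Q, μ (q : G) * L (q : G) r := by
        intro r hr
        rw [show A r = ∑' q : Q, L r (q : G) from rfl, ← tsum_mul_left]
        exact tsum_congr (fun q => hrev r (q : G))
      rw [Finset.sum_congr rfl e1, ← Summable.tsum_finsetSum hsummQB]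
      have e2 : ∀ q : Q, (∑ r ∈ obF, μ (q : G) * L (q : G) r) = μ (q : G) * B (q : G) := by
        intro q
        rw [← Finset.mul_sum, hBfin (q : G) q.2]
      rw [tsum_congr e2]
      rw [tsum_eq_sum (s := ibF.attach.image
        (fun q => (⟨q.1, (((hibF_mem q.1).mp q.2)).1⟩ : Q))) ?_]
      · rw [Finset.sum_image (by
          intro x _ y _ hxy
          exact Subtype.ext (congrArg (fun z : Q => (z : G)) hxy))]
        exact Finset.sum_attach ibF (fun q => μ q * B q)
      · intro b hb
        by_contra hne0
        have hBb : B (b : G) ≠ 0 := fun h => hne0 (by rw [h, mul_zero])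
        have hbib : (b : G) ∈ ibS := by
          by_contra hbib
          exact hBb (hBzero (b : G) b.2 hbib)
        exact hb (Finset.mem_image.mpr ⟨⟨(b : G), (hibF_mem _).mpr hbib⟩,
          Finset.mem_attach _ _, Subtype.ext rfl⟩)
    -- the row identity
    have hApB : A p = -(B p) := by
      rw [show A p = ∑' q : Q, L p (q : G) from rfl, row_split hsumL hrow hpQ,
        show (∑' s : {q : G // q ∉ Q}, L p (s : G)) = B p from rfl]
    -- final algebra
    have hsplit1 : (∑ r ∈ obF, ((muSet μ Q + μ r) / muSet μ Q) * A r)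
        = (∑ r ∈ obF, A r) + (∑ r ∈ obF, μ r * A r) / muSet μ Q := by
      have hpt : ∀ r ∈ obF, ((muSet μ Q + μ r) / muSet μ Q) * A r
          = A r + (μ r * A r) / muSet μ Q := by
        intro r _
        field_simp
      rw [Finset.sum_congr rfl hpt, Finset.sum_add_distrib, Finset.sum_div]
    have hsplit2 : (∑ q ∈ ibF, ((muSet μ Q - μ q) / muSet μ Q) * B q)
        = (∑ q ∈ ibF, B q) - (∑ q ∈ ibF, μ q * B q) / muSet μ Q := by
      have hpt : ∀ q ∈ ibF, ((muSet μ Q - μ q) / muSet μ Q) * B q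
          = B q - (μ q * B q) / muSet μ Q := by
        intro q _
        field_simp
      rw [Finset.sum_congr rfl hpt, Finset.sum_sub_distrib, Finset.sum_div]
    rw [hSval, hsplit1, hsplit2, hex, hApB,
      show (∑ r ∈ obF, (μ p / muSet μ Q) * A r)
        = (μ p / muSet μ Q) * ∑ r ∈ obF, A r from (Finset.mul_sum _ _ _).symm,
      show (∑ q ∈ ibF, B q * (μ p / muSet μ Q))
        = (∑ q ∈ ibF, B q) * (μ p / muSet μ Q) from (Finset.sum_mul _ _ _).symm]
    field_simp
    ring
  · -- p outside Q
    by_cases hpob : p ∈ obS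
    · have hUne : (Q ∪ {p}).Nonempty := hQne.mono Set.subset_union_left
      set R₀ : {R : Set G // R.Nonempty ∧ (Gr.induce R).Connected} :=
        ⟨Q ∪ {p}, ⟨hUne, hUconn p hpob⟩⟩ with hR₀
      have hμU : 0 < muSet μ (Q ∪ {p}) := muSet_pos hμpos hμsum hUne
      rw [tsum_eq_single R₀ ?_]
      · have hUneQ : Q ∪ {p} ≠ Q := fun h =>
          hpQ (h ▸ (Set.mem_union_right Q rfl : p ∈ Q ∪ {p}))
        show dualGen L μ Gr Q (Q ∪ {p}) * lamSet μ (Q ∪ {p}) p = μ p * A p / muSet μ Q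
        rw [dualGen, if_neg hUneQ, dualOff_union hpQ, lamSet,
          if_pos (show p ∈ Q ∪ {p} from Set.mem_union_right Q rfl)]
        simp only [hA]
        have hU2 : muSet μ (insert p Q) ≠ 0 := by
          rw [← Set.union_singleton]; exact hμU.ne'
        field_simp [hU2]
      · intro R hR
        show dualGen L μ Gr Q (R : Set G) * lamSet μ (R : Set G) p = 0
        rcases eq_or_ne (R : Set G) Q with hRQ | hRQ
        · rw [hRQ, lamSet, if_neg hpQ, mul_zero]
        · rw [dualGen, if_neg hRQ]
          by_cases h0 : dualOff L μ Gr Q (R : Set G) = 0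
          · rw [h0, zero_mul]
          rcases hoffsupp (R : Set G) h0 with ⟨r, hrob, hre⟩ | ⟨q, hqib, hcomp⟩
          · have hpR : p ∉ (R : Set G) := by
              rw [hre]
              rintro (h | h)
              · exact hpQ h
              · refine hR (Subtype.ext ?_)
                have hpr : p = r := Set.mem_singleton_iff.mp h
                rw [hre, ← hpr, hR₀]
            rw [lamSet, if_neg hpR, mul_zero]
          · have hpR : p ∉ (R : Set G) := fun h => hpQ (hcomp.1 h).1
            rw [lamSet, if_neg hpR, mul_zero]
    · have hAp : A p = 0 := hAzero p hpQ hpob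
      have hz : ∀ R : {R : Set G // R.Nonempty ∧ (Gr.induce R).Connected},
          dualGen L μ Gr Q (R : Set G) * lamSet μ (R : Set G) p = 0 := by
        intro R
        rcases eq_or_ne (R : Set G) Q with hRQ | hRQ
        · rw [hRQ, lamSet, if_neg hpQ, mul_zero]
        · rw [dualGen, if_neg hRQ]
          by_cases h0 : dualOff L μ Gr Q (R : Set G) = 0
          · rw [h0, zero_mul]
          rcases hoffsupp (R : Set G) h0 with ⟨r, hrob, hre⟩ | ⟨q, hqib, hcomp⟩
          · have hpR : p ∉ (R : Set G) := by
              rw [hre]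
              rintro (h | h)
              · exact hpQ h
              · exact hpob ((Set.mem_singleton_iff.mp h) ▸ hrob)
            rw [lamSet, if_neg hpR, mul_zero]
          · have hpR : p ∉ (R : Set G) := fun h => hpQ (hcomp.1 h).1
            rw [lamSet, if_neg hpR, mul_zero]
      rw [tsum_congr hz, tsum_zero, hAp, mul_zero, zero_div]
end

section
/- Let Q ⊆ G be nonempty and connected with finite inner boundary, i.e. {p ∈ Q : L(p,q) > 0 for some q ∉ Q} is finite. Then for each p ∈ Q the set 𝒞(Q∖{p}) is finite, all the sums below have only finitely many nonzero terms or are absolutely convergent, and Σ_{Q'≠Q} L*(Q,Q')·(1/μ(Q') − 1/μ(Q)) = Σ_{p∈Q} ((|𝒞(Q∖{p})| − 1)/μ(Q))·Σ_{q∉Q} L(p,q), where Q' ranges over nonempty connected subsets of G. (This is the value of L* applied to the function Q ↦ 1/μ(Q) at Q.) -/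
open scoped BigOperators

attribute [local instance] Classical.propDecidable

section Graph
variable {G : Type*} (Gr : SimpleGraph G)

/-- The reachability class of `v` in the graph induced on `A`. -/
def cc (A : Set G) (v : G) : Set G :=
  {w | ∃ hv : v ∈ A, ∃ hw : w ∈ A, (Gr.induce A).Reachable ⟨v, hv⟩ ⟨w, hw⟩}

variable {Gr}

lemma cc_subset {A : Set G} {v : G} : cc Gr A v ⊆ A := fun _ h => h.2.choose

lemma mem_cc_self {A : Set G} {v : G} (hv : v ∈ A) : v ∈ cc Gr A v :=
  ⟨hv, hv, SimpleGraph.Reachable.refl _⟩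

lemma reachable_mono {A B : Set G} (h : A ⊆ B) {x y : G} (hx : x ∈ A) (hy : y ∈ A)
    (r : (Gr.induce A).Reachable ⟨x, hx⟩ ⟨y, hy⟩) :
    (Gr.induce B).Reachable ⟨x, h hx⟩ ⟨y, h hy⟩ := by
  have := r.map (Gr.induceHomOfLE h).toHom
  exact this

lemma mem_cc_of_reachable {A : Set G} {v w x : G} (hw : w ∈ cc Gr A v)
    (hx : x ∈ A) (hw' : w ∈ A)
    (r : (Gr.induce A).Reachable ⟨w, hw'⟩ ⟨x, hx⟩) : x ∈ cc Gr A v := by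
  obtain ⟨hv, hw2, rvw⟩ := hw
  exact ⟨hv, hx, rvw.trans (by convert r)⟩

lemma cc_connected {A : Set G} {v : G} (hv : v ∈ A) : (Gr.induce (cc Gr A v)).Connected := by
  classical
  apply Gr.induce_connected_of_patches v (mem_cc_self hv)
  intro w hw
  obtain ⟨hv', hw', r⟩ := hw
  obtain ⟨p⟩ := r
  set p' : Gr.Walk v w := p.map (SimpleGraph.Embedding.induce A).toHom with hp'
  refine ⟨{x | x ∈ p'.support}, ?_, ?_, ?_, ?_⟩
  · intro x hx
    simp only [Set.mem_setOf_eq, hp', SimpleGraph.Walk.support_map, List.mem_map] at hx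
    change x ∈ (p.map (SimpleGraph.Embedding.induce A).toHom).support at hx
    rw [SimpleGraph.Walk.support_map, List.mem_map] at hx
    obtain ⟨y, hy, rfl⟩ := hx
    have : (Gr.induce A).Reachable ⟨v, hv'⟩ y := ⟨p.takeUntil y hy⟩
    exact ⟨hv', y.2, this⟩
  · exact p'.start_mem_support
  · exact p'.end_mem_support
  · exact (p'.connected_induce_support).preconnected _ _

lemma subset_cc_of_connected {A B : Set G} {v : G} (hBA : B ⊆ A)
    (hconn : (Gr.induce B).Connected) (hv : v ∈ B) : B ⊆ cc Gr A v := by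
  intro b hb
  have r := hconn.preconnected ⟨v, hv⟩ ⟨b, hb⟩
  exact ⟨hBA hv, hBA hb, reachable_mono hBA (hv) (hb) r⟩

lemma cc_isCompOf {A : Set G} {v : G} (hv : v ∈ A) : IsCompOf Gr A (cc Gr A v) := by
  refine ⟨cc_subset, cc_connected hv, ?_⟩
  intro C hsub hCA hCconn
  have : C ⊆ cc Gr A v := subset_cc_of_connected hCA hCconn (hsub (mem_cc_self hv))
  exact subset_antisymm this hsub

lemma isCompOf_eq_cc {A B : Set G} (h : IsCompOf Gr A B) {v : G} (hv : v ∈ B) :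
    B = cc Gr A v := by
  obtain ⟨hBA, hconn, hmax⟩ := h
  refine (hmax (cc Gr A v) (subset_cc_of_connected hBA hconn hv) cc_subset
    (cc_connected (hBA hv))).symm

lemma isCompOf_nonempty {A B : Set G} (h : IsCompOf Gr A B) : B.Nonempty :=
  let ⟨x⟩ := h.2.1.nonempty; ⟨x, x.2⟩

/-- distinct components are disjoint -/
lemma isCompOf_eq_of_mem {A B B' : Set G} (h : IsCompOf Gr A B) (h' : IsCompOf Gr A B')
    {v : G} (hv : v ∈ B) (hv' : v ∈ B') : B = B' := by
  rw [isCompOf_eq_cc h hv, isCompOf_eq_cc h' hv']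

end Graph

section Graph2
variable {G : Type*} {Gr : SimpleGraph G}

lemma induce_singleton_connected (v : G) : (Gr.induce {v}).Connected := by
  rw [SimpleGraph.connected_iff]
  refine ⟨fun a b => ?_, ⟨⟨v, rfl⟩⟩⟩
  rw [Subsingleton.elim a b]

lemma walk_to_p {Q : Set G} {p : G} {x y : Q}
    (w : (Gr.induce Q).Walk x y) (hx : (x : G) ≠ p) (hy : (y : G) = p) :
    ∃ z, z ∈ cc Gr (Q \ {p}) (x : G) ∧ Gr.Adj p z := by
  induction w with
  | nil => exact absurd hy hx
  | @cons a b c hab w ih =>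
    have hxmem : (a : G) ∈ Q \ {p} := ⟨a.2, hx⟩
    by_cases hb : (b : G) = p
    · refine ⟨a, mem_cc_self hxmem, ?_⟩
      have : Gr.Adj (a : G) (b : G) := hab
      rw [hb] at this
      exact this.symm
    · obtain ⟨z, hz, hadj⟩ := ih hb hy
      refine ⟨z, ?_, hadj⟩
      have hbmem : (b : G) ∈ Q \ {p} := ⟨b.2, hb⟩
      have hba : (Gr.induce (Q \ {p})).Reachable ⟨b, hbmem⟩ ⟨a, hxmem⟩ := by
        have : (Gr.induce (Q \ {p})).Adj ⟨b, hbmem⟩ ⟨a, hxmem⟩ := by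
          have : Gr.Adj (a : G) (b : G) := hab
          exact this.symm
        exact this.reachable
      obtain ⟨hb1, hz1, rz⟩ := hz
      exact ⟨hxmem, hz1, (hba.symm.trans (by convert rz)).symm.symm⟩

lemma compOf_has_adj {Q : Set G} (hQ : (Gr.induce Q).Connected) {p : G} (hp : p ∈ Q)
    {B : Set G} (hB : IsCompOf Gr (Q \ {p}) B) : ∃ z, z ∈ B ∧ Gr.Adj p z := by
  obtain ⟨b₀, hb₀⟩ := isCompOf_nonempty hB
  have hb₀Q : b₀ ∈ Q := (hB.1 hb₀).1
  have hb₀p : b₀ ≠ p := (hB.1 hb₀).2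
  obtain ⟨w⟩ := hQ.preconnected ⟨b₀, hb₀Q⟩ ⟨p, hp⟩
  obtain ⟨z, hz, hadj⟩ := walk_to_p w hb₀p rfl
  refine ⟨z, ?_, hadj⟩
  rw [isCompOf_eq_cc hB hb₀]
  exact hz

lemma comp_p_unique {Q : Set G} (hQ : (Gr.induce Q).Connected) {p p' : G}
    (hp : p ∈ Q) (hp' : p' ∈ Q) {B : Set G}
    (hB : IsCompOf Gr (Q \ {p}) B) (hB' : IsCompOf Gr (Q \ {p'}) B) : p = p' := by
  by_contra hne
  obtain ⟨z, hzB, hadj⟩ := compOf_has_adj hQ hp' hB'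
  have hp'B : p' ∉ B := fun h => (hB'.1 h).2 rfl
  have hconn : (Gr.induce (B ∪ {p'})).Connected :=
    SimpleGraph.connected_induce_union hB.2.1.preconnected (induce_singleton_connected p').preconnected
      hzB rfl hadj.symm
  have hsub : B ∪ {p'} ⊆ Q \ {p} :=
    Set.union_subset hB.1 (by
      rw [Set.singleton_subset_iff]
      exact ⟨hp', fun h => hne (Set.mem_singleton_iff.mp h).symm⟩)
  have := hB.2.2 (B ∪ {p'}) Set.subset_union_left hsub hconn
  exact hp'B (this ▸ Set.mem_union_right B rfl)

lemma comps_finite {Q : Set G} (hQ : (Gr.induce Q).Connected) {p : G} (hp : p ∈ Q)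
    (hN : {q | Gr.Adj p q}.Finite) : {B : Set G | IsCompOf Gr (Q \ {p}) B}.Finite := by
  set f : Set G → G := fun B =>
    if h : IsCompOf Gr (Q \ {p}) B then (compOf_has_adj hQ hp h).choose else p
  apply Set.Finite.of_finite_image (f := f)
  · apply hN.subset
    rintro _ ⟨B, hB, rfl⟩
    simp only [Set.mem_setOf_eq] at hB
    simp only [f, dif_pos hB]
    exact (compOf_has_adj hQ hp hB).choose_spec.2
  · intro B hB B' hB' hf
    simp only [Set.mem_setOf_eq] at hB hB'
    simp only [f, dif_pos hB, dif_pos hB'] at hf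
    exact isCompOf_eq_of_mem hB hB'
      (hf ▸ (compOf_has_adj hQ hp hB).choose_spec.1)
      ((compOf_has_adj hQ hp hB').choose_spec.1)

end Graph2

section Mu
variable {G : Type*} {μ : G → ℝ}

lemma summable_of_finsupport {α : Type*} {f : α → ℝ} (h : {x | f x ≠ 0}.Finite) :
    Summable f := by
  apply summable_of_ne_finset_zero (s := h.toFinset)
  intro b hb
  simpa using fun h' => hb (h.mem_toFinset.mpr h')

lemma muSet_pos (hμpos : ∀ p, 0 < μ p) (hμsum : Summable μ) {Q : Set G} (hQ : Q.Nonempty) :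
    0 < muSet μ Q := by
  obtain ⟨p, hp⟩ := hQ
  exact Summable.tsum_pos (hμsum.subtype Q) (fun i => (hμpos i).le) ⟨p, hp⟩ (hμpos p)

lemma muSet_union_singleton (hμsum : Summable μ) {Q : Set G} {p : G} (hp : p ∉ Q) :
    muSet μ (Q ∪ {p}) = muSet μ Q + μ p := by
  rw [muSet, Summable.tsum_union_disjoint (f := μ) (Set.disjoint_singleton_right.mpr hp)
    (hμsum.subtype Q) (hμsum.subtype ({p} : Set G)), tsum_singleton]
  rfl

lemma muSet_diff_singleton (hμsum : Summable μ) {Q : Set G} {p : G} (hp : p ∈ Q) :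
    muSet μ (Q \ {p}) = muSet μ Q - μ p := by
  have h1 : (Q \ {p}) ∪ {p} = Q := Set.diff_union_of_subset (Set.singleton_subset_iff.mpr hp)
  have h2 := muSet_union_singleton (Q := Q \ {p}) (p := p) hμsum (fun h => h.2 rfl)
  rw [h1] at h2
  linarith

lemma muSet_biUnion (hμsum : Summable μ) {ι : Type*} (s : Finset ι) (t : ι → Set G)
    (hd : (s : Set ι).Pairwise (Function.onFun Disjoint t)) :
    muSet μ (⋃ i ∈ s, t i) = ∑ i ∈ s, muSet μ (t i) := by
  exact Summable.tsum_finset_bUnion_disjoint hd (fun i _ => hμsum.subtype _)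

end Mu

section Part
variable {G : Type*} {Gr : SimpleGraph G} {μ : G → ℝ}

lemma comps_cover {A : Set G} : A = ⋃ B ∈ {B : Set G | IsCompOf Gr A B}, B := by
  apply Set.Subset.antisymm
  · intro v hv
    exact Set.mem_biUnion (cc_isCompOf hv) (mem_cc_self hv)
  · intro v hv
    simp only [Set.mem_iUnion] at hv
    obtain ⟨B, hB, hvB⟩ := hv
    exact hB.1 hvB

lemma comps_disjoint {A : Set G} :
    {B : Set G | IsCompOf Gr A B}.Pairwise (Function.onFun Disjoint id) := by
  intro B hB B' hB' hne
  have : Disjoint B B' := by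
    rw [Set.disjoint_left]
    intro v hv hv'
    exact hne (isCompOf_eq_of_mem hB hB' hv hv')
  exact this

lemma muSet_eq_sum_comps (hμsum : Summable μ) {A : Set G}
    (hfin : {B : Set G | IsCompOf Gr A B}.Finite) :
    muSet μ A = ∑ B ∈ hfin.toFinset, muSet μ B := by
  have := muSet_biUnion (G := G) hμsum hfin.toFinset id (by
    intro B hB B' hB' hne
    exact comps_disjoint (hfin.mem_toFinset.mp hB) (hfin.mem_toFinset.mp hB') hne)
  have hA : (⋃ i ∈ hfin.toFinset, id i) = A := by
    ext v
    simp only [Set.mem_iUnion, hfin.mem_toFinset, Set.mem_setOf_eq, id]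
    constructor
    · rintro ⟨B, hB, hv⟩; exact hB.1 hv
    · intro hv; exact ⟨_, cc_isCompOf hv, mem_cc_self hv⟩
  rw [congrArg (muSet μ) hA] at this
  simpa using this

end Part

/-- Let `Q ⊆ G` be nonempty and connected with finite inner boundary. Then for each `p ∈ Q`
the set `𝒞(Q∖{p})` is finite, all the sums below have only finitely many nonzero terms or
are absolutely convergent, and
`Σ_{Q'≠Q} L*(Q,Q')·(1/μ(Q') − 1/μ(Q))
  = Σ_{p∈Q} ((|𝒞(Q∖{p})| − 1)/μ(Q))·Σ_{q∉Q} L(p,q)`,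
where `Q'` ranges over nonempty connected subsets of `G`. (This is the value of `L*` applied
to the function `Q ↦ 1/μ(Q)` at `Q`.) -/
theorem dual_gen_applied_to_inv_mu {G : Type*} [Countable G]
    (L : G → G → ℝ) (μ : G → ℝ) (Gr : SimpleGraph G)
    (hnn : ∀ p q : G, p ≠ q → 0 ≤ L p q)
    (hsumL : ∀ p : G, Summable fun q : {q : G // q ≠ p} => L p (q : G))
    (hrow : ∀ p : G, ∑' q : {q : G // q ≠ p}, L p (q : G) = -(L p p))
    (hfin : ∀ p : G, {q : G | 0 < L p q ∨ 0 < L q p}.Finite)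
    (hμpos : ∀ p, 0 < μ p) (hμsum : Summable μ) (hμone : ∑' p, μ p = 1)
    (hrev : ∀ p q : G, μ p * L p q = μ q * L q p)
    (hint : Summable fun p => μ p * (-(L p p)))
    (hGr : ∀ p q : G, Gr.Adj p q ↔ p ≠ q ∧ L p q ≠ 0)
    (hconn : Gr.Connected)
    (Q : Set G) (hQne : Q.Nonempty) (hQconn : (Gr.induce Q).Connected)
    (hbd : {p : G | p ∈ Q ∧ ∃ q, q ∉ Q ∧ 0 < L p q}.Finite) :
    (∀ p ∈ Q, {B : Set G | IsCompOf Gr (Q \ {p}) B}.Finite) ∧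
    (∀ p ∈ Q, Summable fun q : {q : G // q ∉ Q} => L p (q : G)) ∧
    Summable (fun R : {R : Set G // R.Nonempty ∧ (Gr.induce R).Connected ∧ R ≠ Q} =>
      dualGen L μ Gr Q (R : Set G) * (1 / muSet μ (R : Set G) - 1 / muSet μ Q)) ∧
    Summable (fun p : Q =>
      (((Set.ncard {B : Set G | IsCompOf Gr (Q \ {(p : G)}) B} : ℝ) - 1) / muSet μ Q) *
        ∑' q : {q : G // q ∉ Q}, L (p : G) (q : G)) ∧
    (∑' R : {R : Set G // R.Nonempty ∧ (Gr.induce R).Connected ∧ R ≠ Q},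
        dualGen L μ Gr Q (R : Set G) * (1 / muSet μ (R : Set G) - 1 / muSet μ Q))
      = ∑' p : Q,
          (((Set.ncard {B : Set G | IsCompOf Gr (Q \ {(p : G)}) B} : ℝ) - 1) / muSet μ Q) *
            ∑' q : {q : G // q ∉ Q}, L (p : G) (q : G) := by
    classical
  have hμQ : 0 < muSet μ Q := muSet_pos hμpos hμsum hQne
  -- finiteness of neighborhoods
  have hNfin : ∀ p : G, {q : G | Gr.Adj p q}.Finite := fun p =>
    (hfin p).subset (fun q hq => by
      rcases (hGr p q).mp hq with ⟨hne, hL⟩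
      exact Or.inl (lt_of_le_of_ne (hnn p q hne) (Ne.symm hL)))
  have hcfin : ∀ p ∈ Q, {B : Set G | IsCompOf Gr (Q \ {p}) B}.Finite :=
    fun p hp => comps_finite hQconn hp (hNfin p)
  -- summability of outside rates
  have hSummS : ∀ p ∈ Q, Summable fun q : {q : G // q ∉ Q} => L p (q : G) := by
    intro p hp
    apply summable_of_finsupport
    apply ((hfin p).preimage (Subtype.val_injective.injOn)).subset
    intro x hx
    simp only [Set.mem_setOf_eq, Set.mem_preimage] at hx ⊢
    have hxp : (x : G) ≠ p := fun h => x.2 (h ▸ hp)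
    exact Or.inl (lt_of_le_of_ne (hnn p x hxp.symm) (Ne.symm hx))
  -- notation
  set S : G → ℝ := fun p => ∑' q : {q : G // q ∉ Q}, L p (q : G) with hSdef
  set A : G → ℝ := fun p => ∑' q : Q, L p (q : G) with hAdef
  set Din : Set G := {p : G | p ∈ Q ∧ ∃ q, q ∉ Q ∧ 0 < L p q} with hDindef
  have hDinFin : Din.Finite := hbd
  set Dout : Set G := {p : G | p ∉ Q ∧ ∃ q ∈ Q, L p q ≠ 0} with hDoutdef
  have hLpos_of_ne : ∀ p q : G, p ≠ q → L p q ≠ 0 → 0 < L p q :=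
    fun p q h h' => lt_of_le_of_ne (hnn p q h) (Ne.symm h')
  have hrevne : ∀ p q : G, L p q ≠ 0 → L q p ≠ 0 := by
    intro p q h h'
    have h1 := hrev p q
    rw [h'] at h1
    exact h (by
      have := mul_eq_zero.mp (h1.trans (mul_zero _)) |>.resolve_left (ne_of_gt (hμpos p))
      exact this)
  have hDoutFin : Dout.Finite := by
    apply (hDinFin.biUnion (fun q _ => hfin q)).subset
    rintro p ⟨hpQ, q, hqQ, hLpq⟩
    have h1 : L q p ≠ 0 := hrevne p q hLpq
    have hqp : q ≠ p := fun h => hpQ (h ▸ hqQ)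
    exact Set.mem_biUnion (⟨hqQ, p, hpQ, hLpos_of_ne q p hqp h1⟩ : q ∈ Din)
      (Or.inl (hLpos_of_ne q p hqp h1))
  have hSzero : ∀ p ∈ Q, p ∉ Din → S p = 0 := by
    intro p hp hnd
    have hall : ∀ q : {q : G // q ∉ Q}, L p (q : G) = 0 := by
      intro q
      have hqp : (q : G) ≠ p := fun h => q.2 (h ▸ hp)
      by_contra h
      exact hnd ⟨hp, q, q.2, hLpos_of_ne p q hqp.symm h⟩
    calc S p = ∑' q : {q : G // q ∉ Q}, (0 : ℝ) := tsum_congr hall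
      _ = 0 := tsum_zero
  have hAzero : ∀ p, p ∉ Q → p ∉ Dout → A p = 0 := by
    intro p hp hnd
    have hall : ∀ q : Q, L p (q : G) = 0 := by
      intro q
      by_contra h
      exact hnd ⟨hp, q, q.2, h⟩
    calc A p = ∑' q : Q, (0 : ℝ) := tsum_congr hall
      _ = 0 := tsum_zero
  -- evaluation of dualOff
  have hAddEval : ∀ p, p ∉ Q →
      dualOff L μ Gr Q (Q ∪ {p}) = (muSet μ (Q ∪ {p}) / muSet μ Q) * A p := by
    intro p hp
    have h : ∃ p', p' ∉ Q ∧ Q ∪ {p} = Q ∪ {p'} := ⟨p, hp, rfl⟩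
    rw [dualOff, dif_pos h]
    have hc := h.choose_spec
    have hcp : h.choose = p := by
      have hmem : p ∈ Q ∪ {h.choose} := by rw [← hc.2]; exact Set.mem_union_right _ rfl
      rcases hmem with h' | h'
      · exact absurd h' hp
      · exact (Set.mem_singleton_iff.mp h').symm
    rw [hcp]
  have hRemEval : ∀ p, p ∈ Q → ∀ B, IsCompOf Gr (Q \ {p}) B →
      dualOff L μ Gr Q B = (muSet μ B / muSet μ Q) * S p := by
    intro p hp B hB
    have h1 : ¬ ∃ p', p' ∉ Q ∧ B = Q ∪ {p'} := by
      rintro ⟨p', hp', rfl⟩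
      exact (hB.1 (Set.mem_union_left _ hp)).2 rfl
    have h2 : ∃ p', p' ∈ Q ∧ IsCompOf Gr (Q \ {p'}) B := ⟨p, hp, hB⟩
    rw [dualOff, dif_neg h1, dif_pos h2]
    have hcp : h2.choose = p :=
      comp_p_unique hQconn h2.choose_spec.1 hp h2.choose_spec.2 hB
    rw [hcp]
  have hOffSupp : ∀ R : Set G, dualOff L μ Gr Q R ≠ 0 →
      (∃ p ∈ Dout, R = Q ∪ {p}) ∨ (∃ p ∈ Din, IsCompOf Gr (Q \ {p}) R) := by
    intro R hR
    rw [dualOff] at hR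
    split_ifs at hR with h h2
    · obtain ⟨hp, hEq⟩ := h.choose_spec
      left
      refine ⟨h.choose, ⟨hp, ?_⟩, hEq⟩
      have hts : (∑' q : Q, L h.choose (q : G)) ≠ 0 := fun h0 => hR (by rw [h0, mul_zero])
      by_contra hno
      exact hts (by simpa only [hAdef] using hAzero h.choose hp (fun hd => hno hd.2))
    · obtain ⟨hp, hcomp⟩ := h2.choose_spec
      right
      refine ⟨h2.choose, ⟨hp, ?_⟩, hcomp⟩
      have hts : (∑' q : {q : G // q ∉ Q}, L h2.choose (q : G)) ≠ 0 :=
        fun h0 => hR (by rw [h0, mul_zero])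
      by_contra hno
      exact hts (by simpa only [hSdef] using hSzero h2.choose hp (fun hd => hno hd.2))
    · exact absurd rfl hR
  -- finsets
  set DinF : Finset G := hDinFin.toFinset with hDinFdef
  set DoutF : Finset G := hDoutFin.toFinset with hDoutFdef
  set compsF : G → Finset (Set G) := fun p =>
    if h : {B : Set G | IsCompOf Gr (Q \ {p}) B}.Finite then h.toFinset else ∅ with hcompsFdef
  have hmem_compsF : ∀ p ∈ Q, ∀ B : Set G, (B ∈ compsF p ↔ IsCompOf Gr (Q \ {p}) B) := by
    intro p hp B
    simp only [hcompsFdef, dif_pos (hcfin p hp)]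
    exact (hcfin p hp).mem_toFinset
  set 𝒜 : Finset (Set G) := DoutF.image (fun p => Q ∪ {p}) with h𝒜
  set ℬ : Finset (Set G) := DinF.biUnion compsF with hℬ
  have hTA : ∀ R ∈ 𝒜, R.Nonempty ∧ (Gr.induce R).Connected ∧ R ≠ Q := by
    intro R hR
    simp only [h𝒜, Finset.mem_image] at hR
    obtain ⟨p, hpF, rfl⟩ := hR
    have hpD : p ∈ Dout := hDoutFin.mem_toFinset.mp hpF
    obtain ⟨hpQ, q, hqQ, hLq⟩ := hpD
    have hadj : Gr.Adj q p := (hGr q p).mpr ⟨fun h => hpQ (h ▸ hqQ), hrevne p q hLq⟩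
    refine ⟨hQne.mono Set.subset_union_left,
      SimpleGraph.connected_induce_union hQconn.preconnected (induce_singleton_connected p).preconnected hqQ rfl hadj,
      fun hEq => hpQ (hEq ▸ Set.mem_union_right _ rfl)⟩
  have hTB : ∀ R ∈ ℬ, R.Nonempty ∧ (Gr.induce R).Connected ∧ R ≠ Q := by
    intro R hR
    simp only [hℬ, Finset.mem_biUnion] at hR
    obtain ⟨p, hpF, hRB⟩ := hR
    have hpD : p ∈ Din := hDinFin.mem_toFinset.mp hpF
    have hcomp : IsCompOf Gr (Q \ {p}) R := (hmem_compsF p hpD.1 R).mp hRB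
    refine ⟨isCompOf_nonempty hcomp, hcomp.2.1, ?_⟩
    rintro rfl
    exact (hcomp.1 hpD.1).2 rfl
  have hTmem : ∀ R ∈ 𝒜 ∪ ℬ, R.Nonempty ∧ (Gr.induce R).Connected ∧ R ≠ Q := by
    intro R hR
    rcases Finset.mem_union.mp hR with h | h
    exacts [hTA R h, hTB R h]
  set gfun : Set G → ℝ := fun R => dualGen L μ Gr Q R * (1 / muSet μ R - 1 / muSet μ Q)
    with hgfun
  have hgOff : ∀ R : Set G, R ≠ Q →
      gfun R = dualOff L μ Gr Q R * (1 / muSet μ R - 1 / muSet μ Q) := by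
    intro R hR
    simp only [hgfun, dualGen, if_neg hR]
  have hgsupp : ∀ R : Set G, R ≠ Q → gfun R ≠ 0 → R ∈ 𝒜 ∪ ℬ := by
    intro R hRQ hg
    rw [hgOff R hRQ] at hg
    have hd : dualOff L μ Gr Q R ≠ 0 := fun h => hg (by rw [h, zero_mul])
    rcases hOffSupp R hd with ⟨p, hpD, rfl⟩ | ⟨p, hpD, hcomp⟩
    · exact Finset.mem_union_left _
        (Finset.mem_image.mpr ⟨p, hDoutFin.mem_toFinset.mpr hpD, rfl⟩)
    · exact Finset.mem_union_right _
        (Finset.mem_biUnion.mpr ⟨p, hDinFin.mem_toFinset.mpr hpD,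
          (hmem_compsF p hpD.1 R).mpr hcomp⟩)
  set emb : {x // x ∈ 𝒜 ∪ ℬ} ↪ {R : Set G // R.Nonempty ∧ (Gr.induce R).Connected ∧ R ≠ Q} :=
    ⟨fun x => ⟨x.1, hTmem x.1 x.2⟩, by
      intro a b hab
      apply Subtype.ext
      have := congrArg (fun z : {R : Set G // R.Nonempty ∧ (Gr.induce R).Connected ∧ R ≠ Q} => z.1) hab
      simpa using this⟩
    with hemb
  set FinT : Finset {R : Set G // R.Nonempty ∧ (Gr.induce R).Connected ∧ R ≠ Q} :=
    (𝒜 ∪ ℬ).attach.map emb with hFinT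
  have hvanish : ∀ x : {R : Set G // R.Nonempty ∧ (Gr.induce R).Connected ∧ R ≠ Q},
      x ∉ FinT → gfun x.1 = 0 := by
    intro x hx
    by_contra h
    exact hx (Finset.mem_map.mpr ⟨⟨x.1, hgsupp x.1 x.2.2.2 h⟩, Finset.mem_attach _ _,
      Subtype.ext rfl⟩)
  have hLHS : (∑' R : {R : Set G // R.Nonempty ∧ (Gr.induce R).Connected ∧ R ≠ Q},
      dualGen L μ Gr Q (R : Set G) * (1 / muSet μ (R : Set G) - 1 / muSet μ Q))
      = ∑ R ∈ 𝒜 ∪ ℬ, gfun R := by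
    rw [tsum_eq_sum (s := FinT) hvanish, hFinT, Finset.sum_map]
    simp only [hemb, Function.Embedding.coeFn_mk]
    exact Finset.sum_attach (𝒜 ∪ ℬ) gfun
  have hdisjAB : Disjoint 𝒜 ℬ := by
    rw [Finset.disjoint_left]
    intro R hA hB
    simp only [h𝒜, Finset.mem_image] at hA
    obtain ⟨p, hpF, rfl⟩ := hA
    have hpQ : p ∉ Q := (hDoutFin.mem_toFinset.mp hpF).1
    simp only [hℬ, Finset.mem_biUnion] at hB
    obtain ⟨p', hp'F, hRB⟩ := hB
    have hp'D := hDinFin.mem_toFinset.mp hp'F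
    have hcomp := (hmem_compsF p' hp'D.1 _).mp hRB
    exact hpQ (hcomp.1 (Set.mem_union_right _ rfl)).1
  have hAsum : ∑ R ∈ 𝒜, gfun R = ∑ p ∈ DoutF, (-(μ p * A p) / (muSet μ Q) ^ 2) := by
    rw [h𝒜, Finset.sum_image (by
      intro p hp p' hp' hEq
      have hpQ : p ∉ Q := (hDoutFin.mem_toFinset.mp hp).1
      have hmem : p ∈ Q ∪ {p'} := by rw [← show Q ∪ {p} = Q ∪ {p'} from hEq]; exact Set.mem_union_right _ rfl
      rcases hmem with h' | h'
      · exact absurd h' hpQ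
      · exact Set.mem_singleton_iff.mp h')]
    apply Finset.sum_congr rfl
    intro p hpF
    have hpD := hDoutFin.mem_toFinset.mp hpF
    have hne : Q ∪ {p} ≠ Q := fun h => hpD.1 (h ▸ Set.mem_union_right _ rfl)
    rw [hgOff _ hne, hAddEval p hpD.1, muSet_union_singleton hμsum hpD.1]
    have h1 : 0 < muSet μ Q + μ p := by have := hμpos p; linarith
    field_simp
    ring
  have hpairDisj : (DinF : Set G).PairwiseDisjoint compsF := by
    intro p hp p' hp' hne
    have hpD := hDinFin.mem_toFinset.mp hp
    have hp'D := hDinFin.mem_toFinset.mp hp'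
    rw [Function.onFun, Finset.disjoint_left]
    intro B hB hB'
    exact hne (comp_p_unique hQconn hpD.1 hp'D.1
      ((hmem_compsF p hpD.1 B).mp hB) ((hmem_compsF p' hp'D.1 B).mp hB'))
  have hcompsF_muSum : ∀ p ∈ DinF, ∑ B ∈ compsF p, muSet μ B = muSet μ Q - μ p := by
    intro p hpF
    have hpQ := (hDinFin.mem_toFinset.mp hpF).1
    have h1 := muSet_eq_sum_comps (Gr := Gr) hμsum (hcfin p hpQ)
    rw [muSet_diff_singleton hμsum hpQ] at h1
    have hcF : compsF p = (hcfin p hpQ).toFinset := by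
      simp only [hcompsFdef, dif_pos (hcfin p hpQ)]
    rw [hcF, ← h1]
  have hBsum : ∑ R ∈ ℬ, gfun R = ∑ p ∈ DinF,
      (((compsF p).card : ℝ) * S p / muSet μ Q - (muSet μ Q - μ p) * S p / (muSet μ Q) ^ 2) := by
    rw [hℬ, Finset.sum_biUnion hpairDisj]
    apply Finset.sum_congr rfl
    intro p hpF
    have hpQ := (hDinFin.mem_toFinset.mp hpF).1
    have hterm : ∀ B ∈ compsF p,
        gfun B = S p / muSet μ Q - muSet μ B * (S p / (muSet μ Q) ^ 2) := by
      intro B hB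
      have hcomp := (hmem_compsF p hpQ B).mp hB
      have hBne : B ≠ Q := by
        rintro rfl
        exact (hcomp.1 hpQ).2 rfl
      have hμB : 0 < muSet μ B := muSet_pos hμpos hμsum (isCompOf_nonempty hcomp)
      rw [hgOff _ hBne, hRemEval p hpQ B hcomp]
      field_simp
    rw [Finset.sum_congr rfl hterm, Finset.sum_sub_distrib, Finset.sum_const,
      ← Finset.sum_mul, hcompsF_muSum p hpF, nsmul_eq_mul]
    ring
  -- RHS as finite sum
  have hDinsubQ : ∀ p ∈ DinF, p ∈ Q := fun p hp => (hDinFin.mem_toFinset.mp hp).1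
  set embP : {x // x ∈ DinF} ↪ Q :=
    ⟨fun x => ⟨x.1, hDinsubQ x.1 x.2⟩, by
      intro a b hab
      apply Subtype.ext
      have := congrArg (fun z : Q => z.1) hab
      simpa using this⟩ with hembP
  set FinP : Finset Q := DinF.attach.map embP with hFinP
  set rfun : G → ℝ := fun p =>
    (((Set.ncard {B : Set G | IsCompOf Gr (Q \ {p}) B} : ℝ) - 1) / muSet μ Q) * S p with hrfun
  have hvanishP : ∀ x : Q, x ∉ FinP → rfun x.1 = 0 := by
    intro x hx
    have hxD : (x : G) ∉ Din := by
      intro hd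
      exact hx (Finset.mem_map.mpr ⟨⟨x.1, hDinFin.mem_toFinset.mpr hd⟩, Finset.mem_attach _ _,
        Subtype.ext rfl⟩)
    simp only [hrfun]
    rw [hSzero x.1 x.2 hxD, mul_zero]
  have hRHS : (∑' p : Q,
      (((Set.ncard {B : Set G | IsCompOf Gr (Q \ {(p : G)}) B} : ℝ) - 1) / muSet μ Q) *
        ∑' q : {q : G // q ∉ Q}, L (p : G) (q : G)) = ∑ p ∈ DinF, rfun p := by
    rw [tsum_eq_sum (s := FinP) hvanishP, hFinP, Finset.sum_map]
    simp only [hembP, Function.Embedding.coeFn_mk]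
    exact Finset.sum_attach DinF rfun
  -- swap identity setup
  set KoutSet : Set G := (⋃ p ∈ Din, {q | 0 < L p q ∨ 0 < L q p}) \ Q with hKoutSetdef
  have hKoutFin : KoutSet.Finite := (hDinFin.biUnion (fun p _ => hfin p)).diff
  set KoutG : Finset G := hKoutFin.toFinset with hKoutGdef
  have hKoutNotQ : ∀ q ∈ KoutG, q ∉ Q := fun q hq => (hKoutFin.mem_toFinset.mp hq).2
  set embOut : {x // x ∈ KoutG} ↪ {q : G // q ∉ Q} :=
    ⟨fun x => ⟨x.1, hKoutNotQ x.1 x.2⟩, by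
      intro a b hab
      apply Subtype.ext
      have := congrArg (fun z : {q : G // q ∉ Q} => z.1) hab
      simpa using this⟩ with hembOut
  have hSfin : ∀ p ∈ DinF, S p = ∑ q ∈ KoutG, L p q := by
    intro p hpF
    have hpD := hDinFin.mem_toFinset.mp hpF
    have hvan : ∀ x : {q : G // q ∉ Q}, x ∉ KoutG.attach.map embOut → L p (x : G) = 0 := by
      intro x hx
      by_contra h
      have hne : p ≠ (x : G) := fun hh => x.2 (hh ▸ hpD.1)
      have hpos : 0 < L p (x : G) := hLpos_of_ne p x hne h
      have hxK : (x : G) ∈ KoutG := hKoutFin.mem_toFinset.mpr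
        ⟨Set.mem_biUnion hpD (Or.inl hpos), x.2⟩
      exact hx (Finset.mem_map.mpr ⟨⟨x.1, hxK⟩, Finset.mem_attach _ _, Subtype.ext rfl⟩)
    calc S p = ∑ x ∈ KoutG.attach.map embOut, L p (x : G) := tsum_eq_sum hvan
      _ = ∑ q ∈ KoutG, L p q := by
          rw [Finset.sum_map]
          simp only [hembOut, Function.Embedding.coeFn_mk]
          exact Finset.sum_attach KoutG (fun q => L p q)
  set KinSet : Set G := (⋃ p ∈ Dout, {q | 0 < L p q ∨ 0 < L q p}) ∩ Q with hKinSetdef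
  have hKinFin : KinSet.Finite := (hDoutFin.biUnion (fun p _ => hfin p)).inter_of_left _
  set KinG : Finset G := hKinFin.toFinset with hKinGdef
  have hKinQ : ∀ q ∈ KinG, q ∈ Q := fun q hq => (hKinFin.mem_toFinset.mp hq).2
  set embIn : {x // x ∈ KinG} ↪ Q :=
    ⟨fun x => ⟨x.1, hKinQ x.1 x.2⟩, by
      intro a b hab
      apply Subtype.ext
      have := congrArg (fun z : Q => z.1) hab
      simpa using this⟩ with hembIn
  have hAfin : ∀ p ∈ DoutF, A p = ∑ q ∈ KinG, L p q := by
    intro p hpF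
    have hpD := hDoutFin.mem_toFinset.mp hpF
    have hvan : ∀ x : Q, x ∉ KinG.attach.map embIn → L p (x : G) = 0 := by
      intro x hx
      by_contra h
      have hne : p ≠ (x : G) := fun hh => hpD.1 (hh ▸ x.2)
      have hpos : 0 < L p (x : G) := hLpos_of_ne p x hne h
      have hxK : (x : G) ∈ KinG := hKinFin.mem_toFinset.mpr
        ⟨Set.mem_biUnion hpD (Or.inl hpos), x.2⟩
      exact hx (Finset.mem_map.mpr ⟨⟨x.1, hxK⟩, Finset.mem_attach _ _, Subtype.ext rfl⟩)
    calc A p = ∑ x ∈ KinG.attach.map embIn, L p (x : G) := tsum_eq_sum hvan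
      _ = ∑ q ∈ KinG, L p q := by
          rw [Finset.sum_map]
          simp only [hembIn, Function.Embedding.coeFn_mk]
          exact Finset.sum_attach KinG (fun q => L p q)
  have hkey : ∑ p ∈ DinF, μ p * S p = ∑ p ∈ DoutF, μ p * A p := by
    have h1 : ∑ p ∈ DinF, μ p * S p = ∑ x ∈ DinF ×ˢ KoutG, μ x.1 * L x.1 x.2 := by
      rw [Finset.sum_product]
      exact Finset.sum_congr rfl (fun p hp => by rw [hSfin p hp, Finset.mul_sum])
    have h2 : ∑ p ∈ DoutF, μ p * A p = ∑ x ∈ DoutF ×ˢ KinG, μ x.1 * L x.1 x.2 := by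
      rw [Finset.sum_product]
      exact Finset.sum_congr rfl (fun p hp => by rw [hAfin p hp, Finset.mul_sum])
    rw [h1, h2, ← Finset.sum_filter_ne_zero (DinF ×ˢ KoutG),
      ← Finset.sum_filter_ne_zero (DoutF ×ˢ KinG)]
    apply Finset.sum_nbij' (i := Prod.swap) (j := Prod.swap)
    · rintro ⟨p, q⟩ hmem
      simp only [Finset.mem_filter, Finset.mem_product] at hmem ⊢
      obtain ⟨⟨hpF, hqF⟩, hne⟩ := hmem
      have hpD := hDinFin.mem_toFinset.mp hpF
      have hqQ : q ∉ Q := hKoutNotQ q hqF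
      have hLpq : L p q ≠ 0 := fun h => hne (by rw [h, mul_zero])
      have hLqp : L q p ≠ 0 := hrevne p q hLpq
      have hpq : p ≠ q := fun h => hqQ (h ▸ hpD.1)
      have hqD : q ∈ Dout := ⟨hqQ, p, hpD.1, hLqp⟩
      refine ⟨⟨hDoutFin.mem_toFinset.mpr hqD, ?_⟩, ?_⟩
      · exact hKinFin.mem_toFinset.mpr
          ⟨Set.mem_biUnion hqD (Or.inr (hLpos_of_ne p q hpq hLpq)), hpD.1⟩
      · exact fun h => hLqp (mul_eq_zero.mp h |>.resolve_left (ne_of_gt (hμpos q)))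
    · rintro ⟨q, p⟩ hmem
      simp only [Finset.mem_filter, Finset.mem_product] at hmem ⊢
      obtain ⟨⟨hqF, hpF⟩, hne⟩ := hmem
      have hqD := hDoutFin.mem_toFinset.mp hqF
      have hpQ : p ∈ Q := hKinQ p hpF
      have hLqp : L q p ≠ 0 := fun h => hne (by rw [h, mul_zero])
      have hLpq : L p q ≠ 0 := hrevne q p hLqp
      have hpq : p ≠ q := fun h => hqD.1 (h ▸ hpQ)
      have hpD : p ∈ Din := ⟨hpQ, q, hqD.1, hLpos_of_ne p q hpq hLpq⟩
      refine ⟨⟨hDinFin.mem_toFinset.mpr hpD, ?_⟩, ?_⟩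
      · exact hKoutFin.mem_toFinset.mpr
          ⟨Set.mem_biUnion hpD (Or.inl (hLpos_of_ne p q hpq hLpq)), hqD.1⟩
      · exact fun h => hLpq (mul_eq_zero.mp h |>.resolve_left (ne_of_gt (hμpos p)))
    · intro a _; exact Prod.swap_swap a
    · intro a _; exact Prod.swap_swap a
    · rintro ⟨p, q⟩ _; exact hrev p q
  -- final assembly
  refine ⟨hcfin, hSummS, ?_, ?_, ?_⟩
  · apply summable_of_finsupport
    apply (((𝒜 ∪ ℬ).finite_toSet.preimage (Subtype.val_injective.injOn)).subset)
    intro x hx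
    simp only [Set.mem_setOf_eq] at hx
    exact Set.mem_preimage.mpr (Finset.mem_coe.mpr (hgsupp x.1 x.2.2.2 hx))
  · apply summable_of_finsupport
    apply ((hDinFin.preimage (Subtype.val_injective.injOn)).subset)
    intro x hx
    simp only [Set.mem_setOf_eq] at hx
    have hSne : S x.1 ≠ 0 := by
      intro h0
      apply hx
      show (((Set.ncard {B : Set G | IsCompOf Gr (Q \ {(x : G)}) B} : ℝ) - 1) / muSet μ Q) *
        S x.1 = 0
      rw [h0, mul_zero]
    exact Set.mem_preimage.mpr (by
      by_contra hno
      exact hSne (hSzero x.1 x.2 hno))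
  · rw [hLHS, hRHS, Finset.sum_union hdisjAB, hAsum, hBsum]
    have hsplit : ∀ p ∈ DinF,
        ((compsF p).card : ℝ) * S p / muSet μ Q - (muSet μ Q - μ p) * S p / (muSet μ Q) ^ 2
        = rfun p + μ p * S p / (muSet μ Q) ^ 2 := by
      intro p hpF
      have hpQ := (hDinFin.mem_toFinset.mp hpF).1
      have hcard : (Set.ncard {B : Set G | IsCompOf Gr (Q \ {p}) B} : ℝ)
          = ((compsF p).card : ℝ) := by
        norm_cast
        rw [Set.ncard_eq_toFinset_card _ (hcfin p hpQ)]
        congr 1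
        simp only [hcompsFdef, dif_pos (hcfin p hpQ)]
      simp only [hrfun, hcard]
      field_simp
      ring
    rw [Finset.sum_congr rfl hsplit, Finset.sum_add_distrib]
    have hA2 : ∑ p ∈ DoutF, -(μ p * A p) / muSet μ Q ^ 2
        = -(∑ p ∈ DoutF, μ p * A p) / muSet μ Q ^ 2 := by
      rw [← Finset.sum_div]
      congr 1
      rw [← Finset.sum_neg_distrib]
    have hB2 : ∑ p ∈ DinF, μ p * S p / muSet μ Q ^ 2
        = (∑ p ∈ DinF, μ p * S p) / muSet μ Q ^ 2 := (Finset.sum_div _ _ _).symm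
    rw [hA2, hB2, ← hkey]
    ring
end

section
/- The explosion-criterion series for the birth-death chain on ℕ with birth rates β and death rates δ converges if and only if condition (borne-infini) holds; that is, Σ_{n=1}^∞ [Π_{j=1}^n (δ_j/β_j)]·[Σ_{k=1}^n Π_{l=1}^k (β_{l−1}/δ_l)] < ∞ if and only if Σ_{n=1}^∞ ν_{n+1}·Σ_{k=1}^n 1/(ν_k·u_k) < ∞. -/
open scoped BigOperators

/-- The explosion-criterion series for the birth-death chain on `ℕ` with birth rates `β` and
death rates `δ` converges if and only if condition (borne-infini) holds:
`Σ_{n=1}^∞ [Π_{j=1}^n (δ_j/β_j)]·[Σ_{k=1}^n Π_{l=1}^k (β_{l−1}/δ_l)] < ∞`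
iff `Σ_{n=1}^∞ ν_{n+1}·Σ_{k=1}^n 1/(ν_k·u_k) < ∞`. -/
theorem dual_explosion_iff_borne_infini (ν u d : ℕ → ℝ)
    (hν : ∀ p, 0 < ν p) (hu : ∀ p, 0 < u p) (hd : ∀ p, 0 < d p)
    (hdb : ∀ p : ℕ, ν p * u p = ν (p + 1) * d p)
    (c : ℝ) (hc : 0 < c)
    (m : ℕ → ℝ) (hm : ∀ p : ℕ, m p = c + ∑ k ∈ Finset.range (p + 1), ν k)
    (hm1 : ∀ p : ℕ, m p ≤ 1)
    (β δ : ℕ → ℝ)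
    (hβ : ∀ p : ℕ, β p = (m (p + 1) / m p) * d p)
    (hδ : ∀ p : ℕ, 1 ≤ p → δ p = (m (p - 1) / m p) * u p) :
    Summable (fun n : ℕ =>
        (∏ j ∈ Finset.Icc 1 (n + 1), δ j / β j) *
          (∑ k ∈ Finset.Icc 1 (n + 1), ∏ l ∈ Finset.Icc 1 k, β (l - 1) / δ l)) ↔
    Summable (fun n : ℕ =>
        ν (n + 2) * ∑ k ∈ Finset.Icc 1 (n + 1), 1 / (ν k * u k)) := by
  -- basic facts about m
  have hmge : ∀ p, c ≤ m p := by
    intro p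
    rw [hm p]
    have : (0:ℝ) ≤ ∑ k ∈ Finset.range (p + 1), ν k :=
      Finset.sum_nonneg fun i _ => (hν i).le
    linarith
  have hmpos : ∀ p, 0 < m p := fun p => lt_of_lt_of_le hc (hmge p)
  have hmne : ∀ p, m p ≠ 0 := fun p => (hmpos p).ne'
  have hνne : ∀ p, ν p ≠ 0 := fun p => (hν p).ne'
  have hune : ∀ p, u p ≠ 0 := fun p => (hu p).ne'
  have hdne : ∀ p, d p ≠ 0 := fun p => (hd p).ne'
  -- the ratios m p / m q lie in [c, 1/c]
  have hrat1 : ∀ p q, c ≤ m p / m q := by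
    intro p q
    rw [le_div_iff₀ (hmpos q)]
    nlinarith [hmge p, hm1 q, hmpos q]
  have hrat2 : ∀ p q, m p / m q ≤ 1 / c := by
    intro p q
    rw [div_le_div_iff₀ (hmpos q) hc]
    nlinarith [hm1 p, hmge q, hmpos p]
  -- single step ratios
  have hstep1 : ∀ n : ℕ, δ (n + 1) / β (n + 1) = (m n * ν (n + 2)) / (m (n + 2) * ν (n + 1)) := by
    intro n
    rw [hδ (n+1) (by omega), hβ (n+1)]
    simp only [Nat.add_sub_cancel]
    have h := hdb (n+1)
    field_simp [hmne n, hmne (n+1), hmne (n+2), hνne (n+1), hνne (n+2), hune (n+1), hdne (n+1)]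
    linear_combination h
  have hstep2 : ∀ k : ℕ, β k / δ (k + 1)
      = (m (k+1) ^ 2 * (ν k * u k)) / (m k ^ 2 * (ν (k+1) * u (k+1))) := by
    intro k
    rw [hδ (k+1) (by omega), hβ k]
    simp only [Nat.add_sub_cancel]
    have h := hdb k
    field_simp [hmne k, hmne (k+1), hνne k, hνne (k+1), hune k, hune (k+1), hdne k]
    linear_combination (-1 : ℝ) * h
  -- product formula 1
  have hprod1 : ∀ n : ℕ, (∏ j ∈ Finset.Icc 1 n, δ j / β j)
      = m 0 * m 1 * ν (n + 1) / (m n * m (n + 1) * ν 1) := by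
    intro n
    induction n with
    | zero => rw [show Finset.Icc 1 0 = ∅ from rfl, Finset.prod_empty]
              rw [eq_comm, div_eq_one_iff_eq
                (mul_ne_zero (mul_ne_zero (hmne 0) (hmne 1)) (hνne 1))]
    | succ n ih =>
      rw [Finset.prod_Icc_succ_top (by omega : 1 ≤ n + 1), ih, hstep1 n]
      field_simp [hmne n, hmne (n+1), hmne (n+2), hνne 1, hνne (n+1), hνne (n+2)]
  -- product formula 2
  have hprod2 : ∀ k : ℕ, (∏ l ∈ Finset.Icc 1 k, β (l - 1) / δ l)
      = m k ^ 2 * (ν 0 * u 0) / (m 0 ^ 2 * (ν k * u k)) := by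
    intro k
    induction k with
    | zero => rw [show Finset.Icc 1 0 = ∅ from rfl, Finset.prod_empty]
              rw [eq_comm, div_eq_one_iff_eq
                (mul_ne_zero (pow_ne_zero 2 (hmne 0)) (mul_ne_zero (hνne 0) (hune 0)))]
    | succ k ih =>
      rw [Finset.prod_Icc_succ_top (by omega : 1 ≤ k + 1), ih]
      simp only [Nat.add_sub_cancel]
      rw [hstep2 k]
      field_simp [hmne 0, hmne k, hmne (k+1), hνne 0, hνne k, hνne (k+1), hune 0, hune k, hune (k+1)]
  -- notation
  set K : ℝ := ν 0 * u 0 / ν 1 with hK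
  have hKpos : 0 < K := by
    rw [hK]; exact div_pos (mul_pos (hν 0) (hu 0)) (hν 1)
  set B : ℕ → ℝ := fun n => ν (n + 2) * ∑ k ∈ Finset.Icc 1 (n + 1), 1 / (ν k * u k) with hB
  set A : ℕ → ℝ := fun n =>
      (∏ j ∈ Finset.Icc 1 (n + 1), δ j / β j) *
        (∑ k ∈ Finset.Icc 1 (n + 1), ∏ l ∈ Finset.Icc 1 k, β (l - 1) / δ l) with hA
  have hTpos : ∀ n k : ℕ, 0 < K * (ν (n + 2) * (1 / (ν k * u k))) := by
    intro n k
    have : 0 < 1 / (ν k * u k) := by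
      apply div_pos one_pos (mul_pos (hν k) (hu k))
    exact mul_pos hKpos (mul_pos (hν (n+2)) this)
  -- rewrite A n as a sum of terms comparable to those of B n
  have hrewrite : ∀ n : ℕ, A n = ∑ k ∈ Finset.Icc 1 (n + 1),
      (m 1 / m (n + 1)) * (m k / m (n + 2)) * (m k / m 0) *
        (K * (ν (n + 2) * (1 / (ν k * u k)))) := by
    intro n
    rw [hA]
    simp only
    rw [hprod1 (n + 1), Finset.mul_sum]
    refine Finset.sum_congr rfl fun k hk => ?_
    rw [hprod2 k, hK]
    field_simp [hK, hmne 0, hmne 1, hmne k, hmne (n+1), hmne (n+2), hνne 1, hνne k,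
      hνne (n+2), hune k]
  -- termwise bounds
  have hterm_lo : ∀ n k : ℕ, c ^ 3 * (K * (ν (n + 2) * (1 / (ν k * u k)))) ≤
      (m 1 / m (n + 1)) * (m k / m (n + 2)) * (m k / m 0) *
        (K * (ν (n + 2) * (1 / (ν k * u k)))) := by
    intro n k
    refine mul_le_mul_of_nonneg_right ?_ (hTpos n k).le
    have h12 : c * c ≤ (m 1 / m (n + 1)) * (m k / m (n + 2)) :=
      mul_le_mul (hrat1 1 (n+1)) (hrat1 k (n+2)) hc.le (hc.le.trans (hrat1 1 (n+1)))
    calc c ^ 3 = c * c * c := by ring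
      _ ≤ (m 1 / m (n + 1)) * (m k / m (n + 2)) * (m k / m 0) :=
        mul_le_mul h12 (hrat1 k 0) hc.le (by nlinarith)
  have hterm_hi : ∀ n k : ℕ,
      (m 1 / m (n + 1)) * (m k / m (n + 2)) * (m k / m 0) *
        (K * (ν (n + 2) * (1 / (ν k * u k)))) ≤
      (1 / c) ^ 3 * (K * (ν (n + 2) * (1 / (ν k * u k)))) := by
    intro n k
    refine mul_le_mul_of_nonneg_right ?_ (hTpos n k).le
    have h12 : (m 1 / m (n + 1)) * (m k / m (n + 2)) ≤ (1 / c) * (1 / c) :=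
      mul_le_mul (hrat2 1 (n+1)) (hrat2 k (n+2)) (hc.le.trans (hrat1 k (n+2)))
        (by positivity)
    calc (m 1 / m (n + 1)) * (m k / m (n + 2)) * (m k / m 0)
        ≤ (1 / c) * (1 / c) * (1 / c) :=
          mul_le_mul h12 (hrat2 k 0) (hc.le.trans (hrat1 k 0)) (by positivity)
      _ = (1 / c) ^ 3 := by ring
  -- global bounds
  have hsum_lo : ∀ n : ℕ, c ^ 3 * K * B n ≤ A n := by
    intro n
    rw [hrewrite n]
    calc c ^ 3 * K * B n
        = ∑ k ∈ Finset.Icc 1 (n + 1), c ^ 3 * (K * (ν (n + 2) * (1 / (ν k * u k)))) := by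
          rw [hB]; simp only [Finset.mul_sum]; exact Finset.sum_congr rfl fun k _ => by ring
      _ ≤ _ := Finset.sum_le_sum fun k _ => hterm_lo n k
  have hsum_hi : ∀ n : ℕ, A n ≤ (1 / c) ^ 3 * K * B n := by
    intro n
    rw [hrewrite n]
    calc ∑ k ∈ Finset.Icc 1 (n + 1),
          (m 1 / m (n + 1)) * (m k / m (n + 2)) * (m k / m 0) *
            (K * (ν (n + 2) * (1 / (ν k * u k))))
        ≤ ∑ k ∈ Finset.Icc 1 (n + 1), (1 / c) ^ 3 * (K * (ν (n + 2) * (1 / (ν k * u k)))) :=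
          Finset.sum_le_sum fun k _ => hterm_hi n k
      _ = (1 / c) ^ 3 * K * B n := by
          rw [hB]; simp only [Finset.mul_sum]; exact Finset.sum_congr rfl fun k _ => by ring
  have hBnonneg : ∀ n, 0 ≤ B n := by
    intro n
    refine mul_nonneg (hν (n+2)).le (Finset.sum_nonneg fun k _ => ?_)
    exact div_nonneg zero_le_one (mul_pos (hν k) (hu k)).le
  have hAnonneg : ∀ n, 0 ≤ A n := by
    intro n
    refine le_trans ?_ (hsum_lo n)
    exact mul_nonneg (mul_nonneg (by positivity) hKpos.le) (hBnonneg n)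
  constructor
  · intro h
    refine Summable.of_nonneg_of_le hBnonneg (fun n => ?_) (h.mul_left ((c ^ 3 * K)⁻¹))
    calc B n = (c ^ 3 * K)⁻¹ * (c ^ 3 * K * B n) := by
          field_simp
      _ ≤ (c ^ 3 * K)⁻¹ * A n :=
          mul_le_mul_of_nonneg_left (hsum_lo n) (by positivity)
  · intro h
    refine Summable.of_nonneg_of_le hAnonneg (fun n => hsum_hi n)
      (h.mul_left ((1 / c) ^ 3 * K))
end
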